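/- arXiv:1604.00051 — 3 statements merged into one kernel-verified Lean document; each statement's English description precedes it below -/
import Mathlib

section
/- If τ_1 = 1 almost surely (so the inter-batch distribution is degenerate and d = 1) and E[ζ_1] < ∞, then for every n ≥ 1, d_TV(M_n, 𝓜) ≤ r·E[ζ_1]·E[max{η_{11} + 1 − n, 0}]; in particular d_TV(M_n, 𝓜) = O(n^{−1}) as n → ∞. -/
open MeasureTheory ProbabilityTheory Finset
open scoped ENNReal Classical

noncomputable section

variable {Ω : Type*}

/-- `S i = τ 1 + ⋯ + τ i`, the time at which the `i`-th batch of eggs is laid. -/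
def renewalS (τ : ℕ → Ω → ℕ) (i : ℕ) (ω : Ω) : ℕ := ∑ k ∈ Finset.Icc 1 i, τ k ω

/-- `𝒩 n = Σ_{i ≥ 1} 1{S i ≤ n}`, the renewal counting process (valid since `τ k ≥ 1`,
so that `S i ≥ i` and at most the first `n` renewals can occur by time `n`). -/
def countN (τ : ℕ → Ω → ℕ) (n : ℕ) (ω : Ω) : ℕ :=
  ((Finset.Icc 1 n).filter (fun i => renewalS τ i ω ≤ n)).card

/-- `ξ i = Σ_{j=1}^{ζ i} I i j`, the number of eggs of batch `i` that hatch. -/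
def batchXi (ζ : ℕ → Ω → ℕ) (I : ℕ → ℕ → Ω → ℕ) (i : ℕ) (ω : Ω) : ℕ :=
  ∑ j ∈ Finset.Icc 1 (ζ i ω), I i j ω

/-- The colony size `M n = Σ_{i=1}^{N_n} Σ_{j=1}^{ξ_i} 1{S_i + η_{ij} ≥ n}`
(the condition `i ≤ N_n` is expressed as `S i ≤ n`, using `S i ≥ i`). -/
def colonyM (τ ζ : ℕ → Ω → ℕ) (I η : ℕ → ℕ → Ω → ℕ) (n : ℕ) (ω : Ω) : ℕ :=
  ∑ i ∈ Finset.Icc 1 n, ∑ j ∈ Finset.Icc 1 (batchXi ζ I i ω),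
    if renewalS τ i ω ≤ n ∧ n ≤ renewalS τ i ω + η i j ω then 1 else 0

/-- `𝒮 i = τ̃₁ + τ 2 + ⋯ + τ i`, the stationary (delayed) renewal times. -/
def statS (τt : Ω → ℕ) (τ : ℕ → Ω → ℕ) (i : ℕ) (ω : Ω) : ℕ :=
  τt ω + ∑ k ∈ Finset.Icc 2 i, τ k ω

/-- `𝓜 = Σ_{i ≥ 1} Σ_{j=1}^{ξ_i} 1{𝒮_i ≤ η_{ij} + 1}`, the stationary colony size. -/
def statM (τt : Ω → ℕ) (τ ζ : ℕ → Ω → ℕ) (I η : ℕ → ℕ → Ω → ℕ) (ω : Ω) : ℕ :=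
  ∑' i : ℕ, ∑ j ∈ Finset.Icc 1 (batchXi ζ I (i + 1) ω),
    if statS τt τ (i + 1) ω ≤ η (i + 1) j ω + 1 then 1 else 0

/-- Total variation distance between (the distributions of) two integer-valued
random variables: `sup_{B ⊆ ℤ} |P(X ∈ B) − P(Y ∈ B)|`. -/
def dTV [MeasurableSpace Ω] (μ : Measure Ω) (X Y : Ω → ℕ) : ℝ :=
  ⨆ B : Set ℤ,
    |(μ ((fun ω => (X ω : ℤ)) ⁻¹' B)).toReal - (μ ((fun ω => (Y ω : ℤ)) ⁻¹' B)).toReal|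

/-- All the sources of randomness of the model, packaged as one family
(used to state that they are mutually independent): `τ̃₁`, the `τ i`, the `ζ i`,
the `I i j` and the `η i j`. -/
def allVars (τt : Ω → ℕ) (τ ζ : ℕ → Ω → ℕ) (I η : ℕ → ℕ → Ω → ℕ) :
    (Unit ⊕ ℕ ⊕ ℕ ⊕ (ℕ × ℕ) ⊕ (ℕ × ℕ)) → Ω → ℕ
  | Sum.inl _ => τt
  | Sum.inr (Sum.inl i) => τ i
  | Sum.inr (Sum.inr (Sum.inl i)) => ζ i
  | Sum.inr (Sum.inr (Sum.inr (Sum.inl p))) => I p.1 p.2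
  | Sum.inr (Sum.inr (Sum.inr (Sum.inr p))) => η p.1 p.2

section BeeAux

variable {Ω : Type*} [MeasurableSpace Ω] {μ : Measure Ω}

lemma measurable_dynSum {α : Type*} [MeasurableSpace α] {F : α → ℕ} {g : α → ℕ → ℕ}
    (hF : Measurable F) (hg : ∀ j, Measurable fun a => g a j) :
    Measurable fun a => ∑ j ∈ Finset.Icc 1 (F a), g a j := by
  apply measurable_to_countable'
  intro y
  have hset : (fun a => ∑ j ∈ Finset.Icc 1 (F a), g a j) ⁻¹' {y}
      = ⋃ c : ℕ, (F ⁻¹' {c} ∩ (fun a => ∑ j ∈ Finset.Icc 1 c, g a j) ⁻¹' {y}) := by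
    ext a
    simp only [Set.mem_preimage, Set.mem_singleton_iff, Set.mem_iUnion, Set.mem_inter_iff]
    exact ⟨fun h => ⟨F a, rfl, h⟩, fun ⟨c, h1, h2⟩ => by rw [h1]; exact h2⟩
  rw [hset]
  exact MeasurableSet.iUnion fun c => (hF (measurableSet_singleton c)).inter
    ((Finset.measurable_sum _ fun j _ => hg j) (measurableSet_singleton y))

lemma lintegral_if_mem {P : Ω → Prop} [DecidablePred P] (hP : MeasurableSet {ω | P ω}) :
    ∫⁻ ω, (if P ω then (1 : ℝ≥0∞) else 0) ∂μ = μ {ω | P ω} := by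
  rw [← lintegral_indicator_one hP]
  refine lintegral_congr fun ω => ?_
  by_cases h : P ω <;> simp [Set.indicator_apply, h]

lemma tsum_if_lt (N : ℕ) : (∑' j : ℕ, if j + 1 ≤ N then (1 : ℝ≥0∞) else 0) = N := by
  rw [tsum_eq_sum (s := Finset.range N) (fun j hj => by
    simp only [Finset.mem_range, not_lt] at hj
    rw [if_neg (by omega)])]
  rw [Finset.sum_congr rfl (fun j hj => by
    have := Finset.mem_range.1 hj
    rw [if_pos (by omega)])]
  rw [Finset.sum_const, Finset.card_range, nsmul_eq_mul, mul_one]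

lemma coe_sum_Icc (c : ℕ) (a : ℕ → ℕ) :
    ((∑ j ∈ Finset.Icc 1 c, a j : ℕ) : ℝ≥0∞)
      = ∑' j : ℕ, if j + 1 ≤ c then (a (j + 1) : ℝ≥0∞) else 0 := by
  rw [← Finset.Ico_add_one_right_eq_Icc, Finset.sum_Ico_eq_sum_range]
  rw [Nat.cast_sum]
  rw [tsum_eq_sum (s := Finset.range c) (fun j hj => by
    simp only [Finset.mem_range, not_lt] at hj
    rw [if_neg (by omega)])]
  refine Finset.sum_congr rfl fun j hj => ?_
  have := Finset.mem_range.1 hj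
  rw [if_pos (by omega), Nat.add_comm 1 j]

lemma abs_toReal_sub_le {a b c : ℝ≥0∞} (ha : a ≠ ⊤) (hb : b ≠ ⊤) (hc : c ≠ ⊤)
    (h1 : a ≤ b + c) (h2 : b ≤ a + c) : |a.toReal - b.toReal| ≤ c.toReal := by
  rw [abs_sub_le_iff]
  constructor
  · have := ENNReal.toReal_mono (by finiteness) h1
    rw [ENNReal.toReal_add hb hc] at this
    linarith
  · have := ENNReal.toReal_mono (by finiteness) h2
    rw [ENNReal.toReal_add ha hc] at this
    linarith

lemma block_prod {T : Type*} {f : T → Ω → ℕ}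
    (h : iIndepFun f μ)
    {ι : Type*} {D : ι → Type*} (e : ∀ k, D k → T)
    (hinj : ∀ k, Function.Injective (e k))
    (hdisj : ∀ k l, k ≠ l → ∀ d d', e k d ≠ e l d')
    (S : Finset ι) (F : ∀ k, Finset (D k)) (t : ∀ k, D k → Set ℕ) :
    μ (⋂ k ∈ S, ⋂ d ∈ F k, f (e k d) ⁻¹' t k d)
      = ∏ k ∈ S, ∏ d ∈ F k, μ (f (e k d) ⁻¹' t k d) := by
  classical
  set gsets : T → Set ℕ := fun i => ⋂ k ∈ S, ⋂ d ∈ F k, ⋂ (_ : e k d = i), t k d with hgsets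
  have hg : ∀ k ∈ S, ∀ d ∈ F k, gsets (e k d) = t k d := by
    intro k hk d hd
    apply Set.Subset.antisymm
    · intro x hx
      simp only [hgsets, Set.mem_iInter] at hx
      exact hx k hk d hd rfl
    · intro x hx
      simp only [hgsets, Set.mem_iInter]
      intro k' hk' d' hd' he
      rcases eq_or_ne k' k with rfl | hne
      · rcases hinj k' he with rfl
        exact hx
      · exact absurd he (hdisj k' k hne d' d)
  have hset : (⋂ k ∈ S, ⋂ d ∈ F k, f (e k d) ⁻¹' t k d)
      = ⋂ i ∈ S.biUnion (fun k => (F k).image (e k)), f i ⁻¹' gsets i := by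
    apply Set.Subset.antisymm
    · intro ω hω
      simp only [Set.mem_iInter, Set.mem_preimage] at hω ⊢
      intro i hi
      rcases Finset.mem_biUnion.1 hi with ⟨k, hk, hik⟩
      rcases Finset.mem_image.1 hik with ⟨d, hd, rfl⟩
      simp only [hgsets, Set.mem_iInter]
      intro k' hk' d' hd' he
      rw [← he]
      exact hω k' hk' d' hd'
    · intro ω hω
      simp only [Set.mem_iInter, Set.mem_preimage] at hω ⊢
      intro k hk d hd
      have := hω (e k d) (Finset.mem_biUnion.2 ⟨k, hk, Finset.mem_image_of_mem _ hd⟩)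
      rwa [hg k hk d hd] at this
  have hdisjim : ∀ k ∈ S, ∀ l ∈ S, k ≠ l →
      Disjoint ((F k).image (e k)) ((F l).image (e l)) := by
    intro k _ l _ hkl
    rw [Finset.disjoint_left]
    rintro i hik hil
    rcases Finset.mem_image.1 hik with ⟨d, _, rfl⟩
    rcases Finset.mem_image.1 hil with ⟨d', _, he⟩
    exact hdisj l k (Ne.symm hkl) d' d he
  rw [hset, h.measure_inter_preimage_eq_mul _ (fun i _ => trivial),
    Finset.prod_biUnion hdisjim]
  refine Finset.prod_congr rfl fun k hk => ?_
  rw [Finset.prod_image (fun a _ b _ hab => hinj k hab)]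
  exact Finset.prod_congr rfl fun d hd => by rw [hg k hk d hd]


lemma iIndepFun_blocks {T : Type*} {f : T → Ω → ℕ} (hf : ∀ t, Measurable (f t))
    (h : iIndepFun f μ)
    {ι : Type*} {D : ι → Type*} (e : ∀ k, D k → T)
    (hinj : ∀ k, Function.Injective (e k))
    (hdisj : ∀ k l, k ≠ l → ∀ d d', e k d ≠ e l d') :
    iIndepFun (fun k ω d => f (e k d) ω) μ := by
  classical
  rw [iIndepFun_iff_iIndep]
  set π : ∀ k : ι, Set (Set Ω) := fun k =>
    {A | ∃ (Fk : Finset (D k)) (t : D k → Set ℕ), A = ⋂ d ∈ Fk, f (e k d) ⁻¹' t d} with hπ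
  have h_le : ∀ k, MeasurableSpace.pi.comap (fun ω (d : D k) => f (e k d) ω) ≤ _ :=
    fun k => Measurable.comap_le (measurable_pi_lambda _ fun d => hf _)
  have h_pi : ∀ k, IsPiSystem (π k) := by
    rintro k A ⟨F₁, t₁, rfl⟩ B ⟨F₂, t₂, rfl⟩ -
    refine ⟨F₁ ∪ F₂, fun d =>
      (if d ∈ F₁ then t₁ d else Set.univ) ∩ (if d ∈ F₂ then t₂ d else Set.univ), ?_⟩
    ext ω
    simp only [Set.mem_inter_iff, Set.mem_iInter, Set.mem_preimage, Finset.mem_union]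
    constructor
    · rintro ⟨h₁, h₂⟩ d hd
      constructor
      · split_ifs with hd₁
        · exact h₁ d hd₁
        · exact Set.mem_univ _
      · split_ifs with hd₂
        · exact h₂ d hd₂
        · exact Set.mem_univ _
    · intro hh
      constructor
      · intro d hd
        have := (hh d (Or.inl hd)).1
        rwa [if_pos hd] at this
      · intro d hd
        have := (hh d (Or.inr hd)).2
        rwa [if_pos hd] at this
  have h_gen : ∀ k, MeasurableSpace.pi.comap (fun ω (d : D k) => f (e k d) ω)
      = MeasurableSpace.generateFrom (π k) := by
    intro k
    apply le_antisymm
    · rw [show (MeasurableSpace.pi : MeasurableSpace (D k → ℕ))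
          = ⨆ d : D k, MeasurableSpace.comap (fun v : D k → ℕ => v d) inferInstance from rfl,
        MeasurableSpace.comap_iSup]
      refine iSup_le fun d => ?_
      rw [MeasurableSpace.comap_comp]
      intro s hs
      rcases hs with ⟨s', -, rfl⟩
      apply MeasurableSpace.measurableSet_generateFrom
      refine ⟨{d}, fun _ => s', ?_⟩
      simp
      rfl
    · rw [MeasurableSpace.generateFrom_le_iff]
      rintro A ⟨F, t, rfl⟩
      refine ⟨⋂ d ∈ F, (fun v : D k → ℕ => v d) ⁻¹' t d,
        MeasurableSet.biInter F.countable_toSet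
          (fun d _ => (measurable_pi_apply d) (show MeasurableSet (t d) from trivial)), ?_⟩
      ext ω
      simp
  refine iIndepSets.iIndep h_le π h_pi h_gen ?_
  rw [iIndepSets_iff]
  intro s A hA
  have hchoice : ∀ k, ∃ p : Finset (D k) × (D k → Set ℕ),
      k ∈ s → A k = ⋂ d ∈ p.1, f (e k d) ⁻¹' p.2 d := by
    intro k
    by_cases hk : k ∈ s
    · obtain ⟨Fk, t, hFt⟩ := hA k hk
      exact ⟨(Fk, t), fun _ => hFt⟩
    · exact ⟨(∅, fun _ => Set.univ), fun hh => absurd hh hk⟩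
  choose p hp using hchoice
  calc μ (⋂ k ∈ s, A k)
      = μ (⋂ k ∈ s, ⋂ d ∈ (p k).1, f (e k d) ⁻¹' (p k).2 d) := by
        congr 1
        exact Set.iInter₂_congr hp
    _ = ∏ k ∈ s, ∏ d ∈ (p k).1, μ (f (e k d) ⁻¹' (p k).2 d) :=
        block_prod h e hinj hdisj s _ _
    _ = ∏ k ∈ s, μ (A k) := by
        refine Finset.prod_congr rfl fun k hk => ?_
        rw [hp k hk]
        have := block_prod h e hinj hdisj {k} (fun l => (p l).1) (fun l => (p l).2)
        simpa using this.symm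

lemma map_eq_of_binary {X Y : Ω → ℕ} [IsProbabilityMeasure μ]
    (hX : Measurable X) (hY : Measurable Y)
    (hX1 : ∀ ω, X ω ≤ 1) (hY1 : ∀ ω, Y ω ≤ 1)
    (h : μ {ω | X ω = 1} = μ {ω | Y ω = 1}) : μ.map X = μ.map Y := by
  have key : ∀ (Z : Ω → ℕ), Measurable Z → (∀ ω, Z ω ≤ 1) → ∀ s : Set ℕ,
      μ (Z ⁻¹' s) = (if 0 ∈ s then μ {ω | Z ω = 1}ᶜ else 0)
        + (if 1 ∈ s then μ {ω | Z ω = 1} else 0) := by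
    intro Z hZ hZ1 s
    by_cases h0 : (0 : ℕ) ∈ s <;> by_cases h1 : (1 : ℕ) ∈ s
    · have : Z ⁻¹' s = Set.univ := by
        ext ω
        simp only [Set.mem_preimage, Set.mem_univ, iff_true]
        have := hZ1 ω
        interval_cases hh : Z ω
        · exact h0
        · exact h1
      rw [this, if_pos h0, if_pos h1,
        ← measure_add_measure_compl (hZ (measurableSet_singleton 1) : MeasurableSet {ω | Z ω = 1})]
      exact add_comm _ _
    · have : Z ⁻¹' s = {ω | Z ω = 1}ᶜ := by
        ext ω
        simp only [Set.mem_preimage, Set.mem_compl_iff, Set.mem_setOf_eq]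
        have := hZ1 ω
        constructor
        · intro hs he
          rw [he] at hs
          exact h1 hs
        · intro hne
          have : Z ω = 0 := by omega
          rw [this]
          exact h0
      rw [this, if_pos h0, if_neg h1, add_zero]
    · have : Z ⁻¹' s = {ω | Z ω = 1} := by
        ext ω
        simp only [Set.mem_preimage, Set.mem_setOf_eq]
        have := hZ1 ω
        constructor
        · intro hs
          by_contra hne
          have : Z ω = 0 := by omega
          rw [this] at hs
          exact h0 hs
        · intro he
          rw [he]
          exact h1
      rw [this, if_neg h0, if_pos h1, zero_add]
    · have : Z ⁻¹' s = ∅ := by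
        ext ω
        simp only [Set.mem_preimage, Set.mem_empty_iff_false, iff_false]
        intro hs
        have := hZ1 ω
        interval_cases hh : Z ω
        · exact h0 hs
        · exact h1 hs
      rw [this, if_neg h0, if_neg h1]
      simp
  ext s hs
  have hmX : MeasurableSet {ω | X ω = 1} := hX (measurableSet_singleton 1)
  have hmY : MeasurableSet {ω | Y ω = 1} := hY (measurableSet_singleton 1)
  rw [Measure.map_apply hX hs, Measure.map_apply hY hs, key X hX hX1 s, key Y hY hY1 s,
    measure_compl hmX (measure_ne_top _ _), measure_compl hmY (measure_ne_top _ _), h]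

lemma map_block_eq {T : Type*} {f : T → Ω → ℕ} (hf : ∀ t, Measurable (f t))
    (h : iIndepFun f μ) [IsProbabilityMeasure μ]
    {D : Type*} (e e' : D → T)
    (hinj : Function.Injective e) (hinj' : Function.Injective e')
    (hid : ∀ d, μ.map (f (e d)) = μ.map (f (e' d))) :
    μ.map (fun ω d => f (e d) ω) = μ.map (fun ω d => f (e' d) ω) := by
  classical
  have key : ∀ (g : D → T), Function.Injective g → ∀ (F : Finset D) (t : D → Set ℕ),
      μ (⋂ d ∈ F, f (g d) ⁻¹' t d) = ∏ d ∈ F, μ (f (g d) ⁻¹' t d) := by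
    intro g hg F t
    have := block_prod h (fun _ : Unit => g) (fun _ => hg)
      (fun k l hkl => absurd (Subsingleton.elim k l) hkl) {()} (fun _ => F) (fun _ => t)
    simpa [Set.iInter_const] using this
  set C : Set (Set (D → ℕ)) :=
    {A | ∃ (F : Finset D) (t : D → Set ℕ), A = ⋂ d ∈ F, (fun v : D → ℕ => v d) ⁻¹' t d} with hC
  have hgen : (MeasurableSpace.pi : MeasurableSpace (D → ℕ))
      = MeasurableSpace.generateFrom C := by
    apply le_antisymm
    · rw [show (MeasurableSpace.pi : MeasurableSpace (D → ℕ))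
          = ⨆ d : D, MeasurableSpace.comap (fun v : D → ℕ => v d) inferInstance from rfl]
      refine iSup_le fun d => ?_
      intro s hs
      rcases hs with ⟨s', -, rfl⟩
      apply MeasurableSpace.measurableSet_generateFrom
      refine ⟨{d}, fun _ => s', ?_⟩
      simp
    · rw [MeasurableSpace.generateFrom_le_iff]
      rintro A ⟨F, t, rfl⟩
      exact MeasurableSet.biInter F.countable_toSet
        (fun d _ => (measurable_pi_apply d) (show MeasurableSet (t d) from trivial))
  have hCpi : IsPiSystem C := by
    rintro A ⟨F₁, t₁, rfl⟩ B ⟨F₂, t₂, rfl⟩ -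
    refine ⟨F₁ ∪ F₂, fun d =>
      (if d ∈ F₁ then t₁ d else Set.univ) ∩ (if d ∈ F₂ then t₂ d else Set.univ), ?_⟩
    ext v
    simp only [Set.mem_inter_iff, Set.mem_iInter, Set.mem_preimage, Finset.mem_union]
    constructor
    · rintro ⟨h₁, h₂⟩ d hd
      refine ⟨?_, ?_⟩ <;> split_ifs with hd'
      · exact h₁ d hd'
      · exact Set.mem_univ _
      · exact h₂ d hd'
      · exact Set.mem_univ _
    · intro hh
      constructor
      · intro d hd
        have := (hh d (Or.inl hd)).1
        rwa [if_pos hd] at this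
      · intro d hd
        have := (hh d (Or.inr hd)).2
        rwa [if_pos hd] at this
  have hbm : Measurable (fun ω (d : D) => f (e d) ω) :=
    measurable_pi_lambda _ fun d => hf _
  have hbm' : Measurable (fun ω (d : D) => f (e' d) ω) :=
    measurable_pi_lambda _ fun d => hf _
  haveI : IsProbabilityMeasure (μ.map (fun ω (d : D) => f (e d) ω)) :=
    Measure.isProbabilityMeasure_map hbm.aemeasurable
  refine ext_of_generate_finite C hgen hCpi ?_ ?_
  · rintro A ⟨F, t, rfl⟩
    have hAm : MeasurableSet (⋂ d ∈ F, (fun v : D → ℕ => v d) ⁻¹' t d) :=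
      MeasurableSet.biInter F.countable_toSet
        (fun d _ => (measurable_pi_apply d) (show MeasurableSet (t d) from trivial))
    rw [Measure.map_apply hbm hAm, Measure.map_apply hbm' hAm]
    have hpre : ∀ (g : D → T),
        (fun ω (d : D) => f (g d) ω) ⁻¹' (⋂ d ∈ F, (fun v : D → ℕ => v d) ⁻¹' t d)
          = ⋂ d ∈ F, f (g d) ⁻¹' t d := by
      intro g
      ext ω
      simp
    rw [hpre, hpre, key e hinj F t, key e' hinj' F t]
    refine Finset.prod_congr rfl fun d _ => ?_
    rw [← Measure.map_apply (hf (e d)) trivial, ← Measure.map_apply (hf (e' d)) trivial, hid d]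
  · rw [Measure.map_apply hbm MeasurableSet.univ, Measure.map_apply hbm' MeasurableSet.univ]
    simp

lemma map_tuple_eq_pi {n : ℕ} {Y : Fin n → Ω → ℕ} [IsProbabilityMeasure μ]
    (hYm : ∀ i, Measurable (Y i))
    (hY : iIndepFun Y μ) :
    μ.map (fun ω i => Y i ω) = Measure.pi (fun i => μ.map (Y i)) := by
  haveI : ∀ i, IsProbabilityMeasure (μ.map (Y i)) :=
    fun i => Measure.isProbabilityMeasure_map (hYm i).aemeasurable
  refine (Measure.pi_eq fun s hs => ?_).symm
  rw [Measure.map_apply (measurable_pi_lambda _ hYm) (MeasurableSet.univ_pi hs)]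
  have hpre : (fun ω i => Y i ω) ⁻¹' Set.univ.pi s = ⋂ i ∈ Finset.univ, Y i ⁻¹' s i := by
    ext ω
    simp [Set.mem_pi]
  rw [hpre, hY.measure_inter_preimage_eq_mul _ (fun i _ => trivial)]
  exact Finset.prod_congr rfl fun i _ => (Measure.map_apply (hYm i) trivial).symm

lemma map_sum_eq_of_perm {n : ℕ} {Y Z : Fin n → Ω → ℕ} [IsProbabilityMeasure μ]
    (hYm : ∀ i, Measurable (Y i)) (hZm : ∀ i, Measurable (Z i))
    (hY : iIndepFun Y μ)
    (hZ : iIndepFun Z μ)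
    (σ : Equiv.Perm (Fin n)) (hid : ∀ i, μ.map (Y i) = μ.map (Z (σ i))) :
    μ.map (fun ω => ∑ i, Y i ω) = μ.map (fun ω => ∑ i, Z i ω) := by
  haveI : ∀ i, IsProbabilityMeasure (μ.map (Z i)) :=
    fun i => Measure.isProbabilityMeasure_map (hZm i).aemeasurable
  have hsm : Measurable (fun v : Fin n → ℕ => ∑ i, v i) :=
    Finset.measurable_sum _ fun i _ => measurable_pi_apply i
  have h1 : μ.map (fun ω => ∑ i, Y i ω)
      = (Measure.pi fun i => μ.map (Z (σ i))).map (fun v => ∑ i, v i) := by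
    have he : (fun ω => ∑ i, Y i ω)
        = (fun v : Fin n → ℕ => ∑ i, v i) ∘ (fun ω i => Y i ω) := rfl
    rw [he, ← Measure.map_map hsm (measurable_pi_lambda _ hYm), map_tuple_eq_pi hYm hY]
    congr 1
    exact congrArg Measure.pi (funext hid)
  have h2 : μ.map (fun ω => ∑ i, Z i ω)
      = (Measure.pi fun i => μ.map (Z i)).map (fun v => ∑ i, v i) := by
    have he : (fun ω => ∑ i, Z i ω)
        = (fun v : Fin n → ℕ => ∑ i, v i) ∘ (fun ω i => Z i ω) := rfl
    rw [he, ← Measure.map_map hsm (measurable_pi_lambda _ hZm), map_tuple_eq_pi hZm hZ]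
  rw [h1, h2, ← Measure.pi_map_piCongrLeft σ (fun i => μ.map (Z i)),
    Measure.map_map hsm (MeasurableEquiv.piCongrLeft (fun _ : Fin n => ℕ) σ).measurable]
  congr 1
  funext v
  show ∑ i, v i = ∑ i, (MeasurableEquiv.piCongrLeft (fun _ : Fin n => ℕ) σ) v i
  rw [← Equiv.sum_comp σ (fun i => (MeasurableEquiv.piCongrLeft (fun _ : Fin n => ℕ) σ) v i)]
  refine Finset.sum_congr rfl fun i _ => ?_
  exact (MeasurableEquiv.piCongrLeft_apply_apply (β := fun _ : Fin n => ℕ) σ v i).symm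

lemma lintegral_nat_eq_tsum {g : Ω → ℕ} (hg : Measurable g) :
    ∫⁻ ω, (g ω : ℝ≥0∞) ∂μ = ∑' j : ℕ, μ {ω | j + 1 ≤ g ω} := by
  calc ∫⁻ ω, (g ω : ℝ≥0∞) ∂μ
      = ∫⁻ ω, ∑' j : ℕ, (if j + 1 ≤ g ω then (1 : ℝ≥0∞) else 0) ∂μ :=
        lintegral_congr fun ω => (tsum_if_lt (g ω)).symm
    _ = ∑' j : ℕ, ∫⁻ ω, (if j + 1 ≤ g ω then (1 : ℝ≥0∞) else 0) ∂μ :=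
        lintegral_tsum fun j => (Measurable.ite
          (hg (show MeasurableSet {x : ℕ | j + 1 ≤ x} from trivial))
          measurable_const measurable_const).aemeasurable
    _ = ∑' j : ℕ, μ {ω | j + 1 ≤ g ω} :=
        tsum_congr fun j => lintegral_if_mem
          (hg (show MeasurableSet {x : ℕ | j + 1 ≤ x} from trivial))

end BeeAux

abbrev beeT : Type := Unit ⊕ ℕ ⊕ ℕ ⊕ (ℕ × ℕ) ⊕ (ℕ × ℕ)

abbrev beeD : Type := Unit ⊕ ℕ ⊕ ℕ

/-- Coordinates of the `b`-th block (batch `b+1`): its `ζ`, its `I` row and its `η` row. -/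
def blockE (b : ℕ) : beeD → beeT
  | Sum.inl _ => Sum.inr (Sum.inr (Sum.inl (b + 1)))
  | Sum.inr (Sum.inl j) => Sum.inr (Sum.inr (Sum.inr (Sum.inl (b + 1, j))))
  | Sum.inr (Sum.inr j) => Sum.inr (Sum.inr (Sum.inr (Sum.inr (b + 1, j))))

/-- The number of members of a block alive with threshold `m`. -/
def Gfun (m : ℕ) (v : beeD → ℕ) : ℕ :=
  ∑ j ∈ Finset.Icc 1 (∑ j' ∈ Finset.Icc 1 (v (Sum.inl ())), v (Sum.inr (Sum.inl j'))),
    if m ≤ v (Sum.inr (Sum.inr j)) + 1 then 1 else 0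

lemma measurable_Gfun (m : ℕ) : Measurable (Gfun m) := by
  unfold Gfun
  apply measurable_dynSum
  · exact measurable_dynSum (measurable_pi_apply _) (fun j' => measurable_pi_apply _)
  · intro j
    exact (measurable_from_top (f := fun x : ℕ => if m ≤ x + 1 then (1 : ℕ) else 0)).comp
      (measurable_pi_apply _)

abbrev beeD2 : ℕ ⊕ (ℕ × ℕ) → Type := fun x => match x with
  | Sum.inl _ => Unit ⊕ ℕ
  | Sum.inr _ => Unit

/-- Second block decomposition: the `(ζ, I)` data of each batch, and each single `η`. -/
def blockE2 : ∀ x : ℕ ⊕ (ℕ × ℕ), beeD2 x → beeT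
  | Sum.inl b, Sum.inl _ => Sum.inr (Sum.inr (Sum.inl (b + 1)))
  | Sum.inl b, Sum.inr j' => Sum.inr (Sum.inr (Sum.inr (Sum.inl (b + 1, j'))))
  | Sum.inr p, _ => Sum.inr (Sum.inr (Sum.inr (Sum.inr p)))

def xiF : (Unit ⊕ ℕ → ℕ) → ℕ := fun v => ∑ j' ∈ Finset.Icc 1 (v (Sum.inl ())), v (Sum.inr j')

lemma measurable_xiF : Measurable xiF :=
  measurable_dynSum (measurable_pi_apply _) (fun j' => measurable_pi_apply _)


/-- If `τ₁ = 1` a.s. (degenerate inter-batch distribution, so `d = 1`)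
and `E ζ₁ < ∞`, then for every `n ≥ 1`,
`d_TV(M_n, 𝓜) ≤ r ⬝ E ζ₁ ⬝ E[max(η₁₁ + 1 − n, 0)]`; in particular `d_TV(M_n, 𝓜) = O(1/n)`. -/
theorem colony_dTV_bound_degenerate
    {Ω : Type*} [MeasurableSpace Ω] (μ : Measure Ω) [IsProbabilityMeasure μ]
    (τt : Ω → ℕ) (τ ζ : ℕ → Ω → ℕ) (I η : ℕ → ℕ → Ω → ℕ) (r : ℝ)
    -- measurability of all random variables
    (hτtm : Measurable τt) (hτm : ∀ i, Measurable (τ i)) (hζm : ∀ i, Measurable (ζ i))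
    (hIm : ∀ i j, Measurable (I i j)) (hηm : ∀ i j, Measurable (η i j))
    -- the τ's and τ̃₁ are positive-integer valued, the I's are indicators
    (hτpos : ∀ i ω, 1 ≤ τ i ω) (hτtpos : ∀ ω, 1 ≤ τt ω) (hI01 : ∀ i j ω, I i j ω ≤ 1)
    (hr0 : 0 ≤ r) (hr1 : r ≤ 1)
    -- mutual independence of τ̃₁ and the four families
    (hindep : iIndepFun (allVars τt τ ζ I η) μ)
    -- identical distributions within each family
    (hτid : ∀ i, IdentDistrib (τ i) (τ 1) μ μ)
    (hζid : ∀ i, IdentDistrib (ζ i) (ζ 1) μ μ)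
    (hηid : ∀ i j, IdentDistrib (η i j) (η 1 1) μ μ)
    (hIr : ∀ i j, μ {ω | I i j ω = 1} = ENNReal.ofReal r)
    -- moment conditions: E τ₁, Var τ₁, E ζ₁, E η₁₁² all finite
    (hτint : Integrable (fun ω => (τ 1 ω : ℝ)) μ)
    (hτsq : Integrable (fun ω => (τ 1 ω : ℝ) ^ 2) μ)
    (hζint : Integrable (fun ω => (ζ 1 ω : ℝ)) μ)
    (hηsq : Integrable (fun ω => (η 1 1 ω : ℝ) ^ 2) μ)
    -- τ̃₁ has the stationary delay distribution π_k = P(τ₁ ≥ k) / E τ₁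
    (hπ : ∀ k : ℕ, 1 ≤ k →
      μ {ω | τt ω = k} = μ {ω | k ≤ τ 1 ω} / ENNReal.ofReal (∫ ω, (τ 1 ω : ℝ) ∂μ))
    -- the inter-batch time is degenerate: τ₁ = 1 almost surely
    (hdeg : ∀ᵐ ω ∂μ, τ 1 ω = 1) :
    (∀ n : ℕ, 1 ≤ n →
      dTV μ (colonyM τ ζ I η n) (statM τt τ ζ I η) ≤
        r * (∫ ω, (ζ 1 ω : ℝ) ∂μ) * ∫ ω, max ((η 1 1 ω : ℝ) + 1 - (n : ℝ)) 0 ∂μ) ∧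
    ∃ C : ℝ, ∀ n : ℕ, 1 ≤ n →
      dTV μ (colonyM τ ζ I η n) (statM τt τ ζ I η) ≤ C / (n : ℝ) := by
  classical
  set f : beeT → Ω → ℕ := allVars τt τ ζ I η with hf_def
  have hfm : ∀ t, Measurable (f t) := by
    rintro (u | i | i | p | p)
    · exact hτtm
    · exact hτm i
    · exact hζm i
    · exact hIm p.1 p.2
    · exact hηm p.1 p.2
  -- the good event
  have hτ1_int : ∫ ω, (τ 1 ω : ℝ) ∂μ = 1 := by
    have hc : (fun ω => (τ 1 ω : ℝ)) =ᵐ[μ] fun _ => (1 : ℝ) :=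
      hdeg.mono fun ω h => by simp [h]
    rw [integral_congr_ae hc, integral_const]
    simp
  have hτt1 : ∀ᵐ ω ∂μ, τt ω = 1 := by
    have h1 : μ {ω | τt ω = 1} = 1 := by
      rw [hπ 1 le_rfl, hτ1_int]
      have hu : {ω | 1 ≤ τ 1 ω} = Set.univ := Set.eq_univ_of_forall fun ω => hτpos 1 ω
      rw [hu]
      simp
    have hm : MeasurableSet {ω | τt ω = 1} := hτtm (measurableSet_singleton 1)
    rw [ae_iff]
    have hcs : {ω | ¬ τt ω = 1} = {ω | τt ω = 1}ᶜ := rfl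
    rw [hcs, measure_compl hm (measure_ne_top _ _), h1, measure_univ, tsub_self]
  have hτall : ∀ᵐ ω ∂μ, ∀ i, τ i ω = 1 := by
    rw [ae_all_iff]
    intro i
    have hs : MeasurableSet {x : ℕ | ¬ x = 1} := trivial
    have heq : μ {ω | ¬ τ i ω = 1} = μ {ω | ¬ τ 1 ω = 1} := by
      calc μ {ω | ¬ τ i ω = 1} = μ.map (τ i) {x | ¬ x = 1} :=
            (Measure.map_apply (hτm i) hs).symm
        _ = μ.map (τ 1) {x | ¬ x = 1} := by rw [(hτid i).map_eq]
        _ = μ {ω | ¬ τ 1 ω = 1} := Measure.map_apply (hτm 1) hs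
    rw [ae_iff] at hdeg ⊢
    rw [heq]
    exact hdeg
  have hgood : ∀ᵐ ω ∂μ, τt ω = 1 ∧ ∀ i, τ i ω = 1 := hτt1.and hτall
  have hren : ∀ (ω : Ω), (∀ i, τ i ω = 1) → ∀ i, renewalS τ i ω = i := by
    intro ω hω i
    unfold renewalS
    rw [Finset.sum_congr rfl fun k _ => hω k, Finset.sum_const, Nat.card_Icc]
    simp
  have hstat : ∀ (ω : Ω), τt ω = 1 → (∀ i, τ i ω = 1) → ∀ i : ℕ,
      statS τt τ (i + 1) ω = i + 1 := by
    intro ω h1 hω i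
    unfold statS
    rw [h1, Finset.sum_congr rfl fun k _ => hω k, Finset.sum_const, Nat.card_Icc]
    simp only [smul_eq_mul, mul_one]
    omega
  -- block structure
  have hEinj : ∀ b, Function.Injective (blockE b) := by
    rintro b (u | j | j) (u' | j' | j') h <;>
      simp only [blockE, Sum.inr.injEq, Sum.inl.injEq, Prod.mk.injEq, reduceCtorEq] at h <;>
      simp_all
  have hEdisj : ∀ b b', b ≠ b' → ∀ d d', blockE b d ≠ blockE b' d' := by
    rintro b b' hbb (u | j | j) (u' | j' | j') h <;>
      simp only [blockE, Sum.inr.injEq, Sum.inl.injEq, Prod.mk.injEq, reduceCtorEq] at h <;>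
      simp_all
  set V : ℕ → Ω → beeD → ℕ := fun b ω d => f (blockE b d) ω with hV
  have hVm : ∀ b, Measurable (V b) := fun b => measurable_pi_lambda _ fun d => hfm _
  have hGV : ∀ (m b : ℕ) (ω : Ω), Gfun m (V b ω)
      = ∑ j ∈ Finset.Icc 1 (batchXi ζ I (b + 1) ω),
          if m ≤ η (b + 1) j ω + 1 then 1 else 0 := fun m b ω => rfl
  set Fterm : ℕ → Ω → ℕ := fun b ω => Gfun (b + 1) (V b ω) with hFterm
  have hFtm : ∀ b, Measurable (Fterm b) := fun b => (measurable_Gfun _).comp (hVm b)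
  have hbXm : ∀ i, Measurable (batchXi ζ I i) :=
    fun i => measurable_dynSum (hζm i) (fun j => hIm i j)
  -- identical distribution of the blocks
  have hIdmap : ∀ b b' d, μ.map (f (blockE b d)) = μ.map (f (blockE b' d)) := by
    intro b b' d
    rcases d with u | j | j
    · exact (hζid (b + 1)).map_eq.trans (hζid (b' + 1)).map_eq.symm
    · exact map_eq_of_binary (hIm (b + 1) j) (hIm (b' + 1) j) (hI01 _ _) (hI01 _ _)
        (by rw [show (f (blockE b (Sum.inr (Sum.inl j)))) = I (b + 1) j from rfl,
          show (f (blockE b' (Sum.inr (Sum.inl j)))) = I (b' + 1) j from rfl, hIr, hIr])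
    · exact (hηid _ _).map_eq.trans (hηid _ _).map_eq.symm
  have hVid : ∀ b b', μ.map (V b) = μ.map (V b') := fun b b' =>
    map_block_eq hfm hindep (blockE b) (blockE b') (hEinj b) (hEinj b') (hIdmap b b')
  have hmaps : ∀ (m b b' : ℕ),
      μ.map (fun ω => Gfun m (V b ω)) = μ.map (fun ω => Gfun m (V b' ω)) := by
    intro m b b'
    have he : ∀ c : ℕ, (fun ω => Gfun m (V c ω)) = Gfun m ∘ V c := fun c => rfl
    rw [he b, he b', ← Measure.map_map (measurable_Gfun m) (hVm b),
      ← Measure.map_map (measurable_Gfun m) (hVm b'), hVid b b']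
  -- expectation of the terms
  have hIndep2 : ∀ b j, IndepFun (batchXi ζ I (b + 1)) (η (b + 1) j) μ := by
    intro b j
    have hinj2 : ∀ x, Function.Injective (blockE2 x) := by
      rintro (b'' | p) d d' h
      · rcases d with u | j1 <;> rcases d' with u' | j1'
        · cases u; cases u'; rfl
        · exfalso; injection h with h; injection h with h; injection h
        · exfalso; injection h with h; injection h with h; injection h
        · injection h with h; injection h with h; injection h with h; injection h with h
          injection h with h1 h2
          rw [h2]
      · cases d; cases d'; rfl
    have hdisj2 : ∀ x y, x ≠ y → ∀ d d', blockE2 x d ≠ blockE2 y d' := by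
      rintro (b1 | p1) (b2 | p2) hxy d d'
      · have hbb : b1 + 1 ≠ b2 + 1 := by
          intro hc
          exact hxy (by rw [show b1 = b2 from by omega])
        rcases d with u | j1 <;> rcases d' with u' | j1' <;> intro h
        · injection h with h; injection h with h; injection h with h
          exact hbb h
        · injection h with h; injection h with h; injection h
        · injection h with h; injection h with h; injection h
        · injection h with h; injection h with h; injection h with h; injection h with h
          injection h with h1 h2
          exact hbb h1
      · rcases d with u | j1 <;> intro h
        · injection h with h; injection h with h; injection h
        · injection h with h; injection h with h; injection h with h; injection h
      · rcases d' with u | j1 <;> intro h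
        · injection h with h; injection h with h; injection h
        · injection h with h; injection h with h; injection h with h; injection h
      · intro h
        injection h with h; injection h with h; injection h with h; injection h with h
        exact hxy (by rw [h])
    have hbig := iIndepFun_blocks hfm hindep blockE2 hinj2 hdisj2
    have hpair := hbig.indepFun
      (i := Sum.inl b) (j := Sum.inr (b + 1, j)) (by simp)
    have hcomp := hpair.comp measurable_xiF (measurable_pi_apply (PUnit.unit : beeD2 (Sum.inr (b + 1, j))))
    exact hcomp
  have hζIind : ∀ b j, IndepFun (ζ (b + 1)) (I (b + 1) j) μ := by
    intro b j
    have := hindep.indepFun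
      (i := (Sum.inr (Sum.inr (Sum.inl (b + 1))) : beeT))
      (j := (Sum.inr (Sum.inr (Sum.inr (Sum.inl (b + 1, j)))) : beeT)) (by simp)
    exact this
  have hζmap : ∀ b j, μ {ω | j ≤ ζ (b + 1) ω} = μ {ω | j ≤ ζ 1 ω} := by
    intro b j
    have hs : MeasurableSet {x : ℕ | j ≤ x} := trivial
    calc μ {ω | j ≤ ζ (b + 1) ω} = μ.map (ζ (b + 1)) {x | j ≤ x} :=
          (Measure.map_apply (hζm _) hs).symm
      _ = μ.map (ζ 1) {x | j ≤ x} := by rw [(hζid _).map_eq]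
      _ = μ {ω | j ≤ ζ 1 ω} := Measure.map_apply (hζm 1) hs
  have hζlint : ∫⁻ ω, (ζ 1 ω : ℝ≥0∞) ∂μ = ENNReal.ofReal (∫ ω, (ζ 1 ω : ℝ) ∂μ) := by
    rw [ofReal_integral_eq_lintegral_ofReal hζint
      (Filter.Eventually.of_forall fun ω => Nat.cast_nonneg _)]
    exact lintegral_congr fun ω => (ENNReal.ofReal_natCast _).symm
  have hxi_lint : ∀ b, ∫⁻ ω, (batchXi ζ I (b + 1) ω : ℝ≥0∞) ∂μ
      = ENNReal.ofReal r * ENNReal.ofReal (∫ ω, (ζ 1 ω : ℝ) ∂μ) := by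
    intro b
    have hpt : ∀ ω : Ω, ((batchXi ζ I (b + 1) ω : ℕ) : ℝ≥0∞)
        = ∑' j : ℕ, if j + 1 ≤ ζ (b + 1) ω ∧ I (b + 1) (j + 1) ω = 1
            then (1 : ℝ≥0∞) else 0 := by
      intro ω
      rw [show ((batchXi ζ I (b + 1) ω : ℕ) : ℝ≥0∞)
          = ((∑ j ∈ Finset.Icc 1 (ζ (b + 1) ω), I (b + 1) j ω : ℕ) : ℝ≥0∞) from rfl,
        coe_sum_Icc]
      refine tsum_congr fun j => ?_
      by_cases h1 : j + 1 ≤ ζ (b + 1) ω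
      · rw [if_pos h1]
        rcases Nat.le_one_iff_eq_zero_or_eq_one.1 (hI01 (b + 1) (j + 1) ω) with h | h
        · simp [h, h1]
        · simp [h, h1]
      · rw [if_neg h1, if_neg (by tauto)]
    have hsets : ∀ j : ℕ, MeasurableSet {ω | j + 1 ≤ ζ (b + 1) ω ∧ I (b + 1) (j + 1) ω = 1} := by
      intro j
      rw [Set.setOf_and]
      exact ((hζm (b + 1)) (show MeasurableSet {x : ℕ | j + 1 ≤ x} from trivial)).inter
        ((hIm (b + 1) (j + 1)) (measurableSet_singleton 1))
    calc ∫⁻ ω, (batchXi ζ I (b + 1) ω : ℝ≥0∞) ∂μ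
        = ∫⁻ ω, ∑' j : ℕ, (if j + 1 ≤ ζ (b + 1) ω ∧ I (b + 1) (j + 1) ω = 1
            then (1 : ℝ≥0∞) else 0) ∂μ := lintegral_congr hpt
      _ = ∑' j : ℕ, ∫⁻ ω, (if j + 1 ≤ ζ (b + 1) ω ∧ I (b + 1) (j + 1) ω = 1
            then (1 : ℝ≥0∞) else 0) ∂μ :=
          lintegral_tsum fun j => (Measurable.ite (hsets j)
            measurable_const measurable_const).aemeasurable
      _ = ∑' j : ℕ, μ {ω | j + 1 ≤ ζ (b + 1) ω ∧ I (b + 1) (j + 1) ω = 1} :=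
          tsum_congr fun j => lintegral_if_mem (hsets j)
      _ = ∑' j : ℕ, μ {ω | j + 1 ≤ ζ (b + 1) ω} * μ {ω | I (b + 1) (j + 1) ω = 1} := by
          refine tsum_congr fun j => ?_
          have hprod := (hζIind b (j + 1)).measure_inter_preimage_eq_mul
            {x : ℕ | j + 1 ≤ x} {1}
            (show MeasurableSet {x : ℕ | j + 1 ≤ x} from trivial)
            (measurableSet_singleton 1)
          rw [Set.setOf_and]
          exact hprod
      _ = ∑' j : ℕ, μ {ω | j + 1 ≤ ζ 1 ω} * ENNReal.ofReal r := by
          refine tsum_congr fun j => ?_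
          rw [hζmap b (j + 1), hIr]
      _ = (∑' j : ℕ, μ {ω | j + 1 ≤ ζ 1 ω}) * ENNReal.ofReal r := ENNReal.tsum_mul_right
      _ = ENNReal.ofReal r * ENNReal.ofReal (∫ ω, (ζ 1 ω : ℝ) ∂μ) := by
          rw [← lintegral_nat_eq_tsum (hζm 1), hζlint, mul_comm]
  have hηmap : ∀ b j m, μ {ω | m ≤ η (b + 1) j ω} = μ {ω | m ≤ η 1 1 ω} := by
    intro b j m
    have hs : MeasurableSet {x : ℕ | m ≤ x} := trivial
    calc μ {ω | m ≤ η (b + 1) j ω} = μ.map (η (b + 1) j) {x | m ≤ x} :=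
          (Measure.map_apply (hηm _ _) hs).symm
      _ = μ.map (η 1 1) {x | m ≤ x} := by rw [(hηid _ _).map_eq]
      _ = μ {ω | m ≤ η 1 1 ω} := Measure.map_apply (hηm 1 1) hs
  have hFlint : ∀ b, ∫⁻ ω, (Fterm b ω : ℝ≥0∞) ∂μ
      = ENNReal.ofReal r * ENNReal.ofReal (∫ ω, (ζ 1 ω : ℝ) ∂μ) * μ {ω | b ≤ η 1 1 ω} := by
    intro b
    have hpt : ∀ ω : Ω, ((Fterm b ω : ℕ) : ℝ≥0∞)
        = ∑' j : ℕ, if j + 1 ≤ batchXi ζ I (b + 1) ω ∧ b ≤ η (b + 1) (j + 1) ω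
            then (1 : ℝ≥0∞) else 0 := by
      intro ω
      rw [show ((Fterm b ω : ℕ) : ℝ≥0∞)
          = ((∑ j ∈ Finset.Icc 1 (batchXi ζ I (b + 1) ω),
              if b + 1 ≤ η (b + 1) j ω + 1 then 1 else 0 : ℕ) : ℝ≥0∞) from by rw [hFterm]; rfl,
        coe_sum_Icc]
      refine tsum_congr fun j => ?_
      by_cases h1 : j + 1 ≤ batchXi ζ I (b + 1) ω
      · rw [if_pos h1]
        by_cases h2 : b ≤ η (b + 1) (j + 1) ω
        · rw [if_pos (by omega), if_pos ⟨h1, h2⟩]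
          simp
        · rw [if_neg (by omega), if_neg (by tauto)]
          simp
      · rw [if_neg h1, if_neg (by tauto)]
    have hsets : ∀ j : ℕ,
        MeasurableSet {ω | j + 1 ≤ batchXi ζ I (b + 1) ω ∧ b ≤ η (b + 1) (j + 1) ω} := by
      intro j
      rw [Set.setOf_and]
      exact ((hbXm (b + 1)) (show MeasurableSet {x : ℕ | j + 1 ≤ x} from trivial)).inter
        ((hηm (b + 1) (j + 1)) (show MeasurableSet {x : ℕ | b ≤ x} from trivial))
    calc ∫⁻ ω, (Fterm b ω : ℝ≥0∞) ∂μ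
        = ∫⁻ ω, ∑' j : ℕ, (if j + 1 ≤ batchXi ζ I (b + 1) ω ∧ b ≤ η (b + 1) (j + 1) ω
            then (1 : ℝ≥0∞) else 0) ∂μ := lintegral_congr hpt
      _ = ∑' j : ℕ, ∫⁻ ω, (if j + 1 ≤ batchXi ζ I (b + 1) ω ∧ b ≤ η (b + 1) (j + 1) ω
            then (1 : ℝ≥0∞) else 0) ∂μ :=
          lintegral_tsum fun j => (Measurable.ite (hsets j)
            measurable_const measurable_const).aemeasurable
      _ = ∑' j : ℕ, μ {ω | j + 1 ≤ batchXi ζ I (b + 1) ω ∧ b ≤ η (b + 1) (j + 1) ω} :=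
          tsum_congr fun j => lintegral_if_mem (hsets j)
      _ = ∑' j : ℕ, μ {ω | j + 1 ≤ batchXi ζ I (b + 1) ω} * μ {ω | b ≤ η (b + 1) (j + 1) ω} := by
          refine tsum_congr fun j => ?_
          have hprod := (hIndep2 b (j + 1)).measure_inter_preimage_eq_mul
            {x : ℕ | j + 1 ≤ x} {x : ℕ | b ≤ x}
            (show MeasurableSet {x : ℕ | j + 1 ≤ x} from trivial)
            (show MeasurableSet {x : ℕ | b ≤ x} from trivial)
          rw [Set.setOf_and]
          exact hprod
      _ = ∑' j : ℕ, μ {ω | j + 1 ≤ batchXi ζ I (b + 1) ω} * μ {ω | b ≤ η 1 1 ω} :=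
          tsum_congr fun j => by rw [hηmap b (j + 1) b]
      _ = (∑' j : ℕ, μ {ω | j + 1 ≤ batchXi ζ I (b + 1) ω}) * μ {ω | b ≤ η 1 1 ω} :=
          ENNReal.tsum_mul_right
      _ = ENNReal.ofReal r * ENNReal.ofReal (∫ ω, (ζ 1 ω : ℝ) ∂μ) * μ {ω | b ≤ η 1 1 ω} := by
          rw [← lintegral_nat_eq_tsum (hbXm (b + 1)), hxi_lint b]
  -- integrability facts
  have hηcastm : Measurable (fun ω => (η 1 1 ω : ℝ)) :=
    (measurable_from_top (f := fun k : ℕ => (k : ℝ))).comp (hηm 1 1)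
  have hη_int : Integrable (fun ω => (η 1 1 ω : ℝ)) μ := by
    refine Integrable.mono (hηsq.add (integrable_const 1)) hηcastm.aestronglyMeasurable ?_
    refine Filter.Eventually.of_forall fun ω => ?_
    simp only [Pi.add_apply, Real.norm_eq_abs]
    have h0 : (0 : ℝ) ≤ (η 1 1 ω : ℝ) := Nat.cast_nonneg _
    have h2 : (0 : ℝ) ≤ (η 1 1 ω : ℝ) ^ 2 + 1 := by positivity
    rw [abs_of_nonneg h0, abs_of_nonneg h2]
    nlinarith
  have hmax_int : ∀ n : ℕ, 1 ≤ n →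
      Integrable (fun ω => max ((η 1 1 ω : ℝ) + 1 - (n : ℝ)) 0) μ := by
    intro n hn
    have hm : Measurable fun ω => max ((η 1 1 ω : ℝ) + 1 - (n : ℝ)) 0 :=
      ((hηcastm.add_const 1).sub_const (n : ℝ)).max measurable_const
    refine Integrable.mono hη_int hm.aestronglyMeasurable ?_
    refine Filter.Eventually.of_forall fun ω => ?_
    simp only [Real.norm_eq_abs]
    have h0 : (0 : ℝ) ≤ (η 1 1 ω : ℝ) := Nat.cast_nonneg _
    have hn1 : (1 : ℝ) ≤ (n : ℝ) := by exact_mod_cast hn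
    rw [abs_of_nonneg (le_max_right _ _), abs_of_nonneg h0]
    rcases max_cases ((η 1 1 ω : ℝ) + 1 - (n : ℝ)) 0 with ⟨hmx, _⟩ | ⟨hmx, _⟩ <;>
      rw [hmx] <;> linarith
  -- the tail integral
  have htail_lint : ∀ n : ℕ, 1 ≤ n →
      (∑' i : ℕ, μ {ω | n + i ≤ η 1 1 ω})
        = ENNReal.ofReal (∫ ω, max ((η 1 1 ω : ℝ) + 1 - (n : ℝ)) 0 ∂μ) := by
    intro n hn
    have hptw : ∀ ω : Ω, (∑' i : ℕ, if n + i ≤ η 1 1 ω then (1 : ℝ≥0∞) else 0)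
        = ENNReal.ofReal (max ((η 1 1 ω : ℝ) + 1 - (n : ℝ)) 0) := by
      intro ω
      rw [tsum_congr (fun i => if_congr
        (show n + i ≤ η 1 1 ω ↔ i + 1 ≤ η 1 1 ω + 1 - n by omega) rfl rfl), tsum_if_lt]
      rcases le_or_gt n (η 1 1 ω) with h | h
      · have hcast : ((η 1 1 ω + 1 - n : ℕ) : ℝ) = max ((η 1 1 ω : ℝ) + 1 - (n : ℝ)) 0 := by
          have hnc : (n : ℝ) ≤ (η 1 1 ω : ℝ) := Nat.cast_le.2 h
          rw [max_eq_left (by linarith), Nat.cast_sub (by omega)]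
          push_cast
          ring
        rw [← ENNReal.ofReal_natCast, hcast]
      · have h0 : η 1 1 ω + 1 - n = 0 := by omega
        have hnc : ((η 1 1 ω : ℝ) + 1 - (n : ℝ)) ≤ 0 := by
          have : (η 1 1 ω : ℝ) + 1 ≤ (n : ℝ) := by exact_mod_cast h
          linarith
        rw [h0, max_eq_right hnc]
        simp
    calc ∑' i : ℕ, μ {ω | n + i ≤ η 1 1 ω}
        = ∑' i : ℕ, ∫⁻ ω, (if n + i ≤ η 1 1 ω then (1 : ℝ≥0∞) else 0) ∂μ :=
          tsum_congr fun i => (lintegral_if_mem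
            ((hηm 1 1) (show MeasurableSet {x : ℕ | n + i ≤ x} from trivial))).symm
      _ = ∫⁻ ω, ∑' i : ℕ, (if n + i ≤ η 1 1 ω then (1 : ℝ≥0∞) else 0) ∂μ :=
          (lintegral_tsum fun i => (Measurable.ite
            ((hηm 1 1) (show MeasurableSet {x : ℕ | n + i ≤ x} from trivial))
            measurable_const measurable_const).aemeasurable).symm
      _ = ∫⁻ ω, ENNReal.ofReal (max ((η 1 1 ω : ℝ) + 1 - (n : ℝ)) 0) ∂μ :=
          lintegral_congr hptw
      _ = ENNReal.ofReal (∫ ω, max ((η 1 1 ω : ℝ) + 1 - (n : ℝ)) 0 ∂μ) :=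
          (ofReal_integral_eq_lintegral_ofReal (hmax_int n hn)
            (Filter.Eventually.of_forall fun ω => le_max_right _ _)).symm
  -- main bound
  have main : ∀ n : ℕ, 1 ≤ n →
      dTV μ (colonyM τ ζ I η n) (statM τt τ ζ I η) ≤
        r * (∫ ω, (ζ 1 ω : ℝ) ∂μ) * ∫ ω, max ((η 1 1 ω : ℝ) + 1 - (n : ℝ)) 0 ∂μ := by
    intro n hn
    have hblocksFin : iIndepFun
        (fun (i : Fin n) ω (d : beeD) => f (blockE (i : ℕ) d) ω) μ :=
      iIndepFun_blocks hfm hindep (fun i : Fin n => blockE (i : ℕ)) (fun i => hEinj i)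
        (fun i i' hii' d d' => hEdisj i i' (fun hc => hii' (Fin.val_injective hc)) d d')
    set YB : Fin n → Ω → ℕ := fun i ω => Gfun (n - (i : ℕ)) (V (i : ℕ) ω) with hYB
    set YA : Fin n → Ω → ℕ := fun i ω => Gfun ((i : ℕ) + 1) (V (i : ℕ) ω) with hYA
    have hYBm : ∀ i, Measurable (YB i) := fun i => (measurable_Gfun _).comp (hVm _)
    have hYAm : ∀ i, Measurable (YA i) := fun i => (measurable_Gfun _).comp (hVm _)
    have hYBindep : iIndepFun YB μ :=
      hblocksFin.comp (fun i => Gfun (n - (i : ℕ))) (fun i => measurable_Gfun _)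
    have hYAindep : iIndepFun YA μ :=
      hblocksFin.comp (fun i => Gfun ((i : ℕ) + 1)) (fun i => measurable_Gfun _)
    have hperm : μ.map (fun ω => ∑ i : Fin n, YB i ω)
        = μ.map (fun ω => ∑ i : Fin n, YA i ω) := by
      refine map_sum_eq_of_perm hYBm hYAm hYBindep hYAindep Fin.revPerm (fun i => ?_)
      have hv : ((Fin.revPerm i : Fin n) : ℕ) + 1 = n - (i : ℕ) := by
        have := i.isLt
        simp only [Fin.revPerm_apply, Fin.val_rev]
        omega
      rw [hYB, hYA]
      dsimp only
      rw [hv]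
      exact hmaps (n - (i : ℕ)) (i : ℕ) ((Fin.revPerm i : Fin n) : ℕ)
    set MB : Ω → ℕ := fun ω => ∑ i : Fin n, YB i ω with hMB
    set MA : Ω → ℕ := fun ω => ∑ i : Fin n, YA i ω with hMA
    have hMBm : Measurable MB := Finset.measurable_sum _ fun i _ => hYBm i
    have hMAm : Measurable MA := Finset.measurable_sum _ fun i _ => hYAm i
    have hMsum : ∀ ω : Ω, (∀ i, τ i ω = 1) → colonyM τ ζ I η n ω = MB ω := by
      intro ω hω
      rw [hMB]
      dsimp only
      rw [Fin.sum_univ_eq_sum_range (fun b => Gfun (n - b) (V b ω))]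
      unfold colonyM
      rw [← Finset.Ico_add_one_right_eq_Icc, Finset.sum_Ico_eq_sum_range]
      refine Finset.sum_congr rfl fun b hb => ?_
      have hbn : b < n := Finset.mem_range.1 hb
      rw [hGV]
      rw [hren ω hω (1 + b)]
      have h1b : 1 + b = b + 1 := Nat.add_comm 1 b
      rw [h1b]
      refine Finset.sum_congr rfl fun j _ => ?_
      refine if_congr ?_ rfl rfl
      constructor
      · intro hcond
        omega
      · intro hcond
        omega
    have hstatM : ∀ ω : Ω, τt ω = 1 → (∀ i, τ i ω = 1) → (∀ i, n ≤ i → Fterm i ω = 0) →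
        statM τt τ ζ I η ω = MA ω := by
      intro ω h1 hω htail
      unfold statM
      have hterm : ∀ i : ℕ,
          (∑ j ∈ Finset.Icc 1 (batchXi ζ I (i + 1) ω),
            if statS τt τ (i + 1) ω ≤ η (i + 1) j ω + 1 then 1 else 0) = Fterm i ω := by
        intro i
        rw [hstat ω h1 hω i, hFterm]
        dsimp only
        rw [hGV]
      rw [tsum_congr hterm]
      rw [tsum_eq_sum (s := Finset.range n) (fun i hi => htail i (by
        by_contra hc
        exact hi (Finset.mem_range.2 (by omega))))]
      rw [hMA]
      dsimp only
      rw [Fin.sum_univ_eq_sum_range (fun b => Gfun (b + 1) (V b ω))]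
    set Tail : Set Ω := ⋃ i : ℕ, {ω | 1 ≤ Fterm (n + i) ω} with hTailDef
    have hTailμ : μ Tail ≤ ENNReal.ofReal (r * (∫ ω, (ζ 1 ω : ℝ) ∂μ)
        * ∫ ω, max ((η 1 1 ω : ℝ) + 1 - (n : ℝ)) 0 ∂μ) := by
      have h2 : ∀ i : ℕ, μ {ω | 1 ≤ Fterm (n + i) ω}
          ≤ ∫⁻ ω, (Fterm (n + i) ω : ℝ≥0∞) ∂μ := by
        intro i
        have ham : AEMeasurable (fun ω => (Fterm (n + i) ω : ℝ≥0∞)) μ :=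
          ((measurable_from_top (f := fun k : ℕ => (k : ℝ≥0∞))).comp (hFtm (n + i))).aemeasurable
        have hmar := mul_meas_ge_le_lintegral₀ ham 1
        rw [one_mul] at hmar
        refine le_trans (le_of_eq ?_) hmar
        congr 1
        ext ω
        simp [Nat.one_le_cast]
      calc μ Tail ≤ ∑' i : ℕ, μ {ω | 1 ≤ Fterm (n + i) ω} := measure_iUnion_le _
        _ ≤ ∑' i : ℕ, ∫⁻ ω, (Fterm (n + i) ω : ℝ≥0∞) ∂μ := ENNReal.tsum_le_tsum h2
        _ = ∑' i : ℕ, ENNReal.ofReal r * ENNReal.ofReal (∫ ω, (ζ 1 ω : ℝ) ∂μ)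
            * μ {ω | n + i ≤ η 1 1 ω} := tsum_congr fun i => hFlint (n + i)
        _ = ENNReal.ofReal r * ENNReal.ofReal (∫ ω, (ζ 1 ω : ℝ) ∂μ)
            * ∑' i : ℕ, μ {ω | n + i ≤ η 1 1 ω} := by
            rw [← ENNReal.tsum_mul_left]
        _ = ENNReal.ofReal r * ENNReal.ofReal (∫ ω, (ζ 1 ω : ℝ) ∂μ)
            * ENNReal.ofReal (∫ ω, max ((η 1 1 ω : ℝ) + 1 - (n : ℝ)) 0 ∂μ) := by
            rw [htail_lint n hn]
        _ = ENNReal.ofReal (r * (∫ ω, (ζ 1 ω : ℝ) ∂μ)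
            * ∫ ω, max ((η 1 1 ω : ℝ) + 1 - (n : ℝ)) 0 ∂μ) := by
            rw [← ENNReal.ofReal_mul hr0,
              ← ENNReal.ofReal_mul (mul_nonneg hr0 (integral_nonneg fun ω => Nat.cast_nonneg _))]
    have hbound0 : 0 ≤ r * (∫ ω, (ζ 1 ω : ℝ) ∂μ)
        * ∫ ω, max ((η 1 1 ω : ℝ) + 1 - (n : ℝ)) 0 ∂μ :=
      mul_nonneg (mul_nonneg hr0 (integral_nonneg fun ω => Nat.cast_nonneg _))
        (integral_nonneg fun ω => le_max_right _ _)
    unfold dTV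
    refine Real.iSup_le (fun B => ?_) hbound0
    set S : Set ℕ := {m : ℕ | (m : ℤ) ∈ B} with hS
    have hpre : ∀ X : Ω → ℕ, (fun ω => (X ω : ℤ)) ⁻¹' B = X ⁻¹' S := fun X => rfl
    rw [hpre, hpre]
    have hae1 : μ (colonyM τ ζ I η n ⁻¹' S) = μ (MB ⁻¹' S) := by
      refine measure_congr ?_
      rw [Filter.eventuallyEq_set]
      filter_upwards [hgood] with ω hω
      simp only [Set.mem_preimage]
      rw [hMsum ω hω.2]
    have hlaw : μ (MB ⁻¹' S) = μ (MA ⁻¹' S) := by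
      rw [← Measure.map_apply hMBm (show MeasurableSet S from trivial),
        ← Measure.map_apply hMAm (show MeasurableSet S from trivial), hperm]
    have hgnull : μ {ω | ¬ (τt ω = 1 ∧ ∀ i, τ i ω = 1)} = 0 := ae_iff.mp hgood
    have hkey : ∀ ω : Ω, (τt ω = 1 ∧ ∀ i, τ i ω = 1) → ω ∉ Tail →
        statM τt τ ζ I η ω = MA ω := by
      intro ω hg ht
      have htailz : ∀ i, n ≤ i → Fterm i ω = 0 := by
        intro i hi
        by_contra hne
        refine ht ?_
        rw [hTailDef]
        refine Set.mem_iUnion.2 ⟨i - n, ?_⟩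
        have hni : n + (i - n) = i := by omega
        show 1 ≤ Fterm (n + (i - n)) ω
        rw [hni]
        omega
      exact hstatM ω hg.1 hg.2 htailz
    have hsub1 : statM τt τ ζ I η ⁻¹' S
        ⊆ (MA ⁻¹' S) ∪ ({ω | ¬ (τt ω = 1 ∧ ∀ i, τ i ω = 1)} ∪ Tail) := by
      intro ω hω
      by_cases hg : τt ω = 1 ∧ ∀ i, τ i ω = 1
      · by_cases ht : ω ∈ Tail
        · exact Or.inr (Or.inr ht)
        · refine Or.inl ?_
          rw [Set.mem_preimage] at hω ⊢
          rwa [hkey ω hg ht] at hω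
      · exact Or.inr (Or.inl hg)
    have hsub2 : MA ⁻¹' S
        ⊆ (statM τt τ ζ I η ⁻¹' S) ∪ ({ω | ¬ (τt ω = 1 ∧ ∀ i, τ i ω = 1)} ∪ Tail) := by
      intro ω hω
      by_cases hg : τt ω = 1 ∧ ∀ i, τ i ω = 1
      · by_cases ht : ω ∈ Tail
        · exact Or.inr (Or.inr ht)
        · refine Or.inl ?_
          rw [Set.mem_preimage] at hω ⊢
          rwa [hkey ω hg ht]
      · exact Or.inr (Or.inl hg)
    have hchain : ∀ A C : Set Ω, A ⊆ C ∪ ({ω | ¬ (τt ω = 1 ∧ ∀ i, τ i ω = 1)} ∪ Tail) →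
        μ A ≤ μ C + ENNReal.ofReal (r * (∫ ω, (ζ 1 ω : ℝ) ∂μ)
          * ∫ ω, max ((η 1 1 ω : ℝ) + 1 - (n : ℝ)) 0 ∂μ) := by
      intro A C hsub
      calc μ A ≤ μ (C ∪ ({ω | ¬ (τt ω = 1 ∧ ∀ i, τ i ω = 1)} ∪ Tail)) := measure_mono hsub
        _ ≤ μ C + μ ({ω | ¬ (τt ω = 1 ∧ ∀ i, τ i ω = 1)} ∪ Tail) := measure_union_le _ _
        _ ≤ μ C + (μ {ω | ¬ (τt ω = 1 ∧ ∀ i, τ i ω = 1)} + μ Tail) :=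
            add_le_add_right (measure_union_le _ _) _
        _ = μ C + μ Tail := by rw [hgnull, zero_add]
        _ ≤ μ C + ENNReal.ofReal (r * (∫ ω, (ζ 1 ω : ℝ) ∂μ)
            * ∫ ω, max ((η 1 1 ω : ℝ) + 1 - (n : ℝ)) 0 ∂μ) := add_le_add_right hTailμ _
    rw [hae1, hlaw]
    have habs := abs_toReal_sub_le (measure_ne_top μ (MA ⁻¹' S))
      (measure_ne_top μ (statM τt τ ζ I η ⁻¹' S)) ENNReal.ofReal_ne_top
      (hchain _ _ hsub2) (hchain _ _ hsub1)
    rwa [ENNReal.toReal_ofReal hbound0] at habs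
  refine ⟨main, ⟨r * (∫ ω, (ζ 1 ω : ℝ) ∂μ) * ∫ ω, ((η 1 1 ω : ℝ) + 1) ^ 2 ∂μ, ?_⟩⟩
  intro n hn
  refine (main n hn).trans ?_
  have hn0 : (0 : ℝ) < (n : ℝ) := by exact_mod_cast hn
  rw [le_div_iff₀ hn0]
  have hsq2_int : Integrable (fun ω => ((η 1 1 ω : ℝ) + 1) ^ 2) μ := by
    have he : (fun ω => ((η 1 1 ω : ℝ) + 1) ^ 2)
        = fun ω => (η 1 1 ω : ℝ) ^ 2 + (2 * (η 1 1 ω : ℝ) + 1) := by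
      funext ω; ring
    rw [he]
    exact hηsq.add ((hη_int.const_mul 2).add (integrable_const 1))
  have hEmax : (∫ ω, max ((η 1 1 ω : ℝ) + 1 - (n : ℝ)) 0 ∂μ) * (n : ℝ)
      ≤ ∫ ω, ((η 1 1 ω : ℝ) + 1) ^ 2 ∂μ := by
    rw [← integral_mul_const]
    refine integral_mono ((hmax_int n hn).mul_const _) hsq2_int ?_
    intro ω
    dsimp only
    have h0 : (0 : ℝ) ≤ (η 1 1 ω : ℝ) := Nat.cast_nonneg _
    rcases max_cases ((η 1 1 ω : ℝ) + 1 - (n : ℝ)) 0 with ⟨hmx, hge⟩ | ⟨hmx, hge⟩ <;> rw [hmx]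
    · have h1 : (η 1 1 ω : ℝ) + 1 - (n : ℝ) ≤ (η 1 1 ω : ℝ) + 1 := by linarith
      have h2 : (n : ℝ) ≤ (η 1 1 ω : ℝ) + 1 := by linarith
      nlinarith [mul_le_mul h1 h2 (le_of_lt hn0) (by positivity : (0 : ℝ) ≤ (η 1 1 ω : ℝ) + 1)]
    · rw [zero_mul]; positivity
  have hrz : 0 ≤ r * (∫ ω, (ζ 1 ω : ℝ) ∂μ) :=
    mul_nonneg hr0 (integral_nonneg fun ω => Nat.cast_nonneg _)
  calc r * (∫ ω, (ζ 1 ω : ℝ) ∂μ) * (∫ ω, max ((η 1 1 ω : ℝ) + 1 - (n : ℝ)) 0 ∂μ) * (n : ℝ)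
      = r * (∫ ω, (ζ 1 ω : ℝ) ∂μ)
        * ((∫ ω, max ((η 1 1 ω : ℝ) + 1 - (n : ℝ)) 0 ∂μ) * (n : ℝ)) := by ring
    _ ≤ r * (∫ ω, (ζ 1 ω : ℝ) ∂μ) * ∫ ω, ((η 1 1 ω : ℝ) + 1) ^ 2 ∂μ :=
        mul_le_mul_of_nonneg_left hEmax hrz
end
end

section
/- If the distribution of τ_1 is degenerate, so that the points 𝒮_1 < 𝒮_2 < ⋯ may be taken to be deterministic positive integer constants, then the characteristic function of the stationary colony size is φ_𝓜(u) := E[e^{iu𝓜}] = Π_{i=1}^∞ ψ_ζ( r(e^{iu} − 1)(1 − F_η(𝒮_i − 2)) + 1 ), where ψ_ζ(s) = E[s^{ζ_1}] is the probability generating function of the batch size and F_η is the distribution function of η_{11}. -/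
open MeasureTheory ProbabilityTheory Finset

noncomputable section

variable {Ω : Type*}

/-- The stationary colony size `𝓜 = Σ_{i ≥ 1} Σ_{j=1}^{ξ_i} 1{𝒮 i ≤ η i j + 1}`
when the renewal times `𝒮 i` are deterministic. -/
def statMdet (𝒮 : ℕ → ℕ) (ζ : ℕ → Ω → ℕ) (I η : ℕ → ℕ → Ω → ℕ) (ω : Ω) : ℕ :=
  ∑' i : ℕ, ∑ j ∈ Finset.Icc 1 (batchXi ζ I (i + 1) ω),
    if 𝒮 (i + 1) ≤ η (i + 1) j ω + 1 then 1 else 0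

/-- `F_η x = P(η₁₁ ≤ x)`, the distribution function of the lifetimes (as a function on `ℤ`). -/
def lifeCDF [MeasurableSpace Ω] (μ : Measure Ω) (η : ℕ → ℕ → Ω → ℕ) (x : ℤ) : ℝ :=
  (μ {ω | (η 1 1 ω : ℤ) ≤ x}).toReal

/-- The three sources of randomness (`ζ i`, `I i j`, `η i j`) packaged as one family,
used to state that they are mutually independent. -/
def eggVars (ζ : ℕ → Ω → ℕ) (I η : ℕ → ℕ → Ω → ℕ) :
    (ℕ ⊕ (ℕ × ℕ) ⊕ (ℕ × ℕ)) → Ω → ℕ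
  | Sum.inl i => ζ i
  | Sum.inr (Sum.inl p) => I p.1 p.2
  | Sum.inr (Sum.inr p) => η p.1 p.2


open Filter Topology

set_option linter.unusedSectionVars false




lemma integrable_of_bdd {Ω : Type*} [MeasurableSpace Ω] {μ : Measure Ω} [IsFiniteMeasure μ]
    {f : Ω → ℂ} (hm : AEStronglyMeasurable f μ) {C : ℝ} (h : ∀ ω, ‖f ω‖ ≤ C) :
    Integrable f μ :=
  ⟨hm, HasFiniteIntegral.of_bounded (ae_of_all _ h)⟩

lemma indepFun_integral_mul_complex {Ω : Type*} [MeasurableSpace Ω] {μ : Measure Ω}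
    {X Y : Ω → ℂ} (h : IndepFun X Y μ) (hX : Integrable X μ) (hY : Integrable Y μ) :
    ∫ ω, X ω * Y ω ∂μ = (∫ ω, X ω ∂μ) * ∫ ω, Y ω ∂μ := by
  have mre : Measurable (Complex.re) := Complex.measurable_re
  have mim : Measurable (Complex.im) := Complex.measurable_im
  have hac : IndepFun (fun ω => (X ω).re) (fun ω => (Y ω).re) μ := h.comp mre mre
  have had : IndepFun (fun ω => (X ω).re) (fun ω => (Y ω).im) μ := h.comp mre mim
  have hbc : IndepFun (fun ω => (X ω).im) (fun ω => (Y ω).re) μ := h.comp mim mre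
  have hbd : IndepFun (fun ω => (X ω).im) (fun ω => (Y ω).im) μ := h.comp mim mim
  have iXa : Integrable (fun ω => (X ω).re) μ := hX.re
  have iXb : Integrable (fun ω => (X ω).im) μ := hX.im
  have iYc : Integrable (fun ω => (Y ω).re) μ := hY.re
  have iYd : Integrable (fun ω => (Y ω).im) μ := hY.im
  have iac : Integrable (fun ω => (X ω).re * (Y ω).re) μ := hac.integrable_mul iXa iYc
  have iad : Integrable (fun ω => (X ω).re * (Y ω).im) μ := had.integrable_mul iXa iYd
  have ibc : Integrable (fun ω => (X ω).im * (Y ω).re) μ := hbc.integrable_mul iXb iYc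
  have ibd : Integrable (fun ω => (X ω).im * (Y ω).im) μ := hbd.integrable_mul iXb iYd
  have iXY : Integrable (fun ω => X ω * Y ω) μ := h.integrable_mul hX hY
  have eXY_re : ∫ ω, (X ω * Y ω).re ∂μ = (∫ ω, X ω * Y ω ∂μ).re := by
    simpa using integral_re iXY
  have eXY_im : ∫ ω, (X ω * Y ω).im ∂μ = (∫ ω, X ω * Y ω ∂μ).im := by
    simpa using integral_im iXY
  have eXre : ∫ ω, (X ω).re ∂μ = (∫ ω, X ω ∂μ).re := by simpa using integral_re hX
  have eXim : ∫ ω, (X ω).im ∂μ = (∫ ω, X ω ∂μ).im := by simpa using integral_im hX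
  have eYre : ∫ ω, (Y ω).re ∂μ = (∫ ω, Y ω ∂μ).re := by simpa using integral_re hY
  have eYim : ∫ ω, (Y ω).im ∂μ = (∫ ω, Y ω ∂μ).im := by simpa using integral_im hY
  apply Complex.ext
  · rw [← eXY_re]
    have : (fun ω => (X ω * Y ω).re)
        = fun ω => (X ω).re * (Y ω).re - (X ω).im * (Y ω).im := by
      ext ω; simp [Complex.mul_re]
    rw [this, integral_sub iac ibd, hac.integral_fun_mul_eq_mul_integral iXa.1 iYc.1,
      hbd.integral_fun_mul_eq_mul_integral iXb.1 iYd.1, Complex.mul_re,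
      eXre, eYre, eXim, eYim]
  · rw [← eXY_im]
    have : (fun ω => (X ω * Y ω).im)
        = fun ω => (X ω).re * (Y ω).im + (X ω).im * (Y ω).re := by
      ext ω; simp [Complex.mul_im]
    rw [this, integral_add iad ibc, had.integral_fun_mul_eq_mul_integral iXa.1 iYd.1,
      hbc.integral_fun_mul_eq_mul_integral iXb.1 iYc.1, Complex.mul_im,
      eXre, eYre, eXim, eYim]

lemma integral_comp_nat {Ω : Type*} [MeasurableSpace Ω] {μ : Measure Ω} [IsProbabilityMeasure μ]
    {X : Ω → ℕ} (hX : Measurable X) (h : ℕ → ℂ) (hb : ∀ n, ‖h n‖ ≤ 1) :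
    ∫ ω, h (X ω) ∂μ = ∑' n, (μ (X ⁻¹' {n})).toReal • h n := by
  have : IsProbabilityMeasure (μ.map X) := Measure.isProbabilityMeasure_map hX.aemeasurable
  rw [← integral_map hX.aemeasurable (measurable_from_top (f := h)).aestronglyMeasurable,
    integral_countable' (integrable_of_bdd (measurable_from_top (f := h)).aestronglyMeasurable hb)]
  congr 1
  ext n
  rw [Measure.real, Measure.map_apply hX (measurableSet_singleton n)]




section Helpers

variable {Ω : Type*} [MeasurableSpace Ω] {μ : Measure Ω}

lemma integrable_of_bdd' [IsFiniteMeasure μ]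
    {f : Ω → ℂ} (hm : Measurable f) {C : ℝ} (h : ∀ ω, ‖f ω‖ ≤ C) :
    Integrable f μ :=
  ⟨hm.aestronglyMeasurable, HasFiniteIntegral.of_bounded (ae_of_all _ h)⟩

lemma integral_finset_prod_comp [IsProbabilityMeasure μ] {ι : Type*} {X : ι → Ω → ℕ}
    (hX : ∀ i, Measurable (X i))
    (hindep : iIndepFun X μ)
    (φ : ι → ℕ → ℂ) (hφ : ∀ i n, ‖φ i n‖ ≤ 1) (t : Finset ι) :
    ∫ ω, ∏ k ∈ t, φ k (X k ω) ∂μ = ∏ k ∈ t, ∫ ω, φ k (X k ω) ∂μ := by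
  classical
  have hZindep : iIndepFun
      (fun i ω => φ i (X i ω)) μ :=
    hindep.comp (fun i => φ i) (fun i => measurable_from_top)
  have hZm : ∀ i, Measurable (fun ω => φ i (X i ω)) :=
    fun i => (measurable_from_top (f := φ i)).comp (hX i)
  induction t using Finset.induction_on with
  | empty => simp
  | @insert a s ha ih =>
    have hint1 : Integrable (fun ω => φ a (X a ω)) μ :=
      integrable_of_bdd' (hZm a) (fun ω => hφ a _)
    have hprodm : Measurable (fun ω => ∏ k ∈ s, φ k (X k ω)) := by
      apply Finset.measurable_prod
      exact fun i _ => hZm i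
    have hint2 : Integrable (fun ω => ∏ k ∈ s, φ k (X k ω)) μ := by
      refine integrable_of_bdd' hprodm (C := 1) (fun ω => ?_)
      calc ‖∏ k ∈ s, φ k (X k ω)‖ ≤ ∏ k ∈ s, ‖φ k (X k ω)‖ := norm_prod_le _ _
        _ ≤ 1 := Finset.prod_le_one (fun i _ => norm_nonneg _) (fun i _ => hφ i _)
    have hIF : IndepFun (fun ω => ∏ k ∈ s, φ k (X k ω)) (fun ω => φ a (X a ω)) μ := by
      have h2 := hZindep.indepFun_finset_prod_of_notMem hZm ha
      have : (∏ j ∈ s, fun ω => φ j (X j ω)) = (fun ω => ∏ k ∈ s, φ k (X k ω)) := by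
        ext ω; simp
      rwa [this] at h2
    rw [Finset.prod_insert ha, ← ih]
    have hsum : ∀ ω, ∏ k ∈ insert a s, φ k (X k ω)
        = φ a (X a ω) * ∏ k ∈ s, φ k (X k ω) := fun ω => Finset.prod_insert ha
    simp only [hsum]
    have : ∫ ω, φ a (X a ω) * ∏ k ∈ s, φ k (X k ω) ∂μ
        = (∫ ω, ∏ k ∈ s, φ k (X k ω) ∂μ) * ∫ ω, φ a (X a ω) ∂μ := by
      have := indepFun_integral_mul_complex hIF hint2 hint1
      rw [← this]
      congr 1; ext ω; ring
    rw [this]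
    ring

end Helpers

lemma measurable_sum_Icc' {Ω : Type*} {m : MeasurableSpace Ω} {b : Ω → ℕ}
    (hb : Measurable[m] b) {f : ℕ → Ω → ℕ} (hf : ∀ j, Measurable[m] (f j)) :
    Measurable[m] (fun ω => ∑ j ∈ Finset.Icc 1 (b ω), f j ω) := by
  apply measurable_to_countable'
  intro k
  have hset : (fun ω => ∑ j ∈ Finset.Icc 1 (b ω), f j ω) ⁻¹' {k}
      = ⋃ n, ({ω | b ω = n} ∩ {ω | ∑ j ∈ Finset.Icc 1 n, f j ω = k}) := by
    ext ω
    simp only [Set.mem_preimage, Set.mem_singleton_iff, Set.mem_iUnion, Set.mem_inter_iff,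
      Set.mem_setOf_eq]
    constructor
    · intro h; exact ⟨b ω, rfl, h⟩
    · rintro ⟨n, hn, h⟩; rw [hn]; exact h
  rw [hset]
  refine MeasurableSet.iUnion fun n => MeasurableSet.inter ?_ ?_
  · exact hb (measurableSet_singleton n)
  · have : Measurable[m] fun ω => ∑ j ∈ Finset.Icc 1 n, f j ω :=
      Finset.measurable_sum _ (fun j _ => hf j)
    exact this (measurableSet_singleton k)

lemma norm_prod_sub_one_le {t : Finset ℕ} {f : ℕ → ℂ} (hb : ∀ i, ‖f i‖ ≤ 1) :
    ‖∏ i ∈ t, f i - 1‖ ≤ ∑ i ∈ t, ‖f i - 1‖ := by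
  classical
  induction t using Finset.induction_on with
  | empty => simp
  | @insert a s ha ih =>
    rw [Finset.prod_insert ha, Finset.sum_insert ha]
    have : f a * ∏ i ∈ s, f i - 1 = f a * (∏ i ∈ s, f i - 1) + (f a - 1) := by ring
    rw [this]
    calc ‖f a * (∏ i ∈ s, f i - 1) + (f a - 1)‖
        ≤ ‖f a * (∏ i ∈ s, f i - 1)‖ + ‖f a - 1‖ := norm_add_le _ _
      _ = ‖f a‖ * ‖∏ i ∈ s, f i - 1‖ + ‖f a - 1‖ := by rw [norm_mul]
      _ ≤ 1 * (∑ i ∈ s, ‖f i - 1‖) + ‖f a - 1‖ := by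
          have := mul_le_mul (hb a) ih (norm_nonneg _) zero_le_one
          linarith
      _ = ‖f a - 1‖ + ∑ i ∈ s, ‖f i - 1‖ := by ring

lemma norm_pow_sub_one_le {a : ℂ} (ha : ‖a‖ ≤ 1) (n : ℕ) :
    ‖a ^ n - 1‖ ≤ n * ‖a - 1‖ := by
  induction n with
  | zero => simp
  | succ n ih =>
    have : a ^ (n + 1) - 1 = a ^ n * (a - 1) + (a ^ n - 1) := by ring
    rw [this]
    calc ‖a ^ n * (a - 1) + (a ^ n - 1)‖ ≤ ‖a ^ n * (a - 1)‖ + ‖a ^ n - 1‖ := norm_add_le _ _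
      _ ≤ 1 * ‖a - 1‖ + n * ‖a - 1‖ := by
          have h1 : ‖a ^ n‖ ≤ 1 := by
            calc ‖a ^ n‖ = ‖a‖ ^ n := norm_pow a n
              _ ≤ 1 := pow_le_one₀ (norm_nonneg a) ha
          have h2 : ‖a ^ n * (a - 1)‖ ≤ 1 * ‖a - 1‖ := by
            rw [norm_mul]
            exact mul_le_mul_of_nonneg_right h1 (norm_nonneg _)
          linarith
      _ = (n + 1 : ℕ) * ‖a - 1‖ := by push_cast; ring

lemma hasProd_of_tendsto {f : ℕ → ℂ} (hb : ∀ i, ‖f i‖ ≤ 1)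
    (hs : Summable (fun i => ‖f i - 1‖)) {L : ℂ}
    (hL : Filter.Tendsto (fun n => ∏ i ∈ Finset.range n, f i) Filter.atTop (nhds L)) :
    HasProd f L := by
  classical
  rw [HasProd]
  show Filter.Tendsto (fun s => ∏ b ∈ s, f b) Filter.atTop (nhds L)
  rw [Metric.tendsto_atTop]
  intro ε hε
  set C := ∑' i, ‖f i - 1‖ with hCdef
  have hC : Filter.Tendsto (fun n => ∑ i ∈ Finset.range n, ‖f i - 1‖)
      Filter.atTop (nhds C) := hs.hasSum.tendsto_sum_nat
  have h0 : Filter.Tendsto (fun n => C - ∑ i ∈ Finset.range n, ‖f i - 1‖)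
      Filter.atTop (nhds 0) := by
    have := Filter.Tendsto.sub (tendsto_const_nhds (x := C)) hC
    simpa using this
  have h1 : ∀ᶠ n in Filter.atTop, C - ∑ i ∈ Finset.range n, ‖f i - 1‖ < ε / 2 :=
    h0.eventually (eventually_lt_nhds (by positivity))
  have h2 : ∀ᶠ n in Filter.atTop, dist (∏ i ∈ Finset.range n, f i) L < ε / 2 :=
    hL.eventually (Metric.ball_mem_nhds L (by positivity))
  obtain ⟨n, hn1, hn2⟩ := (h1.and h2).exists
  refine ⟨Finset.range n, fun s hsub => ?_⟩
  have hsplit : (∏ i ∈ s \ Finset.range n, f i) * ∏ i ∈ Finset.range n, f i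
      = ∏ i ∈ s, f i := Finset.prod_sdiff hsub
  have hPn_norm : ‖∏ i ∈ Finset.range n, f i‖ ≤ 1 := by
    calc ‖∏ i ∈ Finset.range n, f i‖ ≤ ∏ i ∈ Finset.range n, ‖f i‖ := norm_prod_le _ _
      _ ≤ 1 := Finset.prod_le_one (fun i _ => norm_nonneg _) (fun i _ => hb i)
  have hdisj : Disjoint (s \ Finset.range n) (Finset.range n) := Finset.sdiff_disjoint
  have htail : ∑ i ∈ s \ Finset.range n, ‖f i - 1‖
      ≤ C - ∑ i ∈ Finset.range n, ‖f i - 1‖ := by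
    have hle : ∑ i ∈ (s \ Finset.range n) ∪ Finset.range n, ‖f i - 1‖ ≤ C :=
      Summable.sum_le_tsum _ (fun i _ => norm_nonneg _) hs
    rw [Finset.sum_union hdisj] at hle
    linarith
  have hd1 : dist (∏ i ∈ s, f i) (∏ i ∈ Finset.range n, f i) < ε / 2 := by
    rw [dist_eq_norm, ← hsplit]
    have : (∏ i ∈ s \ Finset.range n, f i) * ∏ i ∈ Finset.range n, f i
        - ∏ i ∈ Finset.range n, f i
        = (∏ i ∈ Finset.range n, f i) * ((∏ i ∈ s \ Finset.range n, f i) - 1) := by ring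
    rw [this, norm_mul]
    calc ‖∏ i ∈ Finset.range n, f i‖ * ‖(∏ i ∈ s \ Finset.range n, f i) - 1‖
        ≤ 1 * ∑ i ∈ s \ Finset.range n, ‖f i - 1‖ :=
          mul_le_mul hPn_norm (norm_prod_sub_one_le hb) (norm_nonneg _) zero_le_one
      _ = ∑ i ∈ s \ Finset.range n, ‖f i - 1‖ := one_mul _
      _ ≤ C - ∑ i ∈ Finset.range n, ‖f i - 1‖ := htail
      _ < ε / 2 := hn1
  calc dist (∏ i ∈ s, f i) L
      ≤ dist (∏ i ∈ s, f i) (∏ i ∈ Finset.range n, f i)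
        + dist (∏ i ∈ Finset.range n, f i) L := dist_triangle _ _ _
    _ < ε / 2 + ε / 2 := add_lt_add hd1 hn2
    _ = ε := by ring

section MoreHelpers

variable {Ω : Type*}

/-- batch index of a coordinate. -/
def eggIdx : (ℕ ⊕ (ℕ × ℕ) ⊕ (ℕ × ℕ)) → ℕ
  | Sum.inl i => i
  | Sum.inr (Sum.inl p) => p.1
  | Sum.inr (Sum.inr p) => p.1

/-- the number of live bees from batch `i+1`. -/
def batchN (𝒮 : ℕ → ℕ) (ζ : ℕ → Ω → ℕ) (I η : ℕ → ℕ → Ω → ℕ) (i : ℕ) (ω : Ω) : ℕ :=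
  ∑ j ∈ Finset.Icc 1 (batchXi ζ I (i + 1) ω),
    if 𝒮 (i + 1) ≤ η (i + 1) j ω + 1 then 1 else 0

lemma statMdet_eq_tsum (𝒮 : ℕ → ℕ) (ζ : ℕ → Ω → ℕ) (I η : ℕ → ℕ → Ω → ℕ) (ω : Ω) :
    statMdet 𝒮 ζ I η ω = ∑' i, batchN 𝒮 ζ I η i ω := rfl

lemma batchN_measurable {m : MeasurableSpace Ω} (𝒮 : ℕ → ℕ) {ζ : ℕ → Ω → ℕ}
    {I η : ℕ → ℕ → Ω → ℕ} (i : ℕ)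
    (hζ : Measurable[m] (ζ (i + 1))) (hI : ∀ j, Measurable[m] (I (i + 1) j))
    (hη : ∀ j, Measurable[m] (η (i + 1) j)) :
    Measurable[m] (batchN 𝒮 ζ I η i) := by
  apply measurable_sum_Icc' (measurable_sum_Icc' hζ hI)
  intro j
  exact (measurable_from_top (f := fun k => if 𝒮 (i + 1) ≤ k + 1 then (1 : ℕ) else 0)).comp (hη j)

lemma meas_sup_coord [MeasurableSpace Ω] {ι' : Type*} (X : ι' → Ω → ℕ) (S : Set ι') {x : ι'}
    (hx : x ∈ S) :
    Measurable[⨆ y ∈ S, MeasurableSpace.comap (X y) inferInstance] (X x) := by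
  rw [measurable_iff_comap_le]
  exact le_biSup (fun y => MeasurableSpace.comap (X y) inferInstance) hx

lemma convex_norm_le {a : ℝ} (h0 : 0 ≤ a) (h1 : a ≤ 1) {w : ℂ} (hw : ‖w‖ ≤ 1) :
    ‖(a : ℂ) * (w - 1) + 1‖ ≤ 1 := by
  have heq : (a : ℂ) * (w - 1) + 1 = (a : ℂ) * w + ((1 - a : ℝ) : ℂ) := by push_cast; ring
  rw [heq]
  calc ‖(a : ℂ) * w + ((1 - a : ℝ) : ℂ)‖ ≤ ‖(a : ℂ) * w‖ + ‖((1 - a : ℝ) : ℂ)‖ := norm_add_le _ _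
    _ = a * ‖w‖ + |1 - a| := by
        rw [norm_mul, Complex.norm_real, Complex.norm_real, Real.norm_eq_abs, Real.norm_eq_abs,
          abs_of_nonneg h0]
    _ ≤ a * 1 + (1 - a) := by
        have : |1 - a| = 1 - a := abs_of_nonneg (by linarith)
        rw [this]
        have := mul_le_mul_of_nonneg_left hw h0
        linarith
    _ = 1 := by ring

lemma integral_ite_eq_measure [MeasurableSpace Ω] {μ : MeasureTheory.Measure Ω}
    {P : Ω → Prop} [DecidablePred P] (hA : MeasurableSet {ω | P ω}) :
    ∫ ω, (if P ω then (1 : ℂ) else 0) ∂μ = (μ {ω | P ω}).toReal := by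
  have : (fun ω => if P ω then (1 : ℂ) else 0) = Set.indicator {ω | P ω} (fun _ => (1 : ℂ)) := by
    ext ω
    by_cases h : P ω <;> simp [Set.indicator, h]
  rw [this, MeasureTheory.integral_indicator_const (1 : ℂ) hA]
  simp
  rfl

lemma norm_exp_I_mul_nat (u : ℝ) (k : ℕ) : ‖Complex.exp (Complex.I * u * (k : ℂ))‖ = 1 := by
  rw [Complex.norm_exp]
  have : (Complex.I * u * (k : ℂ)).re = 0 := by simp [Complex.mul_re, Complex.mul_im]
  rw [this, Real.exp_zero]

lemma tsum_measure_preimage_singleton_nat [MeasurableSpace Ω]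
    (μ : MeasureTheory.Measure Ω) [MeasureTheory.IsProbabilityMeasure μ]
    {X : Ω → ℕ} (hX : Measurable X) : ∑' n, μ (X ⁻¹' {n}) = 1 := by
  have hdisj : Pairwise (Function.onFun Disjoint fun n => X ⁻¹' {n}) := fun a b hab =>
    Set.disjoint_left.2 fun ω ha hb => hab (by
      simp only [Set.mem_preimage, Set.mem_singleton_iff] at ha hb
      rw [← ha, ← hb])
  rw [← MeasureTheory.measure_iUnion hdisj (fun n => hX (measurableSet_singleton n))]
  have : (⋃ n, X ⁻¹' {n}) = Set.univ := by
    ext ω; simp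
  rw [this, MeasureTheory.measure_univ]

end MoreHelpers

section Fiberwise

variable {Ω : Type*} [MeasurableSpace Ω] {μ : Measure Ω} [IsProbabilityMeasure μ]

lemma nnnorm_le_one_ennreal {x : ℂ} (h : ‖x‖ ≤ 1) : (‖x‖₊ : ENNReal) ≤ 1 := by
  rw [← ENNReal.coe_one, ENNReal.coe_le_coe, ← NNReal.coe_le_coe]
  simpa using h

lemma integral_fiberwise {ξ : Ω → ℕ} (hξ : Measurable ξ)
    {G : ℕ → Ω → ℂ} (hGm : ∀ m, Measurable (G m)) (hGb : ∀ m ω, ‖G m ω‖ ≤ 1) :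
    ∫ ω, G (ξ ω) ω ∂μ = ∑' m, ∫ ω, (if ξ ω = m then (1 : ℂ) else 0) * G m ω ∂μ := by
  have hpt : ∀ ω, G (ξ ω) ω = ∑' m, (if ξ ω = m then (1 : ℂ) else 0) * G m ω := by
    intro ω
    rw [tsum_eq_single (ξ ω) (fun m hm => by rw [if_neg (fun h => hm h.symm), zero_mul])]
    rw [if_pos rfl, one_mul]
  have hΦm : ∀ m, Measurable (fun ω => (if ξ ω = m then (1 : ℂ) else 0) * G m ω) := by
    intro m
    exact ((measurable_from_top (f := fun k => if k = m then (1 : ℂ) else 0)).comp hξ).mul (hGm m)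
  have hbound : ∀ m, ∫⁻ ω, ‖(if ξ ω = m then (1 : ℂ) else 0) * G m ω‖₊ ∂μ ≤ μ (ξ ⁻¹' {m}) := by
    intro m
    rw [← lintegral_indicator_one (hξ (measurableSet_singleton m))]
    apply lintegral_mono
    intro ω
    by_cases h : ξ ω = m
    · simp only [h, if_true, one_mul, Set.indicator_of_mem (by simp [h] :
        ω ∈ ξ ⁻¹' {m}), Pi.one_apply]
      exact nnnorm_le_one_ennreal (hGb m ω)
    · simp only [h, if_false, zero_mul]
      simp
  have hsum : ∑' m, ∫⁻ ω, ‖(if ξ ω = m then (1 : ℂ) else 0) * G m ω‖₊ ∂μ ≠ ⊤ := by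
    refine ne_top_of_le_ne_top ?_ (ENNReal.tsum_le_tsum hbound)
    rw [tsum_measure_preimage_singleton_nat μ hξ]
    exact ENNReal.one_ne_top
  rw [integral_congr_ae (ae_of_all _ hpt), integral_tsum (fun m => (hΦm m).aestronglyMeasurable) hsum]

end Fiberwise

section BatchLemma

lemma ident_integral_comp {Ω : Type*} [MeasurableSpace Ω] {μ : Measure Ω}
    {X Y : Ω → ℕ} (h : IdentDistrib X Y μ μ) (f : ℕ → ℂ) :
    ∫ ω, f (X ω) ∂μ = ∫ ω, f (Y ω) ∂μ :=
  (h.comp (measurable_from_top (f := f))).integral_eq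

lemma norm_exp_Iu (u : ℝ) : ‖Complex.exp (Complex.I * (u : ℂ))‖ = 1 := by
  rw [Complex.norm_exp]
  have : (Complex.I * (u : ℂ)).re = 0 := by simp
  rw [this, Real.exp_zero]

lemma batch_charFun {Ω : Type*} [MeasurableSpace Ω] (μ : Measure Ω) [IsProbabilityMeasure μ]
    (𝒮 : ℕ → ℕ) (ζ : ℕ → Ω → ℕ) (I η : ℕ → ℕ → Ω → ℕ) (r : ℝ)
    (hζm : ∀ i, Measurable (ζ i)) (hIm : ∀ i j, Measurable (I i j))
    (hηm : ∀ i j, Measurable (η i j))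
    (hI01 : ∀ i j ω, I i j ω ≤ 1) (hr0 : 0 ≤ r) (hr1 : r ≤ 1)
    (hIr : ∀ i j, μ {ω | I i j ω = 1} = ENNReal.ofReal r)
    (hindep : iIndepFun (eggVars ζ I η) μ)
    (hζid : ∀ i, IdentDistrib (ζ i) (ζ 1) μ μ)
    (hηid : ∀ i j, IdentDistrib (η i j) (η 1 1) μ μ)
    (i : ℕ) (u : ℝ) :
    ∫ ω, Complex.exp (Complex.I * (u : ℂ) * (batchN 𝒮 ζ I η i ω : ℂ)) ∂μ
      = ∫ ω, ((r : ℂ) * (Complex.exp (Complex.I * (u : ℂ)) - 1)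
          * (1 - (lifeCDF μ η ((𝒮 (i + 1) : ℤ) - 2) : ℂ)) + 1) ^ (ζ 1 ω) ∂μ := by
  classical
  set X := eggVars ζ I η with hX
  have hXm : ∀ x, Measurable (X x) := by
    rintro (a | ⟨a, b⟩ | ⟨a, b⟩)
    · exact hζm a
    · exact hIm a b
    · exact hηm a b
  set e1 : ℂ := Complex.exp (Complex.I * (u : ℂ)) with he1
  have he1n : ‖e1‖ = 1 := norm_exp_Iu u
  set A : Set Ω := {ω | 𝒮 (i + 1) ≤ η 1 1 ω + 1} with hA
  have hAm : MeasurableSet A := by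
    have : A = (η 1 1) ⁻¹' {k | 𝒮 (i + 1) ≤ k + 1} := rfl
    rw [this]
    exact hηm 1 1 trivial
  set p : ℝ := (μ A).toReal with hp
  have hp0 : 0 ≤ p := ENNReal.toReal_nonneg
  have hp1 : p ≤ 1 := by
    rw [hp]
    exact ENNReal.toReal_le_of_le_ofReal zero_le_one (by simpa using prob_le_one)
  set c : ℂ := (p : ℂ) * (e1 - 1) + 1 with hc
  have hc1 : ‖c‖ ≤ 1 := convex_norm_le hp0 hp1 he1n.le
  set g : ℕ → ℂ := fun k =>
    Complex.exp (Complex.I * (u : ℂ) * (((if 𝒮 (i + 1) ≤ k + 1 then 1 else 0 : ℕ)) : ℂ)) with hg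
  have hg_eq : ∀ k, g k = if 𝒮 (i + 1) ≤ k + 1 then e1 else 1 := by
    intro k
    by_cases h : 𝒮 (i + 1) ≤ k + 1 <;> simp [hg, h, he1]
  have hg1 : ∀ k, ‖g k‖ ≤ 1 := by
    intro k
    rw [hg_eq k]
    split
    · exact he1n.le
    · simp
  -- the expectation of g at a lifetime variable
  have hgint : ∀ a j, ∫ ω, g (η a j ω) ∂μ = c := by
    intro a j
    rw [ident_integral_comp (hηid a j) g]
    have hpt : (fun ω => g (η 1 1 ω))
        = fun ω => 1 + (e1 - 1) * (if 𝒮 (i + 1) ≤ η 1 1 ω + 1 then (1 : ℂ) else 0) := by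
      funext ω
      rw [hg_eq]
      by_cases h : 𝒮 (i + 1) ≤ η 1 1 ω + 1 <;> simp [h]
    rw [hpt]
    have hind : Integrable (fun ω => (if 𝒮 (i + 1) ≤ η 1 1 ω + 1 then (1 : ℂ) else 0)) μ := by
      refine integrable_of_bdd' ?_ (C := 1) ?_
      · exact (measurable_from_top (f := fun k => if 𝒮 (i + 1) ≤ k + 1 then (1 : ℂ) else 0)).comp
          (hηm 1 1)
      · intro ω; split <;> simp
    rw [integral_add (integrable_const 1) (hind.const_mul _), integral_const]
    have hsmul := integral_smul (μ := μ) (c := e1 - 1)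
      (f := fun ω => (if 𝒮 (i + 1) ≤ η 1 1 ω + 1 then (1 : ℂ) else 0))
    simp only [smul_eq_mul] at hsmul
    rw [hsmul, integral_ite_eq_measure hAm]
    simp only [probReal_univ, one_smul]
    rw [hc, hp]
    ring
  set ξ : Ω → ℕ := batchXi ζ I (i + 1) with hξ
  have hξm : Measurable ξ :=
    measurable_sum_Icc' (hζm (i + 1)) (fun j => hIm (i + 1) j)
  -- independence of the ζ/I block and the η block
  set T : Set (ℕ ⊕ (ℕ × ℕ) ⊕ (ℕ × ℕ)) := {x | ∃ q, x = Sum.inr (Sum.inr q)} with hT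
  have h_le : ∀ x, MeasurableSpace.comap (X x) inferInstance ≤ ‹MeasurableSpace Ω› :=
    fun x => measurable_iff_comap_le.1 (hXm x)
  have hiI : iIndep (fun x => MeasurableSpace.comap (X x) inferInstance) μ :=
    (iIndepFun_iff_iIndep _ _ _).1 hindep
  have hIndepST : Indep (⨆ x ∈ Tᶜ, MeasurableSpace.comap (X x) inferInstance)
      (⨆ x ∈ T, MeasurableSpace.comap (X x) inferInstance) μ :=
    indep_iSup_of_disjoint h_le hiI disjoint_compl_left
  have hmS_le : (⨆ x ∈ Tᶜ, MeasurableSpace.comap (X x) inferInstance) ≤ ‹MeasurableSpace Ω› :=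
    iSup₂_le fun x _ => h_le x
  have hmT_le : (⨆ x ∈ T, MeasurableSpace.comap (X x) inferInstance) ≤ ‹MeasurableSpace Ω› :=
    iSup₂_le fun x _ => h_le x
  have hζS : Measurable[⨆ x ∈ Tᶜ, MeasurableSpace.comap (X x) inferInstance] (ζ (i + 1)) :=
    meas_sup_coord X Tᶜ (x := Sum.inl (i + 1)) (by rintro ⟨q, hq⟩; simp at hq)
  have hIS : ∀ k, Measurable[⨆ x ∈ Tᶜ, MeasurableSpace.comap (X x) inferInstance]
      (I (i + 1) k) :=
    fun k => meas_sup_coord X Tᶜ (x := Sum.inr (Sum.inl (i + 1, k)))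
      (by rintro ⟨q, hq⟩; simp at hq)
  have hηT : ∀ a j, Measurable[⨆ x ∈ T, MeasurableSpace.comap (X x) inferInstance] (η a j) :=
    fun a j => meas_sup_coord X T (x := Sum.inr (Sum.inr (a, j))) ⟨(a, j), rfl⟩
  have hξS : Measurable[⨆ x ∈ Tᶜ, MeasurableSpace.comap (X x) inferInstance] ξ :=
    measurable_sum_Icc' hζS hIS
  -- Step A: integral over one batch equals ∫ c ^ ξ
  have hGb : ∀ m ω, ‖∏ j ∈ Finset.Icc 1 m, g (η (i + 1) j ω)‖ ≤ 1 := by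
    intro m ω
    calc ‖∏ j ∈ Finset.Icc 1 m, g (η (i + 1) j ω)‖
        ≤ ∏ j ∈ Finset.Icc 1 m, ‖g (η (i + 1) j ω)‖ := norm_prod_le _ _
      _ ≤ 1 := Finset.prod_le_one (fun _ _ => norm_nonneg _) (fun j _ => hg1 _)
  have hGm : ∀ m, Measurable (fun ω => ∏ j ∈ Finset.Icc 1 m, g (η (i + 1) j ω)) := by
    intro m
    exact Finset.measurable_prod _ fun j _ =>
      (measurable_from_top (f := g)).comp (hηm (i + 1) j)
  have hstepA : ∫ ω, Complex.exp (Complex.I * (u : ℂ) * (batchN 𝒮 ζ I η i ω : ℂ)) ∂μ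
      = ∑' m, ∫ ω, (if ξ ω = m then (1 : ℂ) else 0)
          * ∏ j ∈ Finset.Icc 1 m, g (η (i + 1) j ω) ∂μ := by
    have hpt : ∀ ω, Complex.exp (Complex.I * (u : ℂ) * (batchN 𝒮 ζ I η i ω : ℂ))
        = (fun m ω' => ∏ j ∈ Finset.Icc 1 m, g (η (i + 1) j ω')) (ξ ω) ω := by
      intro ω
      show Complex.exp (Complex.I * (u : ℂ)
          * ((∑ j ∈ Finset.Icc 1 (ξ ω), if 𝒮 (i + 1) ≤ η (i + 1) j ω + 1 then 1 else 0 : ℕ) : ℂ))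
        = ∏ j ∈ Finset.Icc 1 (ξ ω), g (η (i + 1) j ω)
      rw [Nat.cast_sum, Finset.mul_sum, Complex.exp_sum]
    rw [integral_congr_ae (ae_of_all _ hpt)]
    exact integral_fiberwise hξm hGm hGb
  have htermA : ∀ m, ∫ ω, (if ξ ω = m then (1 : ℂ) else 0)
      * ∏ j ∈ Finset.Icc 1 m, g (η (i + 1) j ω) ∂μ
      = (μ (ξ ⁻¹' {m})).toReal • c ^ m := by
    intro m
    have hFmS : Measurable[⨆ x ∈ Tᶜ, MeasurableSpace.comap (X x) inferInstance]
        (fun ω => (if ξ ω = m then (1 : ℂ) else 0)) :=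
      (measurable_from_top (f := fun k => if k = m then (1 : ℂ) else 0)).comp hξS
    have hGmT : Measurable[⨆ x ∈ T, MeasurableSpace.comap (X x) inferInstance]
        (fun ω => ∏ j ∈ Finset.Icc 1 m, g (η (i + 1) j ω)) :=
      Finset.measurable_prod _ fun j _ =>
        (measurable_from_top (f := g)).comp (hηT (i + 1) j)
    have hIF : IndepFun (fun ω => (if ξ ω = m then (1 : ℂ) else 0))
        (fun ω => ∏ j ∈ Finset.Icc 1 m, g (η (i + 1) j ω)) μ := by
      rw [IndepFun_iff_Indep]
      exact indep_of_indep_of_le_left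
        (indep_of_indep_of_le_right hIndepST (measurable_iff_comap_le.1 hGmT))
        (measurable_iff_comap_le.1 hFmS)
    have hFint : Integrable (fun ω => (if ξ ω = m then (1 : ℂ) else 0)) μ := by
      refine integrable_of_bdd' (hFmS.mono hmS_le le_rfl) (C := 1) ?_
      intro ω; split <;> simp
    have hGint : Integrable (fun ω => ∏ j ∈ Finset.Icc 1 m, g (η (i + 1) j ω)) μ :=
      integrable_of_bdd' (hGmT.mono hmT_le le_rfl) (hGb m)
    rw [indepFun_integral_mul_complex hIF hFint hGint]
    have h1 : ∫ ω, (if ξ ω = m then (1 : ℂ) else 0) ∂μ = ((μ (ξ ⁻¹' {m})).toReal : ℂ) := by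
      have := integral_ite_eq_measure (μ := μ) (P := fun ω => ξ ω = m)
        (hξm (measurableSet_singleton m))
      exact this
    have h2 : ∫ ω, ∏ j ∈ Finset.Icc 1 m, g (η (i + 1) j ω) ∂μ = c ^ m := by
      have himg : ∀ ω, ∏ j ∈ Finset.Icc 1 m, g (η (i + 1) j ω)
          = ∏ x ∈ (Finset.Icc 1 m).image
              (fun j => (Sum.inr (Sum.inr (i + 1, j)) : ℕ ⊕ (ℕ × ℕ) ⊕ (ℕ × ℕ))),
              g (X x ω) := by
        intro ω
        rw [Finset.prod_image (fun x _ y _ h => by simpa using h)]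
        rfl
      simp_rw [himg]
      rw [integral_finset_prod_comp hXm hindep (fun _ => g) (fun _ k => hg1 k)]
      rw [Finset.prod_image (fun x _ y _ h => by simpa using h)]
      have : ∀ j, ∫ ω, g (X (Sum.inr (Sum.inr (i + 1, j))) ω) ∂μ = c := fun j => hgint (i + 1) j
      rw [Finset.prod_congr rfl (fun j _ => this j), Finset.prod_const, Nat.card_Icc]
      norm_num
    rw [h1, h2, Complex.real_smul]
  have hstepAB : ∫ ω, Complex.exp (Complex.I * (u : ℂ) * (batchN 𝒮 ζ I η i ω : ℂ)) ∂μ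
      = ∫ ω, c ^ (ξ ω) ∂μ := by
    rw [hstepA, tsum_congr htermA,
      ← integral_comp_nat hξm (fun m => c ^ m)
        (fun m => by simpa using pow_le_one₀ (norm_nonneg c) hc1 (n := m))]

  -- Step C: expectation of c ^ ξ
  set w : ℂ := (r : ℂ) * (c - 1) + 1 with hw
  have hw1 : ‖w‖ ≤ 1 := convex_norm_le hr0 hr1 hc1
  have hCint : ∀ a k, ∫ ω, c ^ (I a k ω) ∂μ = w := by
    intro a k
    have hpt : (fun ω => c ^ (I a k ω))
        = fun ω => 1 + (c - 1) * (if I a k ω = 1 then (1 : ℂ) else 0) := by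
      funext ω
      rcases Nat.le_one_iff_eq_zero_or_eq_one.1 (hI01 a k ω) with h | h <;> rw [h]
      · simp
      · rw [pow_one]
        norm_num
    have hind : Integrable (fun ω => (if I a k ω = 1 then (1 : ℂ) else 0)) μ := by
      refine integrable_of_bdd' ?_ (C := 1) ?_
      · exact (measurable_from_top (f := fun v => if v = 1 then (1 : ℂ) else 0)).comp (hIm a k)
      · intro ω; split <;> simp
    rw [hpt, integral_add (integrable_const 1) (hind.const_mul _), integral_const]
    have hsmul := integral_smul (μ := μ) (c := c - 1)
      (f := fun ω => (if I a k ω = 1 then (1 : ℂ) else 0))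
    simp only [smul_eq_mul] at hsmul
    have hite := integral_ite_eq_measure (μ := μ) (P := fun ω => I a k ω = 1)
      ((hIm a k) (measurableSet_singleton 1))
    rw [hsmul, hite, hIr a k, ENNReal.toReal_ofReal hr0]
    simp only [probReal_univ, one_smul]
    rw [hw]
    ring
  have hGb' : ∀ n ω, ‖∏ k ∈ Finset.Icc 1 n, c ^ (I (i + 1) k ω)‖ ≤ 1 := by
    intro n ω
    calc ‖∏ k ∈ Finset.Icc 1 n, c ^ (I (i + 1) k ω)‖
        ≤ ∏ k ∈ Finset.Icc 1 n, ‖c ^ (I (i + 1) k ω)‖ := norm_prod_le _ _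
      _ ≤ 1 := Finset.prod_le_one (fun _ _ => norm_nonneg _)
          (fun k _ => by simpa using pow_le_one₀ (norm_nonneg c) hc1)
  have hGm' : ∀ n, Measurable (fun ω => ∏ k ∈ Finset.Icc 1 n, c ^ (I (i + 1) k ω)) := by
    intro n
    exact Finset.measurable_prod _ fun k _ =>
      (measurable_from_top (f := fun v => c ^ v)).comp (hIm (i + 1) k)
  have hstepC : ∫ ω, c ^ (ξ ω) ∂μ
      = ∑' n, ∫ ω, (if ζ (i + 1) ω = n then (1 : ℂ) else 0)
          * ∏ k ∈ Finset.Icc 1 n, c ^ (I (i + 1) k ω) ∂μ := by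
    have hpt : ∀ ω, c ^ (ξ ω)
        = (fun n ω' => ∏ k ∈ Finset.Icc 1 n, c ^ (I (i + 1) k ω')) (ζ (i + 1) ω) ω := by
      intro ω
      show c ^ (∑ k ∈ Finset.Icc 1 (ζ (i + 1) ω), I (i + 1) k ω)
        = ∏ k ∈ Finset.Icc 1 (ζ (i + 1) ω), c ^ (I (i + 1) k ω)
      rw [Finset.prod_pow_eq_pow_sum]
    rw [integral_congr_ae (ae_of_all _ hpt)]
    exact integral_fiberwise (hζm (i + 1)) hGm' hGb'
  have htermC : ∀ n, ∫ ω, (if ζ (i + 1) ω = n then (1 : ℂ) else 0)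
      * ∏ k ∈ Finset.Icc 1 n, c ^ (I (i + 1) k ω) ∂μ
      = (μ ((ζ (i + 1)) ⁻¹' {n})).toReal • w ^ n := by
    intro n
    set φ : (ℕ ⊕ (ℕ × ℕ) ⊕ (ℕ × ℕ)) → ℕ → ℂ :=
      Sum.elim (fun _ => fun v => if v = n then (1 : ℂ) else 0)
        (Sum.elim (fun _ => fun v => c ^ v) (fun _ => fun _ => 1)) with hφ
    have hφb : ∀ x v, ‖φ x v‖ ≤ 1 := by
      rintro (a | ⟨a, b⟩ | ⟨a, b⟩) v
      · show ‖if v = n then (1 : ℂ) else 0‖ ≤ 1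
        split <;> simp
      · show ‖c ^ v‖ ≤ 1
        simpa using pow_le_one₀ (norm_nonneg c) hc1
      · show ‖(1 : ℂ)‖ ≤ 1
        simp
    set t : Finset (ℕ ⊕ (ℕ × ℕ) ⊕ (ℕ × ℕ)) :=
      insert (Sum.inl (i + 1)) ((Finset.Icc 1 n).image
        (fun k => (Sum.inr (Sum.inl (i + 1, k)) : ℕ ⊕ (ℕ × ℕ) ⊕ (ℕ × ℕ)))) with ht
    have hnotmem : (Sum.inl (i + 1) : ℕ ⊕ (ℕ × ℕ) ⊕ (ℕ × ℕ)) ∉ (Finset.Icc 1 n).image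
        (fun k => (Sum.inr (Sum.inl (i + 1, k)) : ℕ ⊕ (ℕ × ℕ) ⊕ (ℕ × ℕ))) := by
      simp
    have hinj : ∀ x ∈ Finset.Icc 1 n, ∀ y ∈ Finset.Icc 1 n,
        (Sum.inr (Sum.inl (i + 1, x)) : ℕ ⊕ (ℕ × ℕ) ⊕ (ℕ × ℕ))
          = Sum.inr (Sum.inl (i + 1, y)) → x = y := fun x _ y _ h => by simpa using h
    have hpt : ∀ ω, (if ζ (i + 1) ω = n then (1 : ℂ) else 0)
        * ∏ k ∈ Finset.Icc 1 n, c ^ (I (i + 1) k ω) = ∏ x ∈ t, φ x (X x ω) := by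
      intro ω
      rw [ht, Finset.prod_insert hnotmem, Finset.prod_image hinj]
      rfl
    simp_rw [hpt]
    rw [integral_finset_prod_comp hXm hindep φ hφb, ht, Finset.prod_insert hnotmem,
      Finset.prod_image hinj]
    have h1 : ∫ ω, φ (Sum.inl (i + 1)) (X (Sum.inl (i + 1)) ω) ∂μ
        = ((μ ((ζ (i + 1)) ⁻¹' {n})).toReal : ℂ) := by
      have := integral_ite_eq_measure (μ := μ) (P := fun ω => ζ (i + 1) ω = n)
        ((hζm (i + 1)) (measurableSet_singleton n))
      exact this
    have h2 : ∀ k, ∫ ω, φ (Sum.inr (Sum.inl (i + 1, k))) (X (Sum.inr (Sum.inl (i + 1, k))) ω) ∂μ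
        = w := fun k => hCint (i + 1) k
    rw [h1, Finset.prod_congr rfl (fun k _ => h2 k), Finset.prod_const, Nat.card_Icc,
      Complex.real_smul]
    norm_num
  have hstepCD : ∫ ω, c ^ (ξ ω) ∂μ = ∫ ω, w ^ (ζ 1 ω) ∂μ := by
    rw [hstepC, tsum_congr htermC,
      ← integral_comp_nat (hζm (i + 1)) (fun n => w ^ n)
        (fun n => by simpa using pow_le_one₀ (norm_nonneg w) hw1 (n := n)),
      ident_integral_comp (hζid (i + 1)) (fun n => w ^ n)]
  -- assemble and identify the constants
  have hpreal : lifeCDF μ η ((𝒮 (i + 1) : ℤ) - 2) = 1 - p := by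
    have hset : {ω | (η 1 1 ω : ℤ) ≤ (𝒮 (i + 1) : ℤ) - 2} = Aᶜ := by
      ext ω
      simp only [hA, Set.mem_compl_iff, Set.mem_setOf_eq, not_le]
      omega
    rw [lifeCDF, hset, prob_compl_eq_one_sub hAm,
      ENNReal.toReal_sub_of_le prob_le_one ENNReal.one_ne_top]
    simp [hp]
  have hwbase : w = (r : ℂ) * (e1 - 1) * (1 - (lifeCDF μ η ((𝒮 (i + 1) : ℤ) - 2) : ℂ)) + 1 := by
    rw [hw, hc, hpreal]
    push_cast
    ring
  rw [hstepAB, hstepCD, hwbase]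

end BatchLemma

section Tails

variable {Ω : Type*} [MeasurableSpace Ω] {μ : Measure Ω} [IsProbabilityMeasure μ]

lemma tsum_if_lt_nat (k : ℕ) : ∑' i : ℕ, (if i < k then (1 : ENNReal) else 0) = k := by
  rw [tsum_eq_sum (s := Finset.range k) (fun i hi => by
    rw [if_neg (by simpa using hi)])]
  rw [Finset.sum_congr rfl (fun i hi => if_pos (Finset.mem_range.1 hi))]
  simp

lemma tsum_if_le_nat (k : ℕ) :
    ∑' i : ℕ, (if i ≤ k then ((i : ENNReal) + 1) else 0) ≤ ((k : ENNReal) + 1) * (k + 1) := by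
  rw [tsum_eq_sum (s := Finset.range (k + 1)) (fun i hi => by
    rw [if_neg (by simpa [Nat.lt_succ_iff] using hi)])]
  calc ∑ i ∈ Finset.range (k + 1), (if i ≤ k then ((i : ENNReal) + 1) else 0)
      ≤ ∑ _i ∈ Finset.range (k + 1), ((k : ENNReal) + 1) := by
        refine Finset.sum_le_sum fun i hi => ?_
        split
        · have : (i : ENNReal) ≤ k := by
            exact_mod_cast Nat.cast_le.2 (Finset.mem_range.1 hi |> Nat.lt_succ_iff.1)
          exact add_le_add this le_rfl
        · exact zero_le
    _ = ((k : ENNReal) + 1) * (k + 1) := by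
        rw [Finset.sum_const, Finset.card_range, nsmul_eq_mul]
        push_cast
        ring

lemma meas_ite_le (Y : Ω → ℕ) (hY : Measurable Y) (i : ℕ) :
    ((i : ENNReal) + 1) * μ {ω | i ≤ Y ω}
      = ∫⁻ ω, (if i ≤ Y ω then ((i : ENNReal) + 1) else 0) ∂μ := by
  have hset : MeasurableSet {ω | i ≤ Y ω} := hY (trivial : MeasurableSet {k | i ≤ k})
  rw [← lintegral_indicator_const hset ((i : ENNReal) + 1)]
  congr 1
  funext ω
  by_cases h : i ≤ Y ω
  · rw [if_pos h, Set.indicator_of_mem (show ω ∈ {ω | i ≤ Y ω} from h)]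
  · rw [if_neg h, Set.indicator_of_notMem (show ω ∉ {ω | i ≤ Y ω} from h)]

lemma meas_ite_lt (Y : Ω → ℕ) (hY : Measurable Y) (i : ℕ) :
    μ {ω | i < Y ω} = ∫⁻ ω, (if i < Y ω then (1 : ENNReal) else 0) ∂μ := by
  have hset : MeasurableSet {ω | i < Y ω} := hY (trivial : MeasurableSet {k | i < k})
  rw [← lintegral_indicator_one hset]
  congr 1
  funext ω
  by_cases h : i < Y ω
  · rw [if_pos h, Set.indicator_of_mem (show ω ∈ {ω | i < Y ω} from h)]; rfl
  · rw [if_neg h, Set.indicator_of_notMem (show ω ∉ {ω | i < Y ω} from h)]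

lemma tsum_meas_lt_le (Y : Ω → ℕ) (hY : Measurable Y) :
    ∑' i : ℕ, μ {ω | i < Y ω} ≤ ∫⁻ ω, (Y ω : ENNReal) ∂μ := by
  have h1 : ∀ i : ℕ, μ {ω | i < Y ω} = ∫⁻ ω, (if i < Y ω then (1 : ENNReal) else 0) ∂μ :=
    meas_ite_lt Y hY
  rw [tsum_congr h1, ← lintegral_tsum (fun i => (Measurable.aemeasurable (by
    exact (measurable_from_top (f := fun k => if i < k then (1 : ENNReal) else 0)).comp hY)))]
  refine lintegral_mono fun ω => ?_
  rw [tsum_if_lt_nat (Y ω)]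

lemma tsum_meas_le_le (Y : Ω → ℕ) (hY : Measurable Y) :
    ∑' i : ℕ, ((i : ENNReal) + 1) * μ {ω | i ≤ Y ω}
      ≤ ∫⁻ ω, ((Y ω : ENNReal) + 1) * ((Y ω : ENNReal) + 1) ∂μ := by
  rw [tsum_congr (meas_ite_le Y hY), ← lintegral_tsum (fun i => (Measurable.aemeasurable (by
    exact (measurable_from_top
      (f := fun k => if i ≤ k then ((i : ENNReal) + 1) else 0)).comp hY)))]
  exact lintegral_mono fun ω => tsum_if_le_nat (Y ω)

lemma lintegral_nat_lt_top_of_integrable {Y : Ω → ℕ}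
    (h : Integrable (fun ω => (Y ω : ℝ)) μ) : ∫⁻ ω, (Y ω : ENNReal) ∂μ ≠ ⊤ := by
  have h2 := h.2
  rw [hasFiniteIntegral_def] at h2
  have : (fun ω => (Y ω : ENNReal)) = fun ω => (‖(Y ω : ℝ)‖₊ : ENNReal) := by
    funext ω
    simp
  rw [this]
  exact h2.ne

lemma lintegral_nat_sq_lt_top_of_integrable {Y : Ω → ℕ}
    (h : Integrable (fun ω => (Y ω : ℝ) ^ 2) μ) :
    ∫⁻ ω, (Y ω : ENNReal) * (Y ω : ENNReal) ∂μ ≠ ⊤ := by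
  have h2 := h.2
  rw [hasFiniteIntegral_def] at h2
  have : (fun ω => (Y ω : ENNReal) * (Y ω : ENNReal))
      = fun ω => (‖(Y ω : ℝ) ^ 2‖₊ : ENNReal) := by
    funext ω
    rw [show ((Y ω : ℝ) ^ 2) = ((Y ω * Y ω : ℕ) : ℝ) by push_cast; ring]
    simp [Nat.cast_mul]
  rw [this]
  exact h2.ne

lemma eta_sq_tail_lt_top {Y : Ω → ℕ} (hY : Measurable Y)
    (h : Integrable (fun ω => (Y ω : ℝ) ^ 2) μ) :
    ∑' i : ℕ, ((i : ENNReal) + 1) * μ {ω | i ≤ Y ω} ≠ ⊤ := by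
  have hmeas : Measurable (fun ω => (Y ω : ENNReal) * (Y ω : ENNReal)) :=
    (measurable_from_top (f := fun k : ℕ => (k : ENNReal) * (k : ENNReal))).comp hY
  have hb : ∀ ω, ((Y ω : ENNReal) + 1) * ((Y ω : ENNReal) + 1)
      ≤ 2 * ((Y ω : ENNReal) * (Y ω : ENNReal)) + 2 := by
    intro ω
    have hnat : (Y ω + 1) * (Y ω + 1) ≤ 2 * (Y ω * Y ω) + 2 := by nlinarith [Y ω * Y ω]
    calc ((Y ω : ENNReal) + 1) * ((Y ω : ENNReal) + 1)
        = (((Y ω + 1) * (Y ω + 1) : ℕ) : ENNReal) := by push_cast; ring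
      _ ≤ ((2 * (Y ω * Y ω) + 2 : ℕ) : ENNReal) := Nat.cast_le.2 hnat
      _ = 2 * ((Y ω : ENNReal) * (Y ω : ENNReal)) + 2 := by push_cast; ring
  refine ne_top_of_le_ne_top ?_ (tsum_meas_le_le Y hY)
  refine ne_top_of_le_ne_top ?_ (lintegral_mono hb)
  rw [lintegral_add_right _ measurable_const, lintegral_const_mul 2 hmeas, lintegral_const]
  simp only [measure_univ, mul_one]
  exact ENNReal.add_ne_top.2 ⟨ENNReal.mul_ne_top (by norm_num)
    (lintegral_nat_sq_lt_top_of_integrable h), by norm_num⟩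

end Tails

lemma lifeCDF_compl {Ω : Type*} [MeasurableSpace Ω] (μ : Measure Ω) [IsProbabilityMeasure μ]
    (η : ℕ → ℕ → Ω → ℕ) (hηm : Measurable (η 1 1)) (s : ℕ) :
    1 - lifeCDF μ η ((s : ℤ) - 2) = (μ {ω | s ≤ η 1 1 ω + 1}).toReal := by
  have hAm : MeasurableSet {ω | s ≤ η 1 1 ω + 1} := by
    have : {ω | s ≤ η 1 1 ω + 1} = (η 1 1) ⁻¹' {k | s ≤ k + 1} := rfl
    rw [this]
    exact hηm trivial
  have hset : {ω | (η 1 1 ω : ℤ) ≤ (s : ℤ) - 2} = {ω | s ≤ η 1 1 ω + 1}ᶜ := by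
    ext ω
    simp only [Set.mem_compl_iff, Set.mem_setOf_eq, not_le]
    omega
  rw [lifeCDF, hset, prob_compl_eq_one_sub hAm,
    ENNReal.toReal_sub_of_le prob_le_one ENNReal.one_ne_top]
  simp


/-- When the renewal times are deterministic constants `𝒮 1 < 𝒮 2 < ⋯`,
the characteristic function of the stationary colony size is
`E e^{iu𝓜} = ∏_{i=1}^∞ ψ_ζ(r (e^{iu} − 1)(1 − F_η(𝒮 i − 2)) + 1)`,
where `ψ_ζ(s) = E s^{ζ₁}`. -/
theorem statM_charFun_deterministic
    {Ω : Type*} [MeasurableSpace Ω] (μ : Measure Ω) [IsProbabilityMeasure μ]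
    (𝒮 : ℕ → ℕ) (ζ : ℕ → Ω → ℕ) (I η : ℕ → ℕ → Ω → ℕ) (r : ℝ)
    -- the deterministic renewal times `𝒮 1 < 𝒮 2 < ⋯` are positive integers
    (hSpos : ∀ i, 1 ≤ i → 1 ≤ 𝒮 i) (hSmono : ∀ i j, 1 ≤ i → i < j → 𝒮 i < 𝒮 j)
    -- measurability
    (hζm : ∀ i, Measurable (ζ i)) (hIm : ∀ i j, Measurable (I i j))
    (hηm : ∀ i j, Measurable (η i j))
    -- the I's are indicators with hatching probability r
    (hI01 : ∀ i j ω, I i j ω ≤ 1) (hr0 : 0 ≤ r) (hr1 : r ≤ 1)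
    (hIr : ∀ i j, μ {ω | I i j ω = 1} = ENNReal.ofReal r)
    -- mutual independence of the three families
    (hindep : iIndepFun (eggVars ζ I η) μ)
    -- identical distributions within each family
    (hζid : ∀ i, IdentDistrib (ζ i) (ζ 1) μ μ)
    (hηid : ∀ i j, IdentDistrib (η i j) (η 1 1) μ μ)
    -- moment conditions: E ζ₁ and E η₁₁² finite
    (hζint : Integrable (fun ω => (ζ 1 ω : ℝ)) μ)
    (hηsq : Integrable (fun ω => (η 1 1 ω : ℝ) ^ 2) μ)
    : ∀ u : ℝ,
      ∫ ω, Complex.exp (Complex.I * (u : ℂ) * (statMdet 𝒮 ζ I η ω : ℂ)) ∂μ =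
        ∏' i : ℕ, ∫ ω,
          ((r : ℂ) * (Complex.exp (Complex.I * (u : ℂ)) - 1)
              * (1 - (lifeCDF μ η ((𝒮 (i + 1) : ℤ) - 2) : ℂ)) + 1) ^ (ζ 1 ω) ∂μ := by
  intro u
  classical
  set X := eggVars ζ I η with hX
  have hXm : ∀ x, Measurable (X x) := by
    rintro (a | ⟨a, b⟩ | ⟨a, b⟩)
    · exact hζm a
    · exact hIm a b
    · exact hηm a b
  set N : ℕ → Ω → ℕ := batchN 𝒮 ζ I η with hNdef
  have hNm : ∀ i, Measurable (N i) := fun i =>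
    batchN_measurable 𝒮 i (hζm _) (fun j => hIm _ j) (fun j => hηm _ j)
  set E : ℕ → Ω → ℂ := fun i ω => Complex.exp (Complex.I * (u : ℂ) * (N i ω : ℂ)) with hE
  have hEm : ∀ i, Measurable (E i) := fun i =>
    (measurable_from_top
      (f := fun k : ℕ => Complex.exp (Complex.I * (u : ℂ) * (k : ℂ)))).comp (hNm i)
  have hEnorm : ∀ i ω, ‖E i ω‖ = 1 := fun i ω => norm_exp_I_mul_nat u (N i ω)
  have hSge : ∀ k, 1 ≤ k → k ≤ 𝒮 k := by
    intro k hk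
    induction k with
    | zero => omega
    | succ n ih =>
      rcases Nat.eq_zero_or_pos n with h0 | h0
      · subst h0
        exact hSpos 1 le_rfl
      · have h1 := ih h0
        have h2 := hSmono n (n + 1) h0 (Nat.lt_succ_self n)
        omega
  have hprod_meas : ∀ n, Measurable (fun ω => ∏ i ∈ Finset.range n, E i ω) := fun n =>
    Finset.measurable_prod _ (fun i _ => hEm i)
  have hprod_norm : ∀ n ω, ‖∏ i ∈ Finset.range n, E i ω‖ ≤ 1 := by
    intro n ω
    calc ‖∏ i ∈ Finset.range n, E i ω‖ ≤ ∏ i ∈ Finset.range n, ‖E i ω‖ := norm_prod_le _ _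
      _ ≤ 1 := Finset.prod_le_one (fun _ _ => norm_nonneg _) (fun i _ => (hEnorm i ω).le)
  have hEint : ∀ i, Integrable (E i) μ :=
    fun i => integrable_of_bdd' (hEm i) (C := 1) (fun ω => (hEnorm i ω).le)
  have hPint : ∀ n, Integrable (fun ω => ∏ i ∈ Finset.range n, E i ω) μ :=
    fun n => integrable_of_bdd' (hprod_meas n) (hprod_norm n)
  -- partial products factorize by independence of the batches
  have hPn : ∀ n, ∫ ω, ∏ i ∈ Finset.range n, E i ω ∂μ
      = ∏ i ∈ Finset.range n, ∫ ω, E i ω ∂μ := by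
    intro n
    induction n with
    | zero => simp
    | succ n ih =>
      have h_le : ∀ x, MeasurableSpace.comap (X x) inferInstance ≤ ‹MeasurableSpace Ω› :=
        fun x => measurable_iff_comap_le.1 (hXm x)
      set S : Set (ℕ ⊕ (ℕ × ℕ) ⊕ (ℕ × ℕ)) := {x | eggIdx x ≤ n} with hS
      set T : Set (ℕ ⊕ (ℕ × ℕ) ⊕ (ℕ × ℕ)) := {x | eggIdx x = n + 1} with hT
      have hdisj : Disjoint S T := Set.disjoint_left.2 (fun x hx1 hx2 => by
        simp only [hS, hT, Set.mem_setOf_eq] at hx1 hx2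
        omega)
      have hIndepST : Indep (⨆ x ∈ S, MeasurableSpace.comap (X x) inferInstance)
          (⨆ x ∈ T, MeasurableSpace.comap (X x) inferInstance) μ :=
        indep_iSup_of_disjoint h_le ((iIndepFun_iff_iIndep _ _ _).1 hindep) hdisj
      have hES : ∀ i, i < n → Measurable[⨆ x ∈ S, MeasurableSpace.comap (X x) inferInstance]
          (E i) := by
        intro i hi
        refine (measurable_from_top
          (f := fun k : ℕ => Complex.exp (Complex.I * (u : ℂ) * (k : ℂ)))).comp
          (batchN_measurable 𝒮 i ?_ ?_ ?_)
        · exact meas_sup_coord X S (x := Sum.inl (i + 1))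
            (show eggIdx (Sum.inl (i + 1)) ≤ n from by simp [eggIdx]; omega)
        · exact fun j => meas_sup_coord X S (x := Sum.inr (Sum.inl (i + 1, j)))
            (show eggIdx (Sum.inr (Sum.inl (i + 1, j))) ≤ n from by simp [eggIdx]; omega)
        · exact fun j => meas_sup_coord X S (x := Sum.inr (Sum.inr (i + 1, j)))
            (show eggIdx (Sum.inr (Sum.inr (i + 1, j))) ≤ n from by simp [eggIdx]; omega)
      have hPnS : Measurable[⨆ x ∈ S, MeasurableSpace.comap (X x) inferInstance]
          (fun ω => ∏ i ∈ Finset.range n, E i ω) :=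
        Finset.measurable_prod _ (fun i hi => hES i (Finset.mem_range.1 hi))
      have hEnT : Measurable[⨆ x ∈ T, MeasurableSpace.comap (X x) inferInstance] (E n) := by
        refine (measurable_from_top
          (f := fun k : ℕ => Complex.exp (Complex.I * (u : ℂ) * (k : ℂ)))).comp
          (batchN_measurable 𝒮 n ?_ ?_ ?_)
        · exact meas_sup_coord X T (x := Sum.inl (n + 1)) rfl
        · exact fun j => meas_sup_coord X T (x := Sum.inr (Sum.inl (n + 1, j))) rfl
        · exact fun j => meas_sup_coord X T (x := Sum.inr (Sum.inr (n + 1, j))) rfl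
      have hIF : IndepFun (fun ω => ∏ i ∈ Finset.range n, E i ω) (E n) μ := by
        rw [IndepFun_iff_Indep]
        exact indep_of_indep_of_le_left
          (indep_of_indep_of_le_right hIndepST (measurable_iff_comap_le.1 hEnT))
          (measurable_iff_comap_le.1 hPnS)
      simp only [Finset.prod_range_succ]
      rw [← ih, ← indepFun_integral_mul_complex hIF (hPint n) (hEint n)]
  -- each factor by the single-batch computation
  have hfactor : ∀ i, ∫ ω, E i ω ∂μ
      = ∫ ω, ((r : ℂ) * (Complex.exp (Complex.I * (u : ℂ)) - 1)
          * (1 - (lifeCDF μ η ((𝒮 (i + 1) : ℤ) - 2) : ℂ)) + 1) ^ (ζ 1 ω) ∂μ := fun i =>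
    batch_charFun μ 𝒮 ζ I η r hζm hIm hηm hI01 hr0 hr1 hIr hindep hζid hηid i u
  -- Borel–Cantelli: almost surely only finitely many batches survive
  have hNsub : ∀ i, {ω | N i ω ≠ 0} ⊆ {ω | i < ζ (i + 1) ω}
      ∪ ⋃ j ∈ Finset.Icc 1 i, {ω | 𝒮 (i + 1) ≤ η (i + 1) j ω + 1} := by
    intro i ω hω
    simp only [Set.mem_setOf_eq] at hω
    obtain ⟨j, hjmem, hjne⟩ := Finset.exists_ne_zero_of_sum_ne_zero hω
    have hjcond : 𝒮 (i + 1) ≤ η (i + 1) j ω + 1 := by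
      by_contra hc
      exact hjne (if_neg hc)
    have hj1 : 1 ≤ j := (Finset.mem_Icc.1 hjmem).1
    have hjle : j ≤ batchXi ζ I (i + 1) ω := (Finset.mem_Icc.1 hjmem).2
    have hξζ : batchXi ζ I (i + 1) ω ≤ ζ (i + 1) ω := by
      calc batchXi ζ I (i + 1) ω ≤ ∑ k ∈ Finset.Icc 1 (ζ (i + 1) ω), 1 :=
            Finset.sum_le_sum (fun k _ => hI01 (i + 1) k ω)
        _ = ζ (i + 1) ω := by simp
    by_cases hζi : ζ (i + 1) ω ≤ i
    · right
      refine Set.mem_biUnion (Finset.mem_Icc.2 ⟨hj1, by omega⟩) hjcond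
    · left
      simpa using (by omega : i < ζ (i + 1) ω)
  have hNbound : ∀ i, μ {ω | N i ω ≠ 0}
      ≤ μ {ω | i < ζ 1 ω} + (i : ENNReal) * μ {ω | i ≤ η 1 1 ω} := by
    intro i
    have h1 : μ {ω | N i ω ≠ 0} ≤ μ ({ω | i < ζ (i + 1) ω}
        ∪ ⋃ j ∈ Finset.Icc 1 i, {ω | 𝒮 (i + 1) ≤ η (i + 1) j ω + 1}) :=
      measure_mono (hNsub i)
    have h2 : μ ({ω | i < ζ (i + 1) ω}
        ∪ ⋃ j ∈ Finset.Icc 1 i, {ω | 𝒮 (i + 1) ≤ η (i + 1) j ω + 1})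
        ≤ μ {ω | i < ζ (i + 1) ω}
          + ∑ j ∈ Finset.Icc 1 i, μ {ω | 𝒮 (i + 1) ≤ η (i + 1) j ω + 1} :=
      le_trans (measure_union_le _ _) (by
        exact add_le_add_right (measure_biUnion_finset_le _ _) _)
    have h3 : μ {ω | i < ζ (i + 1) ω} = μ {ω | i < ζ 1 ω} := by
      have := (hζid (i + 1)).measure_mem_eq (s := {k | i < k})
        (trivial : MeasurableSet {k | i < k})
      exact this
    have h4 : ∀ j, μ {ω | 𝒮 (i + 1) ≤ η (i + 1) j ω + 1} ≤ μ {ω | i ≤ η 1 1 ω} := by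
      intro j
      have hid : μ {ω | 𝒮 (i + 1) ≤ η (i + 1) j ω + 1}
          = μ {ω | 𝒮 (i + 1) ≤ η 1 1 ω + 1} := by
        have := (hηid (i + 1) j).measure_mem_eq (s := {k | 𝒮 (i + 1) ≤ k + 1})
          (trivial : MeasurableSet {k | 𝒮 (i + 1) ≤ k + 1})
        exact this
      rw [hid]
      refine measure_mono fun ω hω => ?_
      simp only [Set.mem_setOf_eq] at hω ⊢
      have := hSge (i + 1) (by omega)
      omega
    have h5 : ∑ j ∈ Finset.Icc 1 i, μ {ω | 𝒮 (i + 1) ≤ η (i + 1) j ω + 1}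
        ≤ (i : ENNReal) * μ {ω | i ≤ η 1 1 ω} := by
      calc ∑ j ∈ Finset.Icc 1 i, μ {ω | 𝒮 (i + 1) ≤ η (i + 1) j ω + 1}
          ≤ ∑ _j ∈ Finset.Icc 1 i, μ {ω | i ≤ η 1 1 ω} := Finset.sum_le_sum fun j _ => h4 j
        _ = (i : ENNReal) * μ {ω | i ≤ η 1 1 ω} := by
            rw [Finset.sum_const, Nat.card_Icc, nsmul_eq_mul]
            norm_num
    calc μ {ω | N i ω ≠ 0} ≤ _ := h1
      _ ≤ _ := h2
      _ ≤ μ {ω | i < ζ 1 ω} + (i : ENNReal) * μ {ω | i ≤ η 1 1 ω} := by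
          rw [h3]
          exact add_le_add_right h5 _
  have hζtop : ∑' i : ℕ, μ {ω | i < ζ 1 ω} ≠ ⊤ :=
    ne_top_of_le_ne_top (lintegral_nat_lt_top_of_integrable hζint) (tsum_meas_lt_le (ζ 1) (hζm 1))
  have hηtop : ∑' i : ℕ, ((i : ENNReal) + 1) * μ {ω | i ≤ η 1 1 ω} ≠ ⊤ :=
    eta_sq_tail_lt_top (hηm 1 1) hηsq
  have hBC : ∑' i : ℕ, μ {ω | N i ω ≠ 0} ≠ ⊤ := by
    refine ne_top_of_le_ne_top ?_ (ENNReal.tsum_le_tsum hNbound)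
    rw [ENNReal.tsum_add]
    refine ENNReal.add_ne_top.2 ⟨hζtop, ?_⟩
    refine ne_top_of_le_ne_top hηtop (ENNReal.tsum_le_tsum fun i => ?_)
    exact mul_le_mul_left (by simp : (i : ENNReal) ≤ (i : ENNReal) + 1) _
  have hae := ae_eventually_notMem hBC
  -- a.e. convergence of the partial products
  have hconv : ∀ᵐ ω ∂μ, Filter.Tendsto (fun n => ∏ i ∈ Finset.range n, E i ω) Filter.atTop
      (nhds (Complex.exp (Complex.I * (u : ℂ) * (statMdet 𝒮 ζ I η ω : ℂ)))) := by
    filter_upwards [hae] with ω hω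
    obtain ⟨K, hK⟩ := Filter.eventually_atTop.1 hω
    apply tendsto_atTop_of_eventually_const (i₀ := K)
    intro n hn
    have hzero : ∀ i ∉ Finset.range n, N i ω = 0 := by
      intro i hi
      have hKi : K ≤ i := by
        have : ¬ i < n := fun h => hi (Finset.mem_range.2 h)
        omega
      have := hK i hKi
      simpa using this
    have hsum : statMdet 𝒮 ζ I η ω = ∑ i ∈ Finset.range n, N i ω := by
      rw [statMdet_eq_tsum]
      exact tsum_eq_sum hzero
    rw [hsum, Nat.cast_sum, Finset.mul_sum, Complex.exp_sum]
  have hDCT : Filter.Tendsto (fun n => ∫ ω, ∏ i ∈ Finset.range n, E i ω ∂μ) Filter.atTop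
      (nhds (∫ ω, Complex.exp (Complex.I * (u : ℂ) * (statMdet 𝒮 ζ I η ω : ℂ)) ∂μ)) :=
    tendsto_integral_of_dominated_convergence (fun _ => (1 : ℝ))
      (fun n => (hprod_meas n).aestronglyMeasurable) (integrable_const 1)
      (fun n => ae_of_all _ (hprod_norm n)) hconv
  -- the factors
  set f : ℕ → ℂ := fun i => ∫ ω, ((r : ℂ) * (Complex.exp (Complex.I * (u : ℂ)) - 1)
      * (1 - (lifeCDF μ η ((𝒮 (i + 1) : ℤ) - 2) : ℂ)) + 1) ^ (ζ 1 ω) ∂μ with hf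
  have hLf : Filter.Tendsto (fun n => ∏ i ∈ Finset.range n, f i) Filter.atTop
      (nhds (∫ ω, Complex.exp (Complex.I * (u : ℂ) * (statMdet 𝒮 ζ I η ω : ℂ)) ∂μ)) := by
    have : ∀ n, ∏ i ∈ Finset.range n, f i = ∫ ω, ∏ i ∈ Finset.range n, E i ω ∂μ := by
      intro n
      rw [hPn n]
      exact Finset.prod_congr rfl (fun i _ => (hfactor i).symm)
    simpa only [this] using hDCT
  -- bounds on the factors
  have hFc : ∀ i, 1 - lifeCDF μ η ((𝒮 (i + 1) : ℤ) - 2)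
      = (μ {ω | 𝒮 (i + 1) ≤ η 1 1 ω + 1}).toReal :=
    fun i => lifeCDF_compl μ η (hηm 1 1) (𝒮 (i + 1))
  have hF0 : ∀ i, 0 ≤ 1 - lifeCDF μ η ((𝒮 (i + 1) : ℤ) - 2) := fun i => by
    rw [hFc i]; exact ENNReal.toReal_nonneg
  have hF1 : ∀ i, 1 - lifeCDF μ η ((𝒮 (i + 1) : ℤ) - 2) ≤ 1 := fun i => by
    rw [hFc i]
    exact ENNReal.toReal_le_of_le_ofReal zero_le_one (by simpa using prob_le_one)
  set base : ℕ → ℂ := fun i => (r : ℂ) * (Complex.exp (Complex.I * (u : ℂ)) - 1)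
      * (1 - (lifeCDF μ η ((𝒮 (i + 1) : ℤ) - 2) : ℂ)) + 1 with hbase
  have hbase_norm : ∀ i, ‖base i‖ ≤ 1 := by
    intro i
    have h1 : base i = ((r * (1 - lifeCDF μ η ((𝒮 (i + 1) : ℤ) - 2)) : ℝ) : ℂ)
        * (Complex.exp (Complex.I * (u : ℂ)) - 1) + 1 := by
      rw [hbase]
      push_cast
      ring
    rw [h1]
    refine convex_norm_le (mul_nonneg hr0 (hF0 i)) ?_ (norm_exp_Iu u).le
    calc r * (1 - lifeCDF μ η ((𝒮 (i + 1) : ℤ) - 2)) ≤ 1 * 1 :=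
        mul_le_mul hr1 (hF1 i) (hF0 i) zero_le_one
      _ = 1 := one_mul 1
  have hf_norm : ∀ i, ‖f i‖ ≤ 1 := by
    intro i
    rw [hf]
    calc ‖∫ ω, (base i) ^ (ζ 1 ω) ∂μ‖ ≤ 1 * (μ Set.univ).toReal :=
        norm_integral_le_of_norm_le_const (ae_of_all _ (fun ω => by
          simpa using pow_le_one₀ (norm_nonneg _) (hbase_norm i)))
      _ = 1 := by simp
  -- summability of the deviations of the factors from 1
  have hbase_meas : ∀ i, Measurable (fun ω => (base i) ^ (ζ 1 ω)) := fun i =>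
    (measurable_from_top (f := fun k => (base i) ^ k)).comp (hζm 1)
  have hbase_int : ∀ i, Integrable (fun ω => (base i) ^ (ζ 1 ω)) μ := fun i =>
    integrable_of_bdd' (hbase_meas i) (C := 1) (fun ω => by
      simpa using pow_le_one₀ (norm_nonneg _) (hbase_norm i))
  have hdiff : ∀ i, ‖f i - 1‖
      ≤ (2 * ∫ ω, (ζ 1 ω : ℝ) ∂μ) * (μ {ω | i ≤ η 1 1 ω}).toReal := by
    intro i
    have h1 : f i - 1 = ∫ ω, ((base i) ^ (ζ 1 ω) - 1) ∂μ := by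
      rw [integral_sub (hbase_int i) (integrable_const 1), integral_const]
      simp [hf]
      rfl
    have hb1 : ‖base i - 1‖ ≤ 2 * (μ {ω | i ≤ η 1 1 ω}).toReal := by
      have h2 : base i - 1 = (r : ℂ) * (Complex.exp (Complex.I * (u : ℂ)) - 1)
          * ((1 - lifeCDF μ η ((𝒮 (i + 1) : ℤ) - 2) : ℝ) : ℂ) := by
        rw [hbase]
        push_cast
        ring
      have h3 : (μ {ω | 𝒮 (i + 1) ≤ η 1 1 ω + 1}).toReal
          ≤ (μ {ω | i ≤ η 1 1 ω}).toReal := by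
        refine ENNReal.toReal_mono (measure_ne_top μ _) (measure_mono fun ω hω => ?_)
        simp only [Set.mem_setOf_eq] at hω ⊢
        have := hSge (i + 1) (by omega)
        omega
      rw [h2, norm_mul, norm_mul]
      have he2 : ‖Complex.exp (Complex.I * (u : ℂ)) - 1‖ ≤ 2 := by
        calc ‖Complex.exp (Complex.I * (u : ℂ)) - 1‖
            ≤ ‖Complex.exp (Complex.I * (u : ℂ))‖ + ‖(1 : ℂ)‖ := norm_sub_le _ _
          _ ≤ 2 := by rw [norm_exp_Iu u]; norm_num
      have hrr : ‖(r : ℂ)‖ ≤ 1 := by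
        rw [Complex.norm_real, Real.norm_eq_abs, abs_of_nonneg hr0]
        exact hr1
      have hFF : ‖((1 - lifeCDF μ η ((𝒮 (i + 1) : ℤ) - 2) : ℝ) : ℂ)‖
          ≤ (μ {ω | i ≤ η 1 1 ω}).toReal := by
        rw [Complex.norm_real, Real.norm_eq_abs, abs_of_nonneg (hF0 i), hFc i]
        exact h3
      calc ‖(r : ℂ)‖ * ‖Complex.exp (Complex.I * (u : ℂ)) - 1‖
            * ‖((1 - lifeCDF μ η ((𝒮 (i + 1) : ℤ) - 2) : ℝ) : ℂ)‖
          ≤ 1 * 2 * (μ {ω | i ≤ η 1 1 ω}).toReal := by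
            refine mul_le_mul (mul_le_mul hrr he2 (norm_nonneg _) zero_le_one) hFF
              (norm_nonneg _) (by norm_num)
        _ = 2 * (μ {ω | i ≤ η 1 1 ω}).toReal := by ring
    have h4 : ‖f i - 1‖ ≤ ∫ ω, (ζ 1 ω : ℝ) * ‖base i - 1‖ ∂μ := by
      rw [h1]
      refine le_trans (norm_integral_le_integral_norm _) (integral_mono ?_ ?_ ?_)
      · exact ((hbase_int i).sub (integrable_const 1)).norm
      · exact hζint.mul_const _
      · intro ω
        exact norm_pow_sub_one_le (hbase_norm i) (ζ 1 ω)
    rw [integral_mul_const] at h4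
    calc ‖f i - 1‖ ≤ (∫ ω, (ζ 1 ω : ℝ) ∂μ) * ‖base i - 1‖ := h4
      _ ≤ (∫ ω, (ζ 1 ω : ℝ) ∂μ) * (2 * (μ {ω | i ≤ η 1 1 ω}).toReal) := by
          refine mul_le_mul_of_nonneg_left hb1 ?_
          exact integral_nonneg (fun ω => by positivity)
      _ = (2 * ∫ ω, (ζ 1 ω : ℝ) ∂μ) * (μ {ω | i ≤ η 1 1 ω}).toReal := by ring
  have hsumη : Summable (fun i : ℕ => (μ {ω | i ≤ η 1 1 ω}).toReal) := by
    refine ENNReal.summable_toReal ?_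
    refine ne_top_of_le_ne_top hηtop (ENNReal.tsum_le_tsum fun i => ?_)
    calc μ {ω | i ≤ η 1 1 ω} = 1 * μ {ω | i ≤ η 1 1 ω} := (one_mul _).symm
      _ ≤ ((i : ENNReal) + 1) * μ {ω | i ≤ η 1 1 ω} :=
          mul_le_mul_left (by simp) _
  have hsum : Summable (fun i => ‖f i - 1‖) := by
    refine Summable.of_nonneg_of_le (fun i => norm_nonneg _) hdiff ?_
    exact hsumη.mul_left _
  have hHP : HasProd f (∫ ω, Complex.exp (Complex.I * (u : ℂ)
      * (statMdet 𝒮 ζ I η ω : ℂ)) ∂μ) :=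
    hasProd_of_tendsto hf_norm hsum hLf
  exact hHP.tprod_eq.symm
end
end

section
/- If the distribution of τ_1 is degenerate, so that the points 𝒮_1 < 𝒮_2 < ⋯ are deterministic positive integer constants, and if ζ_1 is Poisson distributed with mean λ, then the stationary colony size 𝓜 is Poisson distributed with mean r·λ·Σ_{i=1}^∞ (1 − F_η(𝒮_i − 2)). -/
open MeasureTheory ProbabilityTheory Finset

noncomputable section

variable {Ω : Type*}

namespace BeeAux

/-- Poisson pmf. -/
def pois (l : ℝ) (k : ℕ) : ℝ := Real.exp (-l) * l ^ k / (Nat.factorial k)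

/-- Binomial pmf. -/
def binom (p : ℝ) (n k : ℕ) : ℝ := (n.choose k : ℝ) * p ^ k * (1 - p) ^ (n - k)

lemma pois_nonneg {l : ℝ} (hl : 0 ≤ l) (k : ℕ) : 0 ≤ pois l k := by
  unfold pois; positivity

lemma binom_nonneg {p : ℝ} (hp0 : 0 ≤ p) (hp1 : p ≤ 1) (n k : ℕ) : 0 ≤ binom p n k := by
  have : (0:ℝ) ≤ 1 - p := by linarith
  unfold binom; positivity

lemma binom_le_one {p : ℝ} (hp0 : 0 ≤ p) (hp1 : p ≤ 1) (n k : ℕ) : binom p n k ≤ 1 := by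
  have hq : (0:ℝ) ≤ 1 - p := by linarith
  rcases le_or_gt k n with hk | hk
  · have hexp : (1:ℝ) = (p + (1 - p)) ^ n := by ring_nf
    rw [hexp, add_pow]
    have hmem : k ∈ Finset.range (n + 1) := Finset.mem_range.2 (Nat.lt_succ_of_le hk)
    have := Finset.single_le_sum (f := fun i => p ^ i * (1 - p) ^ (n - i) * (n.choose i : ℝ))
      (fun i _ => by positivity) hmem
    calc binom p n k = p ^ k * (1 - p) ^ (n - k) * (n.choose k : ℝ) := by unfold binom; ring
    _ ≤ _ := this
  · simp [binom, Nat.choose_eq_zero_of_lt hk]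

lemma binom_zero_right (p : ℝ) (n : ℕ) : binom p n 0 = (1 - p) ^ n := by simp [binom]

lemma binom_succ_zero (p : ℝ) (n : ℕ) :
    binom p n 0 * (1 - p) = binom p (n + 1) 0 := by
  simp [binom, pow_succ]

lemma binom_succ (p : ℝ) (n k : ℕ) :
    binom p n (k + 1) * (1 - p) + binom p n k * p = binom p (n + 1) (k + 1) := by
  rcases lt_or_ge k n with h | h
  · have h1 : n - (k + 1) + 1 = n - k := by omega
    have h2 : n + 1 - (k + 1) = n - k := by omega
    have h3 : ((n + 1).choose (k + 1) : ℝ) = (n.choose k : ℝ) + (n.choose (k + 1) : ℝ) := by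
      rw [Nat.choose_succ_succ]; push_cast; ring
    unfold binom
    rw [h2, h3]
    calc (n.choose (k+1) : ℝ) * p ^ (k+1) * (1-p) ^ (n - (k+1)) * (1-p)
          + (n.choose k : ℝ) * p ^ k * (1-p) ^ (n-k) * p
        = (n.choose (k+1) : ℝ) * p ^ (k+1) * (1-p) ^ (n - (k+1) + 1)
          + (n.choose k : ℝ) * p ^ (k+1) * (1-p) ^ (n-k) := by ring
      _ = ((n.choose k : ℝ) + (n.choose (k+1) : ℝ)) * p ^ (k+1) * (1-p) ^ (n-k) := by
          rw [h1]; ring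
  · rcases eq_or_lt_of_le h with rfl | h'
    · simp [binom, Nat.choose_eq_zero_of_lt (Nat.lt_succ_self n), Nat.choose_self,
        Nat.sub_self, pow_succ]
    · have e1 : n.choose (k + 1) = 0 := Nat.choose_eq_zero_of_lt (by omega)
      have e2 : n.choose k = 0 := Nat.choose_eq_zero_of_lt h'
      have e3 : (n + 1).choose (k + 1) = 0 := Nat.choose_eq_zero_of_lt (by omega)
      simp [binom, e1, e2, e3]

lemma pois_zero (l : ℝ) : pois l 0 = Real.exp (-l) := by simp [pois]

lemma exp_tsum (x : ℝ) : Real.exp x = ∑' n : ℕ, x ^ n / (Nat.factorial n) := by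
  rw [Real.exp_eq_exp_ℝ, NormedSpace.exp_eq_tsum_div]

lemma summable_pois_binom (l p : ℝ) (hl : 0 ≤ l) (hp0 : 0 ≤ p) (hp1 : p ≤ 1) (m : ℕ) :
    Summable (fun a => pois l a * binom p a m) := by
  refine Summable.of_nonneg_of_le
    (fun a => mul_nonneg (pois_nonneg hl a) (binom_nonneg hp0 hp1 a m)) (fun a => ?_)
    ((Real.summable_pow_div_factorial l).mul_left (Real.exp (-l)))
  calc pois l a * binom p a m ≤ pois l a * 1 :=
        mul_le_mul_of_nonneg_left (binom_le_one hp0 hp1 a m) (pois_nonneg hl a)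
    _ = Real.exp (-l) * (l ^ a / (Nat.factorial a)) := by unfold pois; ring

/-- The Poisson thinning identity. -/
lemma tsum_pois_binom (l p : ℝ) (hl : 0 ≤ l) (hp0 : 0 ≤ p) (hp1 : p ≤ 1) (m : ℕ) :
    ∑' a : ℕ, pois l a * binom p a m = pois (l * p) m := by
  have hsum := summable_pois_binom l p hl hp0 hp1 m
  rw [← hsum.sum_add_tsum_nat_add m]
  have hzero : ∀ a ∈ Finset.range m, pois l a * binom p a m = 0 := by
    intro a ha
    have : a < m := Finset.mem_range.1 ha
    simp [binom, Nat.choose_eq_zero_of_lt this]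
  rw [Finset.sum_eq_zero hzero, zero_add]
  have hterm : ∀ t : ℕ, pois l (t + m) * binom p (t + m) m
      = (Real.exp (-l) * (l * p) ^ m / (Nat.factorial m)) * ((l * (1 - p)) ^ t / (Nat.factorial t)) := by
    intro t
    have hch : ((t + m).choose m : ℝ) * (Nat.factorial t) * (Nat.factorial m) = ((t + m).factorial : ℝ) := by
      exact_mod_cast congrArg (Nat.cast (R := ℝ)) (Nat.add_choose_mul_factorial_mul_factorial t m)
    have hfact_pos : (0:ℝ) < ((t+m).factorial : ℝ) := by exact_mod_cast (t+m).factorial_pos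
    have htpos : (0:ℝ) < (Nat.factorial t : ℝ) := by exact_mod_cast t.factorial_pos
    have hmpos : (0:ℝ) < (Nat.factorial m : ℝ) := by exact_mod_cast m.factorial_pos
    unfold pois binom
    have hsub : t + m - m = t := by omega
    rw [hsub]
    have hC : ((t + m).choose m : ℝ) = ((t + m).factorial : ℝ) / ((Nat.factorial t : ℝ) * (Nat.factorial m : ℝ)) := by
      field_simp
      linear_combination hch
    rw [hC]
    field_simp
    rw [pow_add, mul_pow, mul_pow]
    ring
  calc ∑' t : ℕ, pois l (t + m) * binom p (t + m) m
      = ∑' t : ℕ, (Real.exp (-l) * (l * p) ^ m / (Nat.factorial m)) * ((l * (1 - p)) ^ t / (Nat.factorial t)) := by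
        exact tsum_congr hterm
    _ = (Real.exp (-l) * (l * p) ^ m / (Nat.factorial m)) * Real.exp (l * (1 - p)) := by
        rw [tsum_mul_left, ← exp_tsum]
    _ = pois (l * p) m := by
        unfold pois
        have hE : Real.exp (-l) * Real.exp (l * (1 - p)) = Real.exp (-(l * p)) := by
          rw [← Real.exp_add]; ring_nf
        rw [div_mul_eq_mul_div, mul_right_comm (Real.exp (-l)) ((l * p) ^ m), hE]

/-- Poisson convolution identity. -/
lemma sum_pois_conv (a b : ℝ) (k : ℕ) :
    ∑ j ∈ Finset.range (k + 1), pois a j * pois b (k - j) = pois (a + b) k := by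
  have key : ∀ j ∈ Finset.range (k+1), pois a j * pois b (k - j)
      = (Real.exp (-a) * Real.exp (-b) / (Nat.factorial k)) * (a ^ j * b ^ (k - j) * (k.choose j : ℝ)) := by
    intro j hj
    have hjk : j ≤ k := Nat.lt_succ_iff.1 (Finset.mem_range.1 hj)
    have hch : (k.choose j : ℝ) * (Nat.factorial j) * (Nat.factorial (k - j)) = (Nat.factorial k : ℝ) := by
      exact_mod_cast congrArg (Nat.cast (R := ℝ)) (Nat.choose_mul_factorial_mul_factorial hjk)
    have h1 : (0:ℝ) < (Nat.factorial j : ℝ) := by exact_mod_cast j.factorial_pos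
    have h2 : (0:ℝ) < (Nat.factorial (k-j) : ℝ) := by exact_mod_cast (k-j).factorial_pos
    have h3 : (0:ℝ) < (Nat.factorial k : ℝ) := by exact_mod_cast k.factorial_pos
    have hC : (k.choose j : ℝ) = (Nat.factorial k : ℝ) / ((Nat.factorial j : ℝ) * (Nat.factorial (k - j) : ℝ)) := by
      field_simp
      linear_combination hch
    unfold pois
    rw [hC]
    field_simp
  rw [Finset.sum_congr rfl key, ← Finset.mul_sum]
  unfold pois
  rw [← add_pow]
  rw [← Real.exp_add]
  ring_nf


lemma continuous_pois (k : ℕ) : Continuous fun l : ℝ => pois l k := by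
  unfold pois
  exact ((Real.continuous_exp.comp continuous_neg).mul (continuous_pow k)).div_const _

section MeasPart

variable {Ω : Type*} [MeasurableSpace Ω] {μ : Measure Ω}

lemma measurable_sum_Icc_rand {m' : MeasurableSpace Ω} {N : Ω → ℕ} (hN : Measurable[m'] N)
    {f : ℕ → Ω → ℕ} (hf : ∀ j, Measurable[m'] (f j)) :
    Measurable[m'] (fun ω => ∑ j ∈ Finset.Icc 1 (N ω), f j ω) := by
  apply measurable_to_countable'
  intro k
  have hset : (fun ω => ∑ j ∈ Finset.Icc 1 (N ω), f j ω) ⁻¹' {k}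
      = ⋃ a : ℕ, ({ω | N ω = a} ∩ {ω | ∑ j ∈ Finset.Icc 1 a, f j ω = k}) := by
    ext ω
    simp only [Set.mem_preimage, Set.mem_singleton_iff, Set.mem_iUnion, Set.mem_inter_iff,
      Set.mem_setOf_eq]
    constructor
    · intro h; exact ⟨N ω, rfl, h⟩
    · rintro ⟨a, ha, h⟩; rw [← ha] at h; exact h
  rw [hset]
  refine MeasurableSet.iUnion fun a => MeasurableSet.inter ?_ ?_
  · exact hN (measurableSet_singleton a)
  · exact (Finset.measurable_sum (Finset.Icc 1 a) fun j _ => hf j) (measurableSet_singleton k)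

lemma bernoulli_sum_pmf [IsProbabilityMeasure μ] {B : ℕ → Ω → ℕ} (hm : ∀ j, Measurable (B j))
    (hind : iIndepFun B μ)
    (h01 : ∀ j ω, B j ω ≤ 1) {p : ℝ} (hp0 : 0 ≤ p) (hp1 : p ≤ 1)
    (hp : ∀ j, μ {ω | B j ω = 1} = ENNReal.ofReal p) :
    ∀ n k, μ {ω | ∑ j ∈ Finset.Icc 1 n, B j ω = k} = ENNReal.ofReal (binom p n k) := by
  have hB0 : ∀ j, μ {ω | B j ω = 0} = ENNReal.ofReal (1 - p) := by
    intro j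
    have hset : {ω | B j ω = 0} = {ω | B j ω = 1}ᶜ := by
      ext ω
      simp only [Set.mem_setOf_eq, Set.mem_compl_iff]
      have := h01 j ω
      omega
    rw [hset, measure_compl (show MeasurableSet {ω | B j ω = 1} from (hm j) (measurableSet_singleton 1)) (measure_ne_top μ _), hp j,
      measure_univ, ← ENNReal.ofReal_one, ← ENNReal.ofReal_sub _ hp0]
  intro n
  induction n with
  | zero =>
    intro k
    rcases Nat.eq_zero_or_pos k with rfl | hk
    · have : {ω : Ω | ∑ j ∈ Finset.Icc 1 0, B j ω = 0} = Set.univ := by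
        ext ω; simp
      rw [this, measure_univ]
      simp [binom]
    · have : {ω : Ω | ∑ j ∈ Finset.Icc 1 0, B j ω = k} = ∅ := by
        ext ω; simp; omega
      rw [this, measure_empty]
      rw [binom, Nat.choose_eq_zero_of_lt hk]
      simp
  | succ n ih =>
    have hIndepS : IndepFun (∑ j ∈ Finset.Icc 1 n, B j) (B (n + 1)) μ :=
      iIndepFun.indepFun_finsetSum_of_notMem hind hm (by simp)
    have hfac : ∀ a b : ℕ, μ ({ω | ∑ j ∈ Finset.Icc 1 n, B j ω = a} ∩ {ω | B (n+1) ω = b})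
        = μ {ω | ∑ j ∈ Finset.Icc 1 n, B j ω = a} * μ {ω | B (n+1) ω = b} := by
      intro a b
      have := hIndepS.measure_inter_preimage_eq_mul {a} {b}
        (measurableSet_singleton a) (measurableSet_singleton b)
      have he : (∑ j ∈ Finset.Icc 1 n, B j) ⁻¹' {a} = {ω | ∑ j ∈ Finset.Icc 1 n, B j ω = a} := by
        ext ω; simp [Finset.sum_apply]
      have he2 : (B (n+1)) ⁻¹' {b} = {ω | B (n+1) ω = b} := by ext ω; simp
      rwa [he, he2] at this
    have hmeasS : ∀ a : ℕ, MeasurableSet {ω | ∑ j ∈ Finset.Icc 1 n, B j ω = a} := by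
      intro a
      exact (Finset.measurable_sum (Finset.Icc 1 n) fun j _ => hm j) (measurableSet_singleton a)
    have hsplit : ∀ ω, ∑ j ∈ Finset.Icc 1 (n+1), B j ω
        = (∑ j ∈ Finset.Icc 1 n, B j ω) + B (n+1) ω := by
      intro ω
      rw [← Finset.insert_Icc_right_eq_Icc_add_one (by omega), Finset.sum_insert (by simp)]
      ring
    intro k
    rcases Nat.eq_zero_or_pos k with rfl | hk
    · have hE : {ω | ∑ j ∈ Finset.Icc 1 (n+1), B j ω = 0}
          = {ω | ∑ j ∈ Finset.Icc 1 n, B j ω = 0} ∩ {ω | B (n+1) ω = 0} := by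
        ext ω
        simp only [Set.mem_setOf_eq, Set.mem_inter_iff, hsplit ω]
        omega
      rw [hE, hfac 0 0, ih 0, hB0]
      rw [← ENNReal.ofReal_mul (binom_nonneg hp0 hp1 n 0)]
      congr 1
      simp only [binom, Nat.choose_zero_right, Nat.cast_one, pow_zero, Nat.sub_zero, one_mul,
        pow_succ]
    · obtain ⟨k, rfl⟩ : ∃ m, k = m + 1 := ⟨k - 1, by omega⟩
      have hE : {ω | ∑ j ∈ Finset.Icc 1 (n+1), B j ω = k + 1}
          = ({ω | ∑ j ∈ Finset.Icc 1 n, B j ω = k + 1} ∩ {ω | B (n+1) ω = 0})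
            ∪ ({ω | ∑ j ∈ Finset.Icc 1 n, B j ω = k} ∩ {ω | B (n+1) ω = 1}) := by
        ext ω
        simp only [Set.mem_setOf_eq, Set.mem_inter_iff, Set.mem_union, hsplit ω]
        have := h01 (n+1) ω
        omega
      have hdisj : Disjoint
          ({ω | ∑ j ∈ Finset.Icc 1 n, B j ω = k + 1} ∩ {ω | B (n+1) ω = 0})
          ({ω | ∑ j ∈ Finset.Icc 1 n, B j ω = k} ∩ {ω | B (n+1) ω = 1}) := by
        rw [Set.disjoint_iff]
        rintro ω ⟨⟨-, h0⟩, ⟨-, h1⟩⟩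
        simp only [Set.mem_setOf_eq] at h0 h1
        omega
      rw [hE, measure_union hdisj
        ((hmeasS k).inter ((hm (n+1)) (measurableSet_singleton 1)))]
      rw [hfac (k+1) 0, hfac k 1, ih (k+1), ih k, hB0, hp]
      rw [← ENNReal.ofReal_mul (binom_nonneg hp0 hp1 n (k+1)),
        ← ENNReal.ofReal_mul (binom_nonneg hp0 hp1 n k),
        ← ENNReal.ofReal_add (mul_nonneg (binom_nonneg hp0 hp1 n (k+1)) (by linarith))
          (mul_nonneg (binom_nonneg hp0 hp1 n k) hp0),
        binom_succ]

lemma thinning_pmf {N : Ω → ℕ} {B : ℕ → Ω → ℕ}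
    (hmeasS : ∀ a m : ℕ, MeasurableSet {ω | ∑ j ∈ Finset.Icc 1 a, B j ω = m})
    (hmeasN : ∀ a : ℕ, MeasurableSet {ω | N ω = a})
    (hfac : ∀ a m : ℕ, μ ({ω | N ω = a} ∩ {ω | ∑ j ∈ Finset.Icc 1 a, B j ω = m})
      = μ {ω | N ω = a} * μ {ω | ∑ j ∈ Finset.Icc 1 a, B j ω = m})
    {l p : ℝ} (hl : 0 ≤ l) (hp0 : 0 ≤ p) (hp1 : p ≤ 1)
    (hN : ∀ a, μ {ω | N ω = a} = ENNReal.ofReal (pois l a))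
    (hBin : ∀ a m, μ {ω | ∑ j ∈ Finset.Icc 1 a, B j ω = m} = ENNReal.ofReal (binom p a m)) :
    ∀ m, μ {ω | ∑ j ∈ Finset.Icc 1 (N ω), B j ω = m} = ENNReal.ofReal (pois (l * p) m) := by
  intro m
  have hE : {ω | ∑ j ∈ Finset.Icc 1 (N ω), B j ω = m}
      = ⋃ a : ℕ, ({ω | N ω = a} ∩ {ω | ∑ j ∈ Finset.Icc 1 a, B j ω = m}) := by
    ext ω
    simp only [Set.mem_setOf_eq, Set.mem_iUnion, Set.mem_inter_iff]
    constructor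
    · intro h; exact ⟨N ω, rfl, h⟩
    · rintro ⟨a, ha, h⟩; rw [← ha] at h; exact h
  have hdisj : Pairwise (Function.onFun Disjoint
      (fun a => {ω | N ω = a} ∩ {ω | ∑ j ∈ Finset.Icc 1 a, B j ω = m})) := by
    intro a b hab
    rw [Function.onFun, Set.disjoint_iff]
    rintro ω ⟨⟨ha, -⟩, ⟨hb, -⟩⟩
    exact hab (ha.symm.trans hb)
  rw [hE, measure_iUnion hdisj (fun a => (hmeasN a).inter (hmeasS a m))]
  have hterm : ∀ a : ℕ, μ ({ω | N ω = a} ∩ {ω | ∑ j ∈ Finset.Icc 1 a, B j ω = m})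
      = ENNReal.ofReal (pois l a * binom p a m) := by
    intro a
    rw [hfac, hN, hBin, ← ENNReal.ofReal_mul (pois_nonneg hl a)]
  rw [tsum_congr hterm,
    ← ENNReal.ofReal_tsum_of_nonneg
      (fun a => mul_nonneg (pois_nonneg hl a) (binom_nonneg hp0 hp1 a m))
      (summable_pois_binom l p hl hp0 hp1 m),
    tsum_pois_binom l p hl hp0 hp1 m]

lemma pois_add_pmf {X Y : Ω → ℕ}
    (hmX : ∀ a : ℕ, MeasurableSet {ω | X ω = a}) (hmY : ∀ b : ℕ, MeasurableSet {ω | Y ω = b})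
    (hfac : ∀ a b : ℕ, μ ({ω | X ω = a} ∩ {ω | Y ω = b})
      = μ {ω | X ω = a} * μ {ω | Y ω = b})
    {α β : ℝ} (hα : 0 ≤ α) (hβ : 0 ≤ β)
    (hX : ∀ a, μ {ω | X ω = a} = ENNReal.ofReal (pois α a))
    (hY : ∀ b, μ {ω | Y ω = b} = ENNReal.ofReal (pois β b)) :
    ∀ k, μ {ω | X ω + Y ω = k} = ENNReal.ofReal (pois (α + β) k) := by
  intro k
  have hE : {ω | X ω + Y ω = k}
      = ⋃ a ∈ Finset.range (k+1), ({ω | X ω = a} ∩ {ω | Y ω = k - a}) := by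
    ext ω
    simp only [Set.mem_setOf_eq, Set.mem_iUnion, Set.mem_inter_iff, Finset.mem_range]
    constructor
    · intro h
      exact ⟨X ω, by omega, rfl, by omega⟩
    · rintro ⟨a, ha, h1, h2⟩
      omega
  have hdisj : Set.PairwiseDisjoint (Finset.range (k+1) : Set ℕ)
      (fun a => {ω | X ω = a} ∩ {ω | Y ω = k - a}) := by
    intro a _ b _ hab
    rw [Function.onFun, Set.disjoint_iff]
    rintro ω ⟨⟨ha, -⟩, ⟨hb, -⟩⟩
    exact hab (ha.symm.trans hb)
  rw [hE, measure_biUnion_finset hdisj (fun a _ => (hmX a).inter (hmY (k - a)))]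
  have hterm : ∀ a ∈ Finset.range (k+1), μ ({ω | X ω = a} ∩ {ω | Y ω = k - a})
      = ENNReal.ofReal (pois α a * pois β (k - a)) := by
    intro a _
    rw [hfac, hX, hY, ← ENNReal.ofReal_mul (pois_nonneg hα a)]
  rw [Finset.sum_congr rfl hterm,
    ← ENNReal.ofReal_sum_of_nonneg
      (fun a _ => mul_nonneg (pois_nonneg hα a) (pois_nonneg hβ (k - a))),
    sum_pois_conv α β k]


lemma measurable_comap_self {α β : Type*} [mβ : MeasurableSpace β] (g : α → β) :
    @Measurable α β (MeasurableSpace.comap g mβ) mβ g := fun s hs => ⟨s, hs, rfl⟩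

lemma iIndepFun_reindex {ι ι' : Type*} {β : Type*} {mβ : MeasurableSpace β}
    {f : ι → Ω → β} (g : ι' → ι) (hg : Function.Injective g)
    (h : iIndepFun f μ) :
    iIndepFun (fun i' => f (g i')) μ := by
  classical
  rw [iIndepFun_iff_measure_inter_preimage_eq_mul] at h ⊢
  intro S sets hsets
  set sets' : ι → Set β := fun k =>
    if hk : ∃ i' ∈ S, g i' = k then sets hk.choose else Set.univ with hsets'
  have hkey : ∀ i' ∈ S, sets' (g i') = sets i' := by
    intro i' hi'
    have hex : ∃ j ∈ S, g j = g i' := ⟨i', hi', rfl⟩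
    have : hex.choose = i' := hg hex.choose_spec.2
    simp only [hsets', dif_pos hex, this]
  have hmeas' : ∀ k, k ∈ S.image g → MeasurableSet[mβ] (sets' k) := by
    intro k hk
    rcases Finset.mem_image.1 hk with ⟨i', hi', rfl⟩
    rw [hkey i' hi']
    exact hsets i' hi'
  have := h (S.image g) hmeas'
  rw [Finset.prod_image (fun a ha b hb hab => hg hab)] at this
  have hI : (⋂ k ∈ S.image g, f k ⁻¹' sets' k) = ⋂ i' ∈ S, f (g i') ⁻¹' sets i' := by
    ext ω
    simp only [Set.mem_iInter, Finset.mem_image]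
    constructor
    · intro hω i' hi'
      have := hω (g i') ⟨i', hi', rfl⟩
      rwa [hkey i' hi'] at this
    · rintro hω k ⟨i', hi', rfl⟩
      rw [hkey i' hi']
      exact hω i' hi'
  rw [hI] at this
  rw [this]
  exact Finset.prod_congr rfl fun i' hi' => by rw [hkey i' hi']

/-- Independence of two σ-algebras generated by disjoint groups of the variables. -/
lemma indep_groups {ιk : Type*} {f : ιk → Ω → ℕ} (hm : ∀ k, Measurable (f k))
    (hind : iIndepFun f μ) {S T : Set ιk} (hST : Disjoint S T) :
    Indep (⨆ k ∈ S, MeasurableSpace.comap (f k) inferInstance)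
      (⨆ k ∈ T, MeasurableSpace.comap (f k) inferInstance) μ :=
  indep_iSup_of_disjoint (fun k => (hm k).comap_le) hind.iIndep hST

lemma measurable_grp {ιk : Type*} {f : ιk → Ω → ℕ} {S : Set ιk} {k : ιk} (hk : k ∈ S) :
    Measurable[⨆ k ∈ S, MeasurableSpace.comap (f k) inferInstance] (f k) :=
  (measurable_comap_self (f k)).mono
    (le_trans le_rfl (le_biSup (fun k => MeasurableSpace.comap (f k) inferInstance) hk)) le_rfl


end MeasPart

/-- Indicator that egg `(i,j)` is alive at the census time. -/
def bC (𝒮 : ℕ → ℕ) (η : ℕ → ℕ → Ω → ℕ) (i j : ℕ) (ω : Ω) : ℕ :=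
  if 𝒮 i ≤ η i j ω + 1 then 1 else 0

/-- Number of batch-`i` bees alive at the census time. -/
def bX (𝒮 : ℕ → ℕ) (ζ : ℕ → Ω → ℕ) (I η : ℕ → ℕ → Ω → ℕ) (i : ℕ) (ω : Ω) : ℕ :=
  ∑ j ∈ Finset.Icc 1 (batchXi ζ I i ω), bC 𝒮 η i j ω

/-- Partial-sum colony size over the first `n` batches. -/
def bM (𝒮 : ℕ → ℕ) (ζ : ℕ → Ω → ℕ) (I η : ℕ → ℕ → Ω → ℕ) (n : ℕ) (ω : Ω) : ℕ :=
  ∑ i ∈ Finset.range n, bX 𝒮 ζ I η (i + 1) ω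

/-- The batch index of a variable. -/
def bIdx : (ℕ ⊕ (ℕ × ℕ) ⊕ (ℕ × ℕ)) → ℕ
  | Sum.inl i => i
  | Sum.inr (Sum.inl p) => p.1
  | Sum.inr (Sum.inr p) => p.1


section Main

variable [MeasurableSpace Ω] {μ : Measure Ω} [IsProbabilityMeasure μ]
  {𝒮 : ℕ → ℕ} {ζ : ℕ → Ω → ℕ} {I η : ℕ → ℕ → Ω → ℕ} {r lam : ℝ}

lemma meas_eggVars (hζm : ∀ i, Measurable (ζ i)) (hIm : ∀ i j, Measurable (I i j))
    (hηm : ∀ i j, Measurable (η i j)) : ∀ k, Measurable (eggVars ζ I η k) := by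
  rintro (i | (p | p))
  exacts [hζm i, hIm p.1 p.2, hηm p.1 p.2]

lemma xi_pmf (hζm : ∀ i, Measurable (ζ i)) (hIm : ∀ i j, Measurable (I i j))
    (hηm : ∀ i j, Measurable (η i j))
    (hI01 : ∀ i j ω, I i j ω ≤ 1) (hr0 : 0 ≤ r) (hr1 : r ≤ 1)
    (hIr : ∀ i j, μ {ω | I i j ω = 1} = ENNReal.ofReal r)
    (hindep : iIndepFun (eggVars ζ I η) μ)
    (hζid : ∀ i, IdentDistrib (ζ i) (ζ 1) μ μ)
    (hlam : 0 ≤ lam)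
    (hζpois : ∀ k : ℕ, μ {ω | ζ 1 ω = k} =
      ENNReal.ofReal (Real.exp (-lam) * lam ^ k / (Nat.factorial k))) :
    ∀ i m, μ {ω | batchXi ζ I i ω = m} = ENNReal.ofReal (pois (lam * r) m) := by
  intro i m
  have hfm := meas_eggVars hζm hIm hηm
  have hIind : iIndepFun (fun j => I i j) μ := by
    have h := iIndepFun_reindex (f := eggVars ζ I η)
      (fun j => Sum.inr (Sum.inl (i, j))) (fun a b hab => by simpa using hab) hindep
    exact h
  have hBin := bernoulli_sum_pmf (μ := μ) (fun j => hIm i j) hIind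
    (fun j ω => hI01 i j ω) hr0 hr1 (fun j => hIr i j)
  have hN : ∀ a, μ {ω | ζ i ω = a} = ENNReal.ofReal (pois lam a) := by
    intro a
    have h := (hζid i).measure_mem_eq (s := {a}) (measurableSet_singleton a)
    have e1 : ζ i ⁻¹' {a} = {ω | ζ i ω = a} := by ext ω; simp
    have e2 : ζ 1 ⁻¹' {a} = {ω | ζ 1 ω = a} := by ext ω; simp
    rw [e1, e2] at h
    rw [h, hζpois a]
    rfl
  have hdisj : Disjoint ({Sum.inl i} : Set (ℕ ⊕ (ℕ × ℕ) ⊕ (ℕ × ℕ)))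
      {k | ∃ j, k = Sum.inr (Sum.inl (i, j))} := by
    rw [Set.disjoint_left]
    rintro k hk1 ⟨j, rfl⟩
    simp at hk1
  have hfacI := indep_groups hfm hindep hdisj
  have hfac : ∀ a m' : ℕ,
      μ ({ω | ζ i ω = a} ∩ {ω | ∑ j ∈ Finset.Icc 1 a, I i j ω = m'})
      = μ {ω | ζ i ω = a} * μ {ω | ∑ j ∈ Finset.Icc 1 a, I i j ω = m'} := by
    intro a m'
    refine (Indep_iff _ _ μ).1 hfacI _ _ ?_ ?_
    · exact measurable_grp (f := eggVars ζ I η) (S := {Sum.inl i}) rfl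
        (measurableSet_singleton a)
    · refine (Finset.measurable_sum (Finset.Icc 1 a) fun j _ => ?_)
        (measurableSet_singleton m')
      exact measurable_grp (f := eggVars ζ I η)
        (S := {k | ∃ j, k = Sum.inr (Sum.inl (i, j))}) ⟨j, rfl⟩
  have h := thinning_pmf (μ := μ) (N := ζ i) (B := fun j => I i j)
    (fun a m' => (Finset.measurable_sum (Finset.Icc 1 a) fun j _ => hIm i j)
      (measurableSet_singleton m'))
    (fun a => hζm i (measurableSet_singleton a)) hfac hlam hr0 hr1 hN hBin m
  exact h

lemma lifeCDF_nonneg (μ : Measure Ω) (η : ℕ → ℕ → Ω → ℕ) (x : ℤ) :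
    0 ≤ lifeCDF μ η x := ENNReal.toReal_nonneg

lemma lifeCDF_le_one (μ : Measure Ω) [IsProbabilityMeasure μ] (η : ℕ → ℕ → Ω → ℕ) (x : ℤ) :
    lifeCDF μ η x ≤ 1 := by
  unfold lifeCDF
  rw [show (1:ℝ) = (1 : ENNReal).toReal by simp]
  exact ENNReal.toReal_mono ENNReal.one_ne_top prob_le_one

lemma bC_le_one (i j : ℕ) (ω : Ω) : bC 𝒮 η i j ω ≤ 1 := by
  unfold bC; split_ifs <;> simp

lemma bC_one (hηm : ∀ i j, Measurable (η i j)) (hηid : ∀ i j, IdentDistrib (η i j) (η 1 1) μ μ) :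
    ∀ i j, μ {ω | bC 𝒮 η i j ω = 1}
      = ENNReal.ofReal (1 - lifeCDF μ η ((𝒮 i : ℤ) - 2)) := by
  intro i j
  have hset : {ω | bC 𝒮 η i j ω = 1} = (η i j) ⁻¹' {t | 𝒮 i ≤ t + 1} := by
    ext ω
    simp only [bC, Set.mem_setOf_eq, Set.mem_preimage]
    split_ifs with h <;> simp [h]
  have hid := (hηid i j).measure_mem_eq (s := {t : ℕ | 𝒮 i ≤ t + 1})
    (MeasurableSpace.measurableSet_top)
  have hcompl : (η 1 1) ⁻¹' {t | 𝒮 i ≤ t + 1}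
      = {ω | (η 1 1 ω : ℤ) ≤ (𝒮 i : ℤ) - 2}ᶜ := by
    ext ω
    simp only [Set.mem_preimage, Set.mem_setOf_eq, Set.mem_compl_iff, not_le]
    omega
  have hmeasA : MeasurableSet {ω | (η 1 1 ω : ℤ) ≤ (𝒮 i : ℤ) - 2} :=
    (hηm 1 1) (show MeasurableSet {t : ℕ | (t : ℤ) ≤ (𝒮 i : ℤ) - 2} from
      MeasurableSpace.measurableSet_top)
  rw [hset, hid, hcompl, measure_compl hmeasA (measure_ne_top μ _), measure_univ]
  unfold lifeCDF
  rw [ENNReal.ofReal_sub _ ENNReal.toReal_nonneg, ENNReal.ofReal_one,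
    ENNReal.ofReal_toReal (measure_ne_top μ _)]

lemma xb_pmf (hζm : ∀ i, Measurable (ζ i)) (hIm : ∀ i j, Measurable (I i j))
    (hηm : ∀ i j, Measurable (η i j))
    (hI01 : ∀ i j ω, I i j ω ≤ 1) (hr0 : 0 ≤ r) (hr1 : r ≤ 1)
    (hIr : ∀ i j, μ {ω | I i j ω = 1} = ENNReal.ofReal r)
    (hindep : iIndepFun (eggVars ζ I η) μ)
    (hζid : ∀ i, IdentDistrib (ζ i) (ζ 1) μ μ)
    (hηid : ∀ i j, IdentDistrib (η i j) (η 1 1) μ μ)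
    (hlam : 0 ≤ lam)
    (hζpois : ∀ k : ℕ, μ {ω | ζ 1 ω = k} =
      ENNReal.ofReal (Real.exp (-lam) * lam ^ k / (Nat.factorial k))) :
    ∀ i k, μ {ω | bX 𝒮 ζ I η i ω = k}
      = ENNReal.ofReal (pois (lam * r * (1 - lifeCDF μ η ((𝒮 i : ℤ) - 2))) k) := by
  intro i k
  have hfm := meas_eggVars hζm hIm hηm
  set q : ℝ := 1 - lifeCDF μ η ((𝒮 i : ℤ) - 2) with hq
  have hq0 : 0 ≤ q := by
    have := lifeCDF_le_one (μ := μ) (η := η) ((𝒮 i : ℤ) - 2); linarith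
  have hq1 : q ≤ 1 := by
    have := lifeCDF_nonneg (μ := μ) (η := η) ((𝒮 i : ℤ) - 2); linarith
  -- the C family is iid Bernoulli(q)
  have hCm : ∀ j, Measurable (bC 𝒮 η i j) := by
    intro j
    exact Measurable.comp (f := η i j)
      (g := fun t => if 𝒮 i ≤ t + 1 then 1 else 0)
      (measurable_to_countable' (fun n => MeasurableSpace.measurableSet_top)) (hηm i j)
  have hCind : iIndepFun (bC 𝒮 η i) μ := by
    have h := iIndepFun_reindex (f := eggVars ζ I η)
      (fun j => Sum.inr (Sum.inr (i, j))) (fun a b hab => by simpa using hab) hindep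
    have h2 := iIndepFun.comp h (fun j => fun t => if 𝒮 i ≤ t + 1 then 1 else 0)
      (fun j => measurable_to_countable' (fun n => MeasurableSpace.measurableSet_top))
    exact h2
  have hBin := bernoulli_sum_pmf (μ := μ) hCm hCind (fun j ω => bC_le_one i j ω) hq0 hq1
    (fun j => bC_one hηm hηid i j)
  -- independence of ξ_i from the C's
  have hdisj : Disjoint
      ({k | k = Sum.inl i ∨ ∃ j, k = Sum.inr (Sum.inl (i, j))} : Set (ℕ ⊕ (ℕ × ℕ) ⊕ (ℕ × ℕ)))
      {k | ∃ j, k = Sum.inr (Sum.inr (i, j))} := by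
    rw [Set.disjoint_left]
    rintro k hk1 ⟨j, rfl⟩
    rcases hk1 with h | ⟨j', h⟩ <;> simp at h
  have hfacI := indep_groups hfm hindep hdisj
  have hmXi : Measurable[⨆ k ∈ ({k | k = Sum.inl i ∨ ∃ j, k = Sum.inr (Sum.inl (i, j))} :
      Set (ℕ ⊕ (ℕ × ℕ) ⊕ (ℕ × ℕ))), MeasurableSpace.comap (eggVars ζ I η k) inferInstance]
      (batchXi ζ I i) := by
    apply measurable_sum_Icc_rand
    · exact measurable_grp (f := eggVars ζ I η) (k := Sum.inl i)
        (S := {k | k = Sum.inl i ∨ ∃ j, k = Sum.inr (Sum.inl (i, j))}) (Or.inl rfl)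
    · intro j
      exact measurable_grp (f := eggVars ζ I η) (k := Sum.inr (Sum.inl (i, j)))
        (S := {k | k = Sum.inl i ∨ ∃ j, k = Sum.inr (Sum.inl (i, j))}) (Or.inr ⟨j, rfl⟩)
  have hfac : ∀ a m' : ℕ,
      μ ({ω | batchXi ζ I i ω = a} ∩ {ω | ∑ j ∈ Finset.Icc 1 a, bC 𝒮 η i j ω = m'})
      = μ {ω | batchXi ζ I i ω = a} * μ {ω | ∑ j ∈ Finset.Icc 1 a, bC 𝒮 η i j ω = m'} := by
    intro a m'
    refine (Indep_iff _ _ μ).1 hfacI _ _ ?_ ?_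
    · exact hmXi (measurableSet_singleton a)
    · refine (Finset.measurable_sum (Finset.Icc 1 a) fun j _ => ?_)
        (measurableSet_singleton m')
      refine Measurable.comp (g := fun t => if 𝒮 i ≤ t + 1 then 1 else 0)
        (measurable_to_countable' (fun n => MeasurableSpace.measurableSet_top)) ?_
      exact measurable_grp (f := eggVars ζ I η) (k := Sum.inr (Sum.inr (i, j)))
        (S := {k | ∃ j, k = Sum.inr (Sum.inr (i, j))}) ⟨j, rfl⟩
  have hXi := xi_pmf hζm hIm hηm hI01 hr0 hr1 hIr hindep hζid hlam hζpois
  have hmeasXi : ∀ a : ℕ, MeasurableSet {ω | batchXi ζ I i ω = a} := by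
    intro a
    have : Measurable (batchXi ζ I i) :=
      measurable_sum_Icc_rand (hζm i) (fun j => hIm i j)
    exact this (measurableSet_singleton a)
  have h := thinning_pmf (μ := μ) (N := batchXi ζ I i) (B := bC 𝒮 η i)
    (fun a m' => (Finset.measurable_sum (Finset.Icc 1 a) fun j _ => hCm j)
      (measurableSet_singleton m'))
    hmeasXi hfac (mul_nonneg hlam hr0) hq0 hq1 (hXi i) hBin k
  exact h

lemma measurable_bX_grp {m' : MeasurableSpace Ω} (i : ℕ)
    (hζ : Measurable[m'] (ζ i)) (hI : ∀ j, Measurable[m'] (I i j))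
    (hη : ∀ j, Measurable[m'] (η i j)) : Measurable[m'] (bX 𝒮 ζ I η i) := by
  have hC : ∀ j, Measurable[m'] (bC 𝒮 η i j) := by
    intro j
    exact Measurable.comp (g := fun t => if 𝒮 i ≤ t + 1 then 1 else 0)
      (measurable_to_countable' (fun n => MeasurableSpace.measurableSet_top)) (hη j)
  have h := measurable_sum_Icc_rand (m' := m') (N := batchXi ζ I i) (f := bC 𝒮 η i)
    (measurable_sum_Icc_rand hζ hI) hC
  exact h

lemma measurable_bX (hζm : ∀ i, Measurable (ζ i)) (hIm : ∀ i j, Measurable (I i j))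
    (hηm : ∀ i j, Measurable (η i j)) (i : ℕ) : Measurable (bX 𝒮 ζ I η i) :=
  measurable_bX_grp i (hζm i) (hIm i) (hηm i)

lemma measurable_bM (hζm : ∀ i, Measurable (ζ i)) (hIm : ∀ i j, Measurable (I i j))
    (hηm : ∀ i j, Measurable (η i j)) (n : ℕ) : Measurable (bM 𝒮 ζ I η n) :=
  Finset.measurable_sum (Finset.range n) fun i _ => measurable_bX hζm hIm hηm (i + 1)

lemma bM_pmf (hζm : ∀ i, Measurable (ζ i)) (hIm : ∀ i j, Measurable (I i j))
    (hηm : ∀ i j, Measurable (η i j))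
    (hI01 : ∀ i j ω, I i j ω ≤ 1) (hr0 : 0 ≤ r) (hr1 : r ≤ 1)
    (hIr : ∀ i j, μ {ω | I i j ω = 1} = ENNReal.ofReal r)
    (hindep : iIndepFun (eggVars ζ I η) μ)
    (hζid : ∀ i, IdentDistrib (ζ i) (ζ 1) μ μ)
    (hηid : ∀ i j, IdentDistrib (η i j) (η 1 1) μ μ)
    (hlam : 0 ≤ lam)
    (hζpois : ∀ k : ℕ, μ {ω | ζ 1 ω = k} =
      ENNReal.ofReal (Real.exp (-lam) * lam ^ k / (Nat.factorial k))) :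
    ∀ n k, μ {ω | bM 𝒮 ζ I η n ω = k}
      = ENNReal.ofReal (pois
          (∑ i ∈ Finset.range n, lam * r * (1 - lifeCDF μ η ((𝒮 (i + 1) : ℤ) - 2))) k) := by
  have hfm := meas_eggVars hζm hIm hηm
  have hq0 : ∀ i : ℕ, 0 ≤ 1 - lifeCDF μ η ((𝒮 i : ℤ) - 2) := by
    intro i
    have := lifeCDF_le_one (μ := μ) (η := η) ((𝒮 i : ℤ) - 2); linarith
  have hc0 : ∀ i : ℕ, 0 ≤ lam * r * (1 - lifeCDF μ η ((𝒮 i : ℤ) - 2)) :=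
    fun i => mul_nonneg (mul_nonneg hlam hr0) (hq0 i)
  intro n
  induction n with
  | zero =>
    intro k
    rcases Nat.eq_zero_or_pos k with rfl | hk
    · have he : {ω : Ω | bM 𝒮 ζ I η 0 ω = 0} = Set.univ := by
        ext ω; simp [bM]
      rw [he, measure_univ]
      simp [pois]
    · have he : {ω : Ω | bM 𝒮 ζ I η 0 ω = k} = ∅ := by
        ext ω; simp [bM]; omega
      rw [he, measure_empty]
      rw [Finset.range_zero, Finset.sum_empty]
      obtain ⟨k', rfl⟩ : ∃ m, k = m + 1 := ⟨k - 1, by omega⟩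
      simp [pois]
  | succ n ih =>
    -- independence of the first n batches from batch n+1
    have hdisj : Disjoint (bIdx ⁻¹' (Set.Icc 1 n)) (bIdx ⁻¹' {n + 1}) := by
      rw [Set.disjoint_left]
      intro k hk1 hk2
      simp only [Set.mem_preimage, Set.mem_Icc, Set.mem_singleton_iff] at hk1 hk2
      omega
    have hfacI := indep_groups hfm hindep hdisj
    have hmS : Measurable[⨆ k ∈ (bIdx ⁻¹' (Set.Icc 1 n)),
        MeasurableSpace.comap (eggVars ζ I η k) inferInstance] (bM 𝒮 ζ I η n) := by
      apply Finset.measurable_sum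
      intro i hi
      have hin : (1:ℕ) ≤ i + 1 ∧ i + 1 ≤ n := by
        simp only [Finset.mem_range] at hi; omega
      apply measurable_bX_grp
      · exact measurable_grp (f := eggVars ζ I η) (k := Sum.inl (i+1))
          (S := bIdx ⁻¹' (Set.Icc 1 n)) (by simp [bIdx, hin.1, hin.2])
      · intro j
        exact measurable_grp (f := eggVars ζ I η) (k := Sum.inr (Sum.inl (i+1, j)))
          (S := bIdx ⁻¹' (Set.Icc 1 n)) (by simp [bIdx, hin.1, hin.2])
      · intro j
        exact measurable_grp (f := eggVars ζ I η) (k := Sum.inr (Sum.inr (i+1, j)))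
          (S := bIdx ⁻¹' (Set.Icc 1 n)) (by simp [bIdx, hin.1, hin.2])
    have hmT : Measurable[⨆ k ∈ (bIdx ⁻¹' ({n + 1} : Set ℕ)),
        MeasurableSpace.comap (eggVars ζ I η k) inferInstance] (bX 𝒮 ζ I η (n + 1)) := by
      apply measurable_bX_grp
      · exact measurable_grp (f := eggVars ζ I η) (k := Sum.inl (n+1))
          (S := bIdx ⁻¹' {n + 1}) (by simp [bIdx])
      · intro j
        exact measurable_grp (f := eggVars ζ I η) (k := Sum.inr (Sum.inl (n+1, j)))
          (S := bIdx ⁻¹' {n + 1}) (by simp [bIdx])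
      · intro j
        exact measurable_grp (f := eggVars ζ I η) (k := Sum.inr (Sum.inr (n+1, j)))
          (S := bIdx ⁻¹' {n + 1}) (by simp [bIdx])
    have hfac : ∀ a b : ℕ,
        μ ({ω | bM 𝒮 ζ I η n ω = a} ∩ {ω | bX 𝒮 ζ I η (n+1) ω = b})
        = μ {ω | bM 𝒮 ζ I η n ω = a} * μ {ω | bX 𝒮 ζ I η (n+1) ω = b} := by
      intro a b
      exact (Indep_iff _ _ μ).1 hfacI _ _ (hmS (measurableSet_singleton a))
        (hmT (measurableSet_singleton b))
    have hXb := xb_pmf (𝒮 := 𝒮) hζm hIm hηm hI01 hr0 hr1 hIr hindep hζid hηid hlam hζpois (n+1)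
    have h := pois_add_pmf (μ := μ) (X := bM 𝒮 ζ I η n) (Y := bX 𝒮 ζ I η (n+1))
      (fun a => measurable_bM hζm hIm hηm n (measurableSet_singleton a))
      (fun b => measurable_bX hζm hIm hηm (n+1) (measurableSet_singleton b))
      hfac (Finset.sum_nonneg fun i _ => hc0 (i+1)) (hc0 (n+1)) ih hXb
    intro k
    have he : {ω | bM 𝒮 ζ I η (n+1) ω = k}
        = {ω | bM 𝒮 ζ I η n ω + bX 𝒮 ζ I η (n+1) ω = k} := by
      ext ω
      simp only [Set.mem_setOf_eq, bM, Finset.sum_range_succ]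
    rw [he, h k, Finset.sum_range_succ]

lemma S_ge (hSpos : ∀ i, 1 ≤ i → 1 ≤ 𝒮 i)
    (hSmono : ∀ i j, 1 ≤ i → i < j → 𝒮 i < 𝒮 j) : ∀ i, 1 ≤ i → i ≤ 𝒮 i := by
  intro i
  induction i with
  | zero => omega
  | succ n ih =>
    intro _
    rcases Nat.eq_zero_or_pos n with rfl | hn
    · exact hSpos 1 le_rfl
    · have h1 := ih hn
      have h2 := hSmono n (n + 1) hn (by omega)
      omega

lemma q_as_meas (hηm : ∀ i j, Measurable (η i j)) (x : ℤ) :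
    ENNReal.ofReal (1 - lifeCDF μ η x) = μ {ω | ¬ ((η 1 1 ω : ℤ) ≤ x)} := by
  have hmeasA : MeasurableSet {ω | (η 1 1 ω : ℤ) ≤ x} :=
    (hηm 1 1) (show MeasurableSet {t : ℕ | (t : ℤ) ≤ x} from MeasurableSpace.measurableSet_top)
  have hc : {ω | ¬ ((η 1 1 ω : ℤ) ≤ x)} = {ω | (η 1 1 ω : ℤ) ≤ x}ᶜ := rfl
  rw [hc, measure_compl hmeasA (measure_ne_top μ _), measure_univ]
  unfold lifeCDF
  rw [ENNReal.ofReal_sub _ ENNReal.toReal_nonneg, ENNReal.ofReal_one,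
    ENNReal.ofReal_toReal (measure_ne_top μ _)]

set_option maxHeartbeats 1000000 in
lemma q_summable (hSpos : ∀ i, 1 ≤ i → 1 ≤ 𝒮 i)
    (hSmono : ∀ i j, 1 ≤ i → i < j → 𝒮 i < 𝒮 j)
    (hηm : ∀ i j, Measurable (η i j))
    (hηsq : Integrable (fun ω => (η 1 1 ω : ℝ) ^ 2) μ) :
    Summable (fun i : ℕ => 1 - lifeCDF μ η ((𝒮 (i + 1) : ℤ) - 2)) := by
  set E : ℝ := ∫ ω, (η 1 1 ω : ℝ) ^ 2 ∂μ with hE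
  have hq0 : ∀ i : ℕ, 0 ≤ 1 - lifeCDF μ η ((𝒮 i : ℤ) - 2) := by
    intro i; have := lifeCDF_le_one μ η ((𝒮 i : ℤ) - 2); linarith
  have hbound : ∀ i : ℕ, 1 ≤ i →
      1 - lifeCDF μ η ((𝒮 (i + 1) : ℤ) - 2) ≤ E * (1 / (i : ℝ) ^ 2) := by
    intro i hi
    have hSi : i + 1 ≤ 𝒮 (i + 1) := S_ge hSpos hSmono (i + 1) (by omega)
    -- subset of the Markov event
    have hsub : {ω | ¬ ((η 1 1 ω : ℤ) ≤ (𝒮 (i + 1) : ℤ) - 2)}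
        ⊆ {ω | ((i : ℝ)) ^ 2 ≤ (η 1 1 ω : ℝ) ^ 2} := by
      intro ω hω
      simp only [Set.mem_setOf_eq, not_le] at hω ⊢
      have hnat : (i : ℤ) ≤ (η 1 1 ω : ℤ) := by omega
      have : (i : ℝ) ≤ (η 1 1 ω : ℝ) := by exact_mod_cast hnat
      have hi0 : (0:ℝ) ≤ (i : ℝ) := by positivity
      nlinarith
    have hmarkov := mul_meas_ge_le_integral_of_nonneg
      (μ := μ) (f := fun ω => (η 1 1 ω : ℝ) ^ 2)
      (Filter.Eventually.of_forall (fun ω => by positivity)) hηsq (((i : ℝ)) ^ 2)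
    have hmono : μ {ω | ¬ ((η 1 1 ω : ℤ) ≤ (𝒮 (i + 1) : ℤ) - 2)}
        ≤ μ {ω | ((i : ℝ)) ^ 2 ≤ (η 1 1 ω : ℝ) ^ 2} := measure_mono hsub
    have hq : 1 - lifeCDF μ η ((𝒮 (i + 1) : ℤ) - 2)
        ≤ (μ {ω | ((i : ℝ)) ^ 2 ≤ (η 1 1 ω : ℝ) ^ 2}).toReal := by
      have h1 : ENNReal.ofReal (1 - lifeCDF μ η ((𝒮 (i + 1) : ℤ) - 2))
          ≤ μ {ω | ((i : ℝ)) ^ 2 ≤ (η 1 1 ω : ℝ) ^ 2} := by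
        rw [q_as_meas hηm]; exact hmono
      have h2 := ENNReal.toReal_mono (measure_ne_top μ _) h1
      rwa [ENNReal.toReal_ofReal (hq0 (i + 1))] at h2
    have hipos : (0:ℝ) < (i : ℝ) ^ 2 := by
      have : (1:ℝ) ≤ (i : ℝ) := by exact_mod_cast hi
      positivity
    calc 1 - lifeCDF μ η ((𝒮 (i + 1) : ℤ) - 2)
        ≤ (μ {ω | ((i : ℝ)) ^ 2 ≤ (η 1 1 ω : ℝ) ^ 2}).toReal := hq
      _ ≤ E / (i : ℝ) ^ 2 := by
          rw [le_div_iff₀ hipos]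
          calc (μ {ω | ((i : ℝ)) ^ 2 ≤ (η 1 1 ω : ℝ) ^ 2}).toReal * (i : ℝ) ^ 2
              = (i : ℝ) ^ 2 * (μ {ω | ((i : ℝ)) ^ 2 ≤ (η 1 1 ω : ℝ) ^ 2}).toReal := by ring
            _ ≤ E := hmarkov
      _ = E * (1 / (i : ℝ) ^ 2) := by ring
  -- shift once and compare
  have hsum2 : Summable (fun i : ℕ => E * (1 / ((i + 1 : ℕ) : ℝ) ^ 2)) := by
    apply Summable.mul_left
    exact ((summable_nat_add_iff 1).2 (Real.summable_one_div_nat_pow.2 one_lt_two))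
  have htail : Summable (fun i : ℕ => 1 - lifeCDF μ η ((𝒮 (i + 1 + 1) : ℤ) - 2)) := by
    refine Summable.of_nonneg_of_le (fun i => hq0 (i + 1 + 1)) (fun i => ?_) hsum2
    exact hbound (i + 1) (by omega)
  exact (summable_nat_add_iff 1).1 htail

lemma cdf_from_pmf {X : Ω → ℕ} (hmX : ∀ a : ℕ, MeasurableSet {ω | X ω = a}) {g : ℕ → ℝ}
    (hX : ∀ a, μ {ω | X ω = a} = ENNReal.ofReal (g a)) (k : ℕ) :
    μ {ω | X ω ≤ k} = ∑ j ∈ Finset.range (k + 1), ENNReal.ofReal (g j) := by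
  have he : {ω | X ω ≤ k} = ⋃ j ∈ Finset.range (k + 1), {ω | X ω = j} := by
    ext ω
    simp only [Set.mem_setOf_eq, Set.mem_iUnion, Finset.mem_range]
    constructor
    · intro h; exact ⟨X ω, by omega, rfl⟩
    · rintro ⟨j, hj, rfl⟩; omega
  have hdisj : Set.PairwiseDisjoint (Finset.range (k + 1) : Set ℕ) (fun j => {ω | X ω = j}) := by
    intro a _ b _ hab
    rw [Function.onFun, Set.disjoint_iff]
    rintro ω ⟨ha, hb⟩
    simp only [Set.mem_setOf_eq] at ha hb
    exact hab (ha.symm.trans hb)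
  rw [he, measure_biUnion_finset hdisj (fun j _ => hmX j)]
  exact Finset.sum_congr rfl fun j _ => hX j

end Main
end BeeAux

/-- When the renewal times are deterministic constants `𝒮 1 < 𝒮 2 < ⋯`
and the batch sizes are Poisson with mean `λ`, the stationary colony size `𝓜` is Poisson
with mean `r λ Σ_{i=1}^∞ (1 − F_η(𝒮 i − 2))`. -/
theorem statM_poisson_deterministic
    {Ω : Type*} [MeasurableSpace Ω] (μ : Measure Ω) [IsProbabilityMeasure μ]
    (𝒮 : ℕ → ℕ) (ζ : ℕ → Ω → ℕ) (I η : ℕ → ℕ → Ω → ℕ) (r : ℝ)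
    -- the deterministic renewal times `𝒮 1 < 𝒮 2 < ⋯` are positive integers
    (hSpos : ∀ i, 1 ≤ i → 1 ≤ 𝒮 i) (hSmono : ∀ i j, 1 ≤ i → i < j → 𝒮 i < 𝒮 j)
    -- measurability
    (hζm : ∀ i, Measurable (ζ i)) (hIm : ∀ i j, Measurable (I i j))
    (hηm : ∀ i j, Measurable (η i j))
    -- the I's are indicators with hatching probability r
    (hI01 : ∀ i j ω, I i j ω ≤ 1) (hr0 : 0 ≤ r) (hr1 : r ≤ 1)
    (hIr : ∀ i j, μ {ω | I i j ω = 1} = ENNReal.ofReal r)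
    -- mutual independence of the three families
    (hindep : iIndepFun (eggVars ζ I η) μ)
    -- identical distributions within each family
    (hζid : ∀ i, IdentDistrib (ζ i) (ζ 1) μ μ)
    (hηid : ∀ i j, IdentDistrib (η i j) (η 1 1) μ μ)
    -- moment conditions: E ζ₁ and E η₁₁² finite
    (hζint : Integrable (fun ω => (ζ 1 ω : ℝ)) μ)
    (hηsq : Integrable (fun ω => (η 1 1 ω : ℝ) ^ 2) μ)
    (lam : ℝ) (hlam : 0 ≤ lam)
    -- ζ₁ is Poisson distributed with mean lam
    (hζpois : ∀ k : ℕ, μ {ω | ζ 1 ω = k} =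
      ENNReal.ofReal (Real.exp (-lam) * lam ^ k / (Nat.factorial k))) :
    ∀ k : ℕ, μ {ω | statMdet 𝒮 ζ I η ω = k} =
      ENNReal.ofReal
        (Real.exp (-(r * lam * ∑' i : ℕ, (1 - lifeCDF μ η ((𝒮 (i + 1) : ℤ) - 2))))
          * (r * lam * ∑' i : ℕ, (1 - lifeCDF μ η ((𝒮 (i + 1) : ℤ) - 2))) ^ k
          / (Nat.factorial k)) := by
  classical
  open BeeAux in
  intro k
  -- abbreviations
  have hq0 : ∀ i : ℕ, 0 ≤ 1 - lifeCDF μ η ((𝒮 i : ℤ) - 2) := by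
    intro i; have := BeeAux.lifeCDF_le_one μ η ((𝒮 i : ℤ) - 2); linarith
  have hqsum : Summable (fun i : ℕ => 1 - lifeCDF μ η ((𝒮 (i + 1) : ℤ) - 2)) :=
    BeeAux.q_summable hSpos hSmono hηm hηsq
  have hcsum : Summable (fun i : ℕ => lam * r * (1 - lifeCDF μ η ((𝒮 (i + 1) : ℤ) - 2))) :=
    hqsum.mul_left (lam * r)
  set L : ℝ := ∑' i : ℕ, lam * r * (1 - lifeCDF μ η ((𝒮 (i + 1) : ℤ) - 2)) with hLdef
  have hc0 : ∀ i : ℕ, 0 ≤ lam * r * (1 - lifeCDF μ η ((𝒮 i : ℤ) - 2)) :=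
    fun i => mul_nonneg (mul_nonneg hlam hr0) (hq0 i)
  have hL0 : 0 ≤ L := tsum_nonneg (fun i => hc0 (i + 1))
  have hΛtend : Filter.Tendsto
      (fun n => ∑ i ∈ Finset.range n, lam * r * (1 - lifeCDF μ η ((𝒮 (i + 1) : ℤ) - 2)))
      Filter.atTop (nhds L) := hcsum.hasSum.tendsto_sum_nat
  have hMpmf := BeeAux.bM_pmf (μ := μ) (𝒮 := 𝒮) hζm hIm hηm hI01 hr0 hr1 hIr hindep hζid
    hηid hlam hζpois
  have hXpmf := BeeAux.xb_pmf (μ := μ) (𝒮 := 𝒮) hζm hIm hηm hI01 hr0 hr1 hIr hindep hζid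
    hηid hlam hζpois
  have hMcdf : ∀ n k' : ℕ, μ {ω | BeeAux.bM 𝒮 ζ I η n ω ≤ k'}
      = ∑ j ∈ Finset.range (k' + 1), ENNReal.ofReal (BeeAux.pois
          (∑ i ∈ Finset.range n, lam * r * (1 - lifeCDF μ η ((𝒮 (i + 1) : ℤ) - 2))) j) :=
    fun n k' => BeeAux.cdf_from_pmf
      (fun a => BeeAux.measurable_bM hζm hIm hηm n (measurableSet_singleton a)) (hMpmf n) k'
  -- Borel–Cantelli: almost surely only finitely many batches contribute
  have hXne : ∀ i : ℕ, μ {ω | ¬ (BeeAux.bX 𝒮 ζ I η (i + 1) ω = 0)}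
      ≤ ENNReal.ofReal (lam * r * (1 - lifeCDF μ η ((𝒮 (i + 1) : ℤ) - 2))) := by
    intro i
    have h0 := hXpmf (i + 1) 0
    have hset : {ω | ¬ (BeeAux.bX 𝒮 ζ I η (i + 1) ω = 0)}
        = {ω | BeeAux.bX 𝒮 ζ I η (i + 1) ω = 0}ᶜ := rfl
    rw [hset, measure_compl
      (show MeasurableSet {ω | BeeAux.bX 𝒮 ζ I η (i + 1) ω = 0} from
        BeeAux.measurable_bX hζm hIm hηm (i + 1) (measurableSet_singleton 0))
      (measure_ne_top μ _), measure_univ, h0, BeeAux.pois_zero]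
    rw [show (1 : ENNReal) = ENNReal.ofReal 1 by simp,
      ← ENNReal.ofReal_sub _ (Real.exp_pos _).le]
    apply ENNReal.ofReal_le_ofReal
    have := Real.add_one_le_exp (-(lam * r * (1 - lifeCDF μ η ((𝒮 (i + 1) : ℤ) - 2))))
    linarith
  have hsumE : (∑' i : ℕ, μ {ω | ¬ (BeeAux.bX 𝒮 ζ I η (i + 1) ω = 0)}) ≠ ⊤ := by
    have h1 := ENNReal.tsum_le_tsum hXne
    have h2 : ∑' i : ℕ, ENNReal.ofReal (lam * r * (1 - lifeCDF μ η ((𝒮 (i + 1) : ℤ) - 2)))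
        = ENNReal.ofReal L := (ENNReal.ofReal_tsum_of_nonneg (fun i => hc0 (i + 1)) hcsum).symm
    exact (lt_of_le_of_lt (le_trans h1 h2.le) ENNReal.ofReal_lt_top).ne
  have hBC : μ {ω | ∃ᶠ i in Filter.atTop, ¬ (BeeAux.bX 𝒮 ζ I η (i + 1) ω = 0)} = 0 :=
    measure_setOf_frequently_eq_zero hsumE
  set G : Set Ω := {ω | ∃ n : ℕ, ∀ i, n ≤ i → BeeAux.bX 𝒮 ζ I η (i + 1) ω = 0} with hGdef
  have hGc : μ Gᶜ = 0 := by
    have he : Gᶜ = {ω | ∃ᶠ i in Filter.atTop, ¬ (BeeAux.bX 𝒮 ζ I η (i + 1) ω = 0)} := by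
      ext ω
      simp only [hGdef, Set.mem_compl_iff, Set.mem_setOf_eq, Filter.frequently_atTop]
      push_neg
      constructor
      · intro h n
        obtain ⟨i, hi, hne⟩ := h n
        exact ⟨i, hi, hne⟩
      · intro h n
        obtain ⟨i, hi, hne⟩ := h n
        exact ⟨i, hi, hne⟩
    rw [he]; exact hBC
  have hGm : MeasurableSet G := by
    have he : G = ⋃ n : ℕ, ⋂ i : ℕ, ⋂ _ : n ≤ i, {ω | BeeAux.bX 𝒮 ζ I η (i + 1) ω = 0} := by
      ext ω
      simp [hGdef]
    rw [he]
    exact MeasurableSet.iUnion fun n => MeasurableSet.iInter fun i => MeasurableSet.iInter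
      fun _ => BeeAux.measurable_bX hζm hIm hηm (i + 1) (measurableSet_singleton 0)
  have hIcap : ∀ A : Set Ω, μ (A ∩ G) = μ A := fun A => measure_inter_conull hGc
  -- on G the total count equals an eventual partial sum
  have key1 : ∀ ω ∈ G, ∃ n₀ : ℕ, statMdet 𝒮 ζ I η ω = BeeAux.bM 𝒮 ζ I η n₀ ω
      ∧ ∀ m, BeeAux.bM 𝒮 ζ I η m ω ≤ BeeAux.bM 𝒮 ζ I η n₀ ω := by
    rintro ω ⟨n₀, hn₀⟩
    refine ⟨n₀, ?_, ?_⟩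
    · have h1 : statMdet 𝒮 ζ I η ω = ∑' i : ℕ, BeeAux.bX 𝒮 ζ I η (i + 1) ω := rfl
      rw [h1, tsum_eq_sum (s := Finset.range n₀)
        (fun i hi => hn₀ i (by simp only [Finset.mem_range] at hi; omega))]
      rfl
    · intro m
      rcases le_or_gt m n₀ with h | h
      · exact Finset.sum_le_sum_of_subset (Finset.range_subset_range.2 h)
      · have he : BeeAux.bM 𝒮 ζ I η m ω = BeeAux.bM 𝒮 ζ I η n₀ ω := by
          have hsplit : (∑ i ∈ Finset.range n₀, BeeAux.bX 𝒮 ζ I η (i + 1) ω)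
              + (∑ i ∈ Finset.Ico n₀ m, BeeAux.bX 𝒮 ζ I η (i + 1) ω)
              = ∑ i ∈ Finset.range m, BeeAux.bX 𝒮 ζ I η (i + 1) ω :=
            Finset.sum_range_add_sum_Ico _ (le_of_lt h)
          have hz : ∑ i ∈ Finset.Ico n₀ m, BeeAux.bX 𝒮 ζ I η (i + 1) ω = 0 :=
            Finset.sum_eq_zero fun i hi => hn₀ i (Finset.mem_Ico.1 hi).1
          unfold BeeAux.bM
          omega
        rw [he]
  have key2 : ∀ k' : ℕ, {ω | statMdet 𝒮 ζ I η ω ≤ k'} ∩ G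
      = (⋂ m : ℕ, {ω | BeeAux.bM 𝒮 ζ I η m ω ≤ k'}) ∩ G := by
    intro k'
    ext ω
    simp only [Set.mem_inter_iff, Set.mem_setOf_eq, Set.mem_iInter]
    constructor
    · rintro ⟨h, hG⟩
      refine ⟨fun m => ?_, hG⟩
      obtain ⟨n₀, he, hmax⟩ := key1 ω hG
      exact le_trans (hmax m) (he ▸ h)
    · rintro ⟨h, hG⟩
      obtain ⟨n₀, he, hmax⟩ := key1 ω hG
      rw [he]
      exact ⟨h n₀, hG⟩
  have hAm : ∀ k' : ℕ, MeasurableSet (⋂ m : ℕ, {ω | BeeAux.bM 𝒮 ζ I η m ω ≤ k'}) := by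
    intro k'
    exact MeasurableSet.iInter fun m =>
      BeeAux.measurable_bM hζm hIm hηm m measurableSet_Iic
  have hanti : ∀ k' : ℕ, Antitone (fun m => {ω | BeeAux.bM 𝒮 ζ I η m ω ≤ k'}) := by
    intro k' m n hmn
    intro ω hω
    simp only [Set.mem_setOf_eq] at hω ⊢
    exact le_trans (Finset.sum_le_sum_of_subset (Finset.range_subset_range.2 hmn)) hω
  have hlimit : ∀ k' : ℕ, μ (⋂ m : ℕ, {ω | BeeAux.bM 𝒮 ζ I η m ω ≤ k'})
      = ∑ j ∈ Finset.range (k' + 1), ENNReal.ofReal (BeeAux.pois L j) := by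
    intro k'
    have h1 := tendsto_measure_iInter_atTop (μ := μ)
      (s := fun m => {ω | BeeAux.bM 𝒮 ζ I η m ω ≤ k'})
      (fun m => (BeeAux.measurable_bM hζm hIm hηm m measurableSet_Iic).nullMeasurableSet)
      (hanti k') ⟨0, measure_ne_top μ _⟩
    have h2 : Filter.Tendsto (fun m => μ {ω | BeeAux.bM 𝒮 ζ I η m ω ≤ k'}) Filter.atTop
        (nhds (∑ j ∈ Finset.range (k' + 1), ENNReal.ofReal (BeeAux.pois L j))) := by
      have he : (fun m => μ {ω | BeeAux.bM 𝒮 ζ I η m ω ≤ k'})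
          = fun m => ∑ j ∈ Finset.range (k' + 1), ENNReal.ofReal (BeeAux.pois
              (∑ i ∈ Finset.range m, lam * r * (1 - lifeCDF μ η ((𝒮 (i + 1) : ℤ) - 2))) j) := by
        funext m; exact hMcdf m k'
      rw [he]
      apply tendsto_finset_sum
      intro j _
      exact (ENNReal.continuous_ofReal.tendsto _).comp
        (((BeeAux.continuous_pois j).tendsto L).comp hΛtend)
    exact tendsto_nhds_unique (h1 : _) h2
  have hcdfM : ∀ k' : ℕ, μ {ω | statMdet 𝒮 ζ I η ω ≤ k'}
      = ∑ j ∈ Finset.range (k' + 1), ENNReal.ofReal (BeeAux.pois L j) := by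
    intro k'
    rw [← hIcap {ω | statMdet 𝒮 ζ I η ω ≤ k'}, key2 k', hIcap _, hlimit k']
  -- extract the pmf from the cdf
  have hfinal : μ {ω | statMdet 𝒮 ζ I η ω = k} = ENNReal.ofReal (BeeAux.pois L k) := by
    rcases Nat.eq_zero_or_pos k with rfl | hk
    · have he : {ω | statMdet 𝒮 ζ I η ω = 0} = {ω | statMdet 𝒮 ζ I η ω ≤ 0} := by
        ext ω; simp
      rw [he, hcdfM 0, Finset.range_one, Finset.sum_singleton]
    · obtain ⟨k', rfl⟩ : ∃ m, k = m + 1 := ⟨k - 1, by omega⟩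
      have hsub : (⋂ m : ℕ, {ω | BeeAux.bM 𝒮 ζ I η m ω ≤ k'})
          ⊆ (⋂ m : ℕ, {ω | BeeAux.bM 𝒮 ζ I η m ω ≤ k' + 1}) := by
        apply Set.iInter_mono
        intro m ω hω
        simp only [Set.mem_setOf_eq] at hω ⊢
        omega
      have hEq : {ω | statMdet 𝒮 ζ I η ω = k' + 1} ∩ G
          = ((⋂ m : ℕ, {ω | BeeAux.bM 𝒮 ζ I η m ω ≤ k' + 1}) ∩ G)
            \ ((⋂ m : ℕ, {ω | BeeAux.bM 𝒮 ζ I η m ω ≤ k'}) ∩ G) := by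
        rw [← key2 (k' + 1), ← key2 k']
        ext ω
        simp only [Set.mem_inter_iff, Set.mem_setOf_eq, Set.mem_diff, not_and]
        constructor
        · rintro ⟨h, hG⟩
          exact ⟨⟨by omega, hG⟩, fun h' _ => by omega⟩
        · rintro ⟨⟨h1, hG⟩, h2⟩
          have h3 : ¬ (statMdet 𝒮 ζ I η ω ≤ k') := fun hle => h2 hle hG
          exact ⟨by omega, hG⟩
      have hfin : (∑ j ∈ Finset.range (k' + 1), ENNReal.ofReal (BeeAux.pois L j)) ≠ ⊤ :=
        ENNReal.sum_ne_top.2 fun j _ => ENNReal.ofReal_ne_top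
      calc μ {ω | statMdet 𝒮 ζ I η ω = k' + 1}
          = μ ({ω | statMdet 𝒮 ζ I η ω = k' + 1} ∩ G) := (hIcap _).symm
        _ = μ (((⋂ m : ℕ, {ω | BeeAux.bM 𝒮 ζ I η m ω ≤ k' + 1}) ∩ G)
              \ ((⋂ m : ℕ, {ω | BeeAux.bM 𝒮 ζ I η m ω ≤ k'}) ∩ G)) := by rw [hEq]
        _ = μ ((⋂ m : ℕ, {ω | BeeAux.bM 𝒮 ζ I η m ω ≤ k' + 1}) ∩ G)
              - μ ((⋂ m : ℕ, {ω | BeeAux.bM 𝒮 ζ I η m ω ≤ k'}) ∩ G) :=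
            measure_diff (Set.inter_subset_inter_left G hsub)
              ((hAm k').inter hGm).nullMeasurableSet (measure_ne_top μ _)
        _ = (∑ j ∈ Finset.range (k' + 2), ENNReal.ofReal (BeeAux.pois L j))
              - (∑ j ∈ Finset.range (k' + 1), ENNReal.ofReal (BeeAux.pois L j)) := by
            rw [hIcap, hIcap, hlimit (k' + 1), hlimit k']
        _ = ENNReal.ofReal (BeeAux.pois L (k' + 1)) := by
            rw [Finset.sum_range_succ]
            exact ENNReal.add_sub_cancel_left hfin
  rw [hfinal]
  have hLQ : L = r * lam * (∑' i : ℕ, (1 - lifeCDF μ η ((𝒮 (i + 1) : ℤ) - 2))) := by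
    rw [hLdef, tsum_mul_left]; ring
  rw [hLQ]
  rfl
end
end
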